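/- arXiv:1307.3815 — 15 statements merged into one kernel-verified Lean document; each statement's English description precedes it below -/
import Mathlib

section
/- If a and b are Drazin invertible in a ring R with ab = ba = 0, then a + b is Drazin invertible and (a+b)^D = a^D + b^D. -/
variable {R : Type*} [Ring R]

def IsDrazinInverse (a b : R) : Prop :=
  a * b = b * a ∧ b * a * b = b ∧ ∃ k : ℕ, 0 < k ∧ a ^ k = a ^ (k + 1) * b

def IsDrazinInvertible (a : R) : Prop := ∃ b, IsDrazinInverse a b

private lemma drz_sq_left (a ad : R) (hc : a * ad = ad * a) (h : ad * a * ad = ad) :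
    ad = ad * ad * a := by
  conv_lhs => rw [← h]
  rw [mul_assoc, hc, ← mul_assoc]

private lemma drz_sq_right (a ad : R) (hc : a * ad = ad * a) (h : ad * a * ad = ad) :
    ad = a * (ad * ad) := by
  conv_lhs => rw [← h]
  rw [← hc, mul_assoc]

private lemma sum_pow (a b : R) (h1 : a * b = 0) (h2 : b * a = 0) (n : ℕ) :
    (a + b) ^ (n + 1) = a ^ (n + 1) + b ^ (n + 1) := by
  induction n with
  | zero => simp
  | succ n ih =>
      rw [pow_succ, ih, add_mul, mul_add, mul_add]
      have hab : a ^ (n + 1) * b = 0 := by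
        rw [pow_succ, mul_assoc, h1, mul_zero]
      have hba : b ^ (n + 1) * a = 0 := by
        rw [pow_succ, mul_assoc, h2, mul_zero]
      rw [hab, hba, ← pow_succ, ← pow_succ]
      abel

private lemma pow_stab (a ad : R) (_hc : a * ad = ad * a) (k : ℕ)
    (hk : a ^ k = a ^ (k + 1) * ad) (j : ℕ) :
    a ^ (k + j) = a ^ (k + j + 1) * ad := by
  induction j with
  | zero => simpa using hk
  | succ j ih =>
      show a ^ (k + j + 1) = a ^ (k + j + 1 + 1) * ad
      have : a ^ (k + j + 1) = a * a ^ (k + j) := by rw [pow_succ']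
      rw [this, ih, ← mul_assoc, ← pow_succ']

theorem stmt1 (a b ad bd : R) (ha : IsDrazinInverse a ad) (hb : IsDrazinInverse b bd)
    (h1 : a * b = 0) (h2 : b * a = 0) :
    IsDrazinInverse (a + b) (ad + bd) := by
  obtain ⟨hca, ha2, k, hk, hk2⟩ := ha
  obtain ⟨hcb, hb2, m, hm, hm2⟩ := hb
  have hadl := drz_sq_left a ad hca ha2
  have hadr := drz_sq_right a ad hca ha2
  have hbdl := drz_sq_left b bd hcb hb2
  have hbdr := drz_sq_right b bd hcb hb2
  -- cross vanishing
  have hadb : ad * b = 0 := by rw [hadl, mul_assoc, h1, mul_zero]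
  have hbad : b * ad = 0 := by rw [hadr, ← mul_assoc, h2, zero_mul]
  have hbda : bd * a = 0 := by rw [hbdl, mul_assoc, h2, mul_zero]
  have habd : a * bd = 0 := by rw [hbdr, ← mul_assoc, h1, zero_mul]
  have hadbd : ad * bd = 0 := by rw [hbdr, ← mul_assoc, hadb, zero_mul]
  have hbdad : bd * ad = 0 := by rw [hadr, ← mul_assoc, hbda, zero_mul]
  refine ⟨?_, ?_, k + m, by omega, ?_⟩
  · simp only [mul_add, add_mul, habd, hbad, hadb, hbda, add_zero, zero_add, hca, hcb]
  · have x1 : ad * a * bd = 0 := by rw [mul_assoc, habd, mul_zero]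
    have x2 : bd * b * ad = 0 := by rw [mul_assoc, hbad, mul_zero]
    simp only [mul_add, add_mul, hadb, hbda, zero_mul, x1, x2, ha2, hb2, add_zero, zero_add]
  · obtain ⟨m', rfl⟩ : ∃ m', m = m' + 1 := ⟨m - 1, by omega⟩
    have hsum1 := sum_pow a b h1 h2 (k + m')
    have hsum2 := sum_pow a b h1 h2 (k + m' + 1)
    have hkm : k + (m' + 1) = k + m' + 1 := by ring
    rw [hkm, hsum1, hsum2, add_mul, mul_add, mul_add]
    have h3 : a ^ (k + m' + 1 + 1) * bd = 0 := by
      rw [pow_succ, mul_assoc, habd, mul_zero]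
    have h4 : b ^ (k + m' + 1 + 1) * ad = 0 := by
      rw [pow_succ, mul_assoc, hbad, mul_zero]
    rw [h3, h4, add_zero, zero_add]
    have ha' := pow_stab a ad hca k hk2 (m' + 1)
    have hb' := pow_stab b bd hcb (m' + 1) hm2 k
    have e1 : k + (m' + 1) = k + m' + 1 := by omega
    have e2 : m' + 1 + k = k + m' + 1 := by omega
    rw [e1] at ha'
    rw [e2] at hb'
    rw [← ha', ← hb']
end

section
/- If a and b are Drazin invertible in a ring R and ab = ba, then ab is Drazin invertible with (ab)^D = b^D a^D = a^D b^D. -/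
variable {R : Type*} [Ring R]

/-- aux: ad = ad^(n+1) * a^n -/
lemma drazin_aux_A {a ad : R} (h1 : a * ad = ad * a) (h2 : ad * a * ad = ad) :
    ∀ n : ℕ, ad = ad ^ (n + 1) * a ^ n := by
  intro n
  induction n with
  | zero => simp
  | succ n ih =>
    have h3 : ad ^ (n + 1 + 1) * a ^ (n + 1) = ad * (ad ^ (n + 1) * a ^ n) * a := by
      rw [pow_succ' ad, pow_succ a]
      noncomm_ring
    rw [h3, ← ih, mul_assoc, ← h1, ← mul_assoc, h2]

/-- aux: a^k = a^(k+m) * ad^m given a^k = a^(k+1) * ad -/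
lemma drazin_aux_B {a ad : R} {k : ℕ} (hk : a ^ k = a ^ (k + 1) * ad) :
    ∀ m : ℕ, a ^ k = a ^ (k + m) * ad ^ m := by
  intro m
  induction m with
  | zero => simp
  | succ m ih =>
    have step : a ^ (k + m + 1) * ad = a ^ (k + m) := by
      have h3 : a ^ (k + m + 1) = a ^ m * a ^ (k + 1) := by
        rw [← pow_add]; ring_nf
      rw [h3, mul_assoc, ← hk, ← pow_add]; ring_nf
    calc a ^ k = a ^ (k + m) * ad ^ m := ih
    _ = a ^ (k + m + 1) * ad * ad ^ m := by rw [step]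
    _ = a ^ (k + (m + 1)) * ad ^ (m + 1) := by
        rw [show k + (m + 1) = k + m + 1 from by ring, pow_succ' ad, mul_assoc]

/-- Drazin double commutant: if x commutes with a, x commutes with ad. -/
lemma drazin_commutant {a ad x : R} (h : IsDrazinInverse a ad) (hx : a * x = x * a) :
    ad * x = x * ad := by
  obtain ⟨h1, h2, k, hk0, hk⟩ := h
  have caa : Commute a ad := h1
  have cax : Commute a x := hx
  have hA := drazin_aux_A h1 h2
  have hB := drazin_aux_B hk
  have he : (ad * a) * (ad * a) = ad * a := by
    rw [← mul_assoc, h2]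
  have hepow : ∀ n : ℕ, (ad * a) ^ (n + 1) = ad * a := by
    intro n
    induction n with
    | zero => simp
    | succ n ih => rw [pow_succ, ih, he]
  have had : (ad * a) * a ^ k = a ^ k := by
    rw [mul_assoc, ← pow_succ', (caa.symm.pow_right (k + 1)).eq, ← hk]
  -- key1: ad^(k+1) * a^(2k+1) = a^k
  have key1 : ad ^ (k + 1) * a ^ (2 * k + 1) = a ^ k := by
    have h2k : a ^ (2 * k + 1) = a ^ (k + 1) * a ^ k := by
      rw [← pow_add]; ring_nf
    rw [h2k, ← mul_assoc, ← (caa.symm.mul_pow (k + 1)), hepow, had]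
  -- key2: a^k * ad^(k+1) = ad
  have key2 : a ^ k * ad ^ (k + 1) = ad := by
    rw [(caa.pow_pow k (k + 1)).eq]
    exact (hA k).symm
  have h3 : a ^ k = a ^ (2 * k + 1) * ad ^ (k + 1) := by
    have h4 := hB (k + 1)
    rwa [show k + (k + 1) = 2 * k + 1 from by ring] at h4
  calc ad * x = ad ^ (k + 1) * a ^ k * x := by rw [← hA]
    _ = ad ^ (k + 1) * (a ^ k * x) := by rw [mul_assoc]
    _ = ad ^ (k + 1) * (x * a ^ k) := by rw [(cax.pow_left k).eq]
    _ = ad ^ (k + 1) * (x * (a ^ (2 * k + 1) * ad ^ (k + 1))) := by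
        conv_rhs => rw [← h3]
    _ = ad ^ (k + 1) * (a ^ (2 * k + 1) * x * ad ^ (k + 1)) := by
        rw [← mul_assoc x, ← (cax.pow_left (2 * k + 1)).eq]
    _ = (ad ^ (k + 1) * a ^ (2 * k + 1)) * x * ad ^ (k + 1) := by noncomm_ring
    _ = a ^ k * x * ad ^ (k + 1) := by rw [key1]
    _ = x * (a ^ k * ad ^ (k + 1)) := by rw [(cax.pow_left k).eq, mul_assoc]
    _ = x * ad := by rw [key2]

theorem stmt2 (a b ad bd : R) (ha : IsDrazinInverse a ad) (hb : IsDrazinInverse b bd)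
    (hc : a * b = b * a) :
    IsDrazinInverse (a * b) (bd * ad) ∧ bd * ad = ad * bd := by
  have hadb : ad * b = b * ad := drazin_commutant ha hc
  have hbda : bd * a = a * bd := drazin_commutant hb hc.symm
  have hbdad : bd * ad = ad * bd := drazin_commutant hb hadb.symm
  obtain ⟨ha1, ha2, k, hk0, hk⟩ := ha
  obtain ⟨hb1, hb2, l, hl0, hl⟩ := hb
  have cab : Commute a b := hc
  have caad : Commute a ad := ha1
  have cabd : Commute a bd := hbda.symm
  have cbad : Commute b ad := hadb.symm
  have cbbd : Commute b bd := hb1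
  have cadbd : Commute ad bd := hbdad.symm
  refine ⟨⟨?_, ?_, ?_⟩, hbdad⟩
  · exact ((cabd.mul_right caad).mul_left (cbbd.mul_right cbad)).eq
  · have c1 : Commute (ad * a) (b * bd) :=
      (cbad.symm.mul_right cadbd).mul_left (cab.mul_right cabd)
    calc bd * ad * (a * b) * (bd * ad)
        = bd * ((ad * a) * (b * bd)) * ad := by noncomm_ring
      _ = bd * ((b * bd) * (ad * a)) * ad := by rw [c1.eq]
      _ = (bd * b * bd) * (ad * a * ad) := by noncomm_ring
      _ = bd * ad := by rw [ha2, hb2]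
  · refine ⟨k + l, by omega, ?_⟩
    have han : a ^ (k + l) = a ^ (k + l + 1) * ad := by
      have h3 : a ^ (k + l + 1) = a ^ l * a ^ (k + 1) := by rw [← pow_add]; ring_nf
      rw [h3, mul_assoc, ← hk, ← pow_add]; ring_nf
    have hbn : b ^ (k + l) = b ^ (k + l + 1) * bd := by
      have h3 : b ^ (k + l + 1) = b ^ k * b ^ (l + 1) := by rw [← pow_add]; ring_nf
      rw [h3, mul_assoc, ← hl, ← pow_add]
    calc (a * b) ^ (k + l) = a ^ (k + l) * b ^ (k + l) := cab.mul_pow _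
      _ = (a ^ (k + l + 1) * ad) * (b ^ (k + l + 1) * bd) := by rw [han, hbn]
      _ = a ^ (k + l + 1) * (ad * b ^ (k + l + 1)) * bd := by noncomm_ring
      _ = a ^ (k + l + 1) * (b ^ (k + l + 1) * ad) * bd := by
          rw [(cbad.symm.pow_right (k + l + 1)).eq]
      _ = (a ^ (k + l + 1) * b ^ (k + l + 1)) * (ad * bd) := by noncomm_ring
      _ = (a * b) ^ (k + l + 1) * (bd * ad) := by rw [← cab.mul_pow, hbdad]
end

section
/- For a, b in a ring R, if ab is Drazin invertible then ba is Drazin invertible and (ba)^D = b((ab)^D)^2 a. -/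
variable {R : Type*} [Ring R]

private lemma pow_shift (a b : R) : ∀ n : ℕ, (b * a) ^ (n + 1) = b * (a * b) ^ n * a
  | 0 => by simp
  | n + 1 => by
    rw [pow_succ, pow_shift a b n, pow_succ]
    simp only [mul_assoc]

theorem stmt3 (a b c : R) (h : IsDrazinInverse (a * b) c) :
    IsDrazinInverse (b * a) (b * c ^ 2 * a) := by
  obtain ⟨hcom, hinv, k, hk, hx⟩ := h
  set x := a * b with hxdef
  -- basic facts
  have h1 : x * c = c * x := hcom
  have hcxc : c * x * c = c := hinv
  have hA : x * c ^ 2 = c := by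
    rw [sq, ← mul_assoc, h1, hcxc]
  have hA' : c ^ 2 * x = c := by
    rw [sq, mul_assoc, ← h1, ← mul_assoc, hcxc]
  have hkey : c ^ 2 * x * x * c ^ 2 = c ^ 2 := by
    rw [hA', mul_assoc, hA, ← sq]
  have e : ∀ m : ℕ, x ^ (k + m + 1) * c = x ^ (k + m) := by
    intro m
    induction m with
    | zero => simpa using hx.symm
    | succ m ih =>
      have : k + (m + 1) + 1 = (k + m + 1) + 1 := by ring
      rw [this, pow_succ' x (k + m + 1), mul_assoc, ih, ← pow_succ',
        show (k + m) + 1 = k + (m + 1) from by ring]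
  refine ⟨?_, ?_, k + 2, by omega, ?_⟩
  · -- commutation
    have L : (b * a) * (b * c ^ 2 * a) = b * (x * c ^ 2) * a := by
      simp only [hxdef, mul_assoc]
    have Rr : (b * c ^ 2 * a) * (b * a) = b * (c ^ 2 * x) * a := by
      simp only [hxdef, mul_assoc]
    rw [L, Rr, hA, hA']
  · -- inner inverse
    have : (b * c ^ 2 * a) * (b * a) * (b * c ^ 2 * a)
        = b * (c ^ 2 * x * x * c ^ 2) * a := by
      simp only [hxdef, mul_assoc]
    rw [this, hkey]
  · -- power condition
    rw [show k + 2 = (k + 1) + 1 from rfl, show (k+1) + 1 + 1 = (k + 2) + 1 from rfl,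
      pow_shift a b (k+1), pow_shift a b (k+2)]
    have step : b * x ^ (k + 2) * a * (b * c ^ 2 * a)
        = b * (x ^ (k + 2) * (x * c ^ 2)) * a := by
      simp only [hxdef, mul_assoc]
    rw [step, hA, show k + 2 = k + 1 + 1 from rfl, e 1]
end

section
/- For a, b in a ring R, 1 - ab is Drazin invertible if and only if 1 - ba is Drazin invertible. -/
variable {R : Type*} [Ring R]

private lemma jac_aux (a b α β c : R) (hα : a * b = 1 - α) (hβ : b * a = 1 - β)
    (h1 : α * c = c * α) (h2 : c * α * c = c) (k : ℕ) (hk : 0 < k)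
    (h3 : α ^ k = α ^ (k + 1) * c) : IsDrazinInvertible β := by
  obtain ⟨z, hzd⟩ : ∃ z : R, z = ∑ i ∈ Finset.range k, α ^ i := ⟨_, rfl⟩
  obtain ⟨p, hpd⟩ : ∃ p : R, p = 1 - α * c := ⟨_, rfl⟩
  obtain ⟨u, hud⟩ : ∃ u : R, u = 1 + α * z := ⟨_, rfl⟩
  obtain ⟨w, hwd⟩ : ∃ w : R, w = c - p * z := ⟨_, rfl⟩
  obtain ⟨q, hqd⟩ : ∃ q : R, q = p * u := ⟨_, rfl⟩
  have hβ' : β = 1 - b * a := by rw [hβ]; noncomm_ring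
  -- commutation facts
  have cαc : Commute α c := h1
  have cαz : Commute α z := by
    rw [hzd]; exact Commute.sum_right _ _ _ fun i _ => (Commute.refl α).pow_right i
  have ccz : Commute c z := by
    rw [hzd]; exact Commute.sum_right _ _ _ fun i _ => cαc.symm.pow_right i
  have cαp : Commute α p := by
    rw [hpd]; exact (Commute.one_right α).sub_right ((Commute.refl α).mul_right cαc)
  have cαu : Commute α u := by
    rw [hud]; exact (Commute.one_right α).add_right ((Commute.refl α).mul_right cαz)
  have cαw : Commute α w := by
    rw [hwd]; exact cαc.sub_right (cαp.mul_right cαz)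
  have czp : Commute z p := by
    rw [hpd]; exact (Commute.one_right z).sub_right (cαz.symm.mul_right ccz.symm)
  have ccu : Commute c u := by
    rw [hud]; exact (Commute.one_right c).add_right (cαc.symm.mul_right ccz)
  have cup : Commute u p := by
    rw [hpd]; exact (Commute.one_right u).sub_right (cαu.symm.mul_right ccu.symm)
  -- algebraic facts
  have hpp : p * p = p := by
    have e : α * c * (α * c) = α * c := by
      calc α * c * (α * c) = α * (c * α * c) := by noncomm_ring
        _ = α * c := by rw [h2]
    rw [hpd]
    calc (1 - α * c) * (1 - α * c) = 1 - α * c - α * c + α * c * (α * c) := by noncomm_ring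
      _ = 1 - α * c := by rw [e]; noncomm_ring
  have hcp : c * p = 0 := by
    rw [hpd]
    calc c * (1 - α * c) = c - c * α * c := by noncomm_ring
      _ = 0 := by rw [h2]; noncomm_ring
  have hkp : α ^ k * p = 0 := by
    rw [hpd]
    calc α ^ k * (1 - α * c) = α ^ k - α ^ (k + 1) * c := by rw [pow_succ]; noncomm_ring
      _ = 0 := by rw [← h3]; noncomm_ring
  have hgeom : u - z = α ^ k := by
    have e : α * z - z = α ^ k - 1 := by
      calc α * z - z = z * (α - 1) := by rw [cαz.eq]; noncomm_ring
        _ = α ^ k - 1 := by rw [hzd]; exact geom_sum_mul α k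
    calc u - z = (α * z - z) + 1 := by rw [hud]; noncomm_ring
      _ = α ^ k := by rw [e]; noncomm_ring
  have hk1p : α ^ (k + 1) * p = 0 := by
    rw [pow_succ, mul_assoc, cαp.eq, ← mul_assoc, hkp, zero_mul]
  have hkey : α ^ (k + 1) * w = α ^ k := by
    rw [hwd]
    calc α ^ (k + 1) * (c - p * z) = α ^ (k + 1) * c - (α ^ (k + 1) * p) * z := by noncomm_ring
      _ = α ^ k := by rw [hk1p, ← h3]; noncomm_ring
  have hαc : α * c = 1 - p := by rw [hpd]; noncomm_ring
  have hαw : α * w = 1 - q := by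
    calc α * w = α * c - (α * p) * z := by rw [hwd]; noncomm_ring
      _ = (1 - p) - (p * α) * z := by rw [hαc, cαp.eq]
      _ = 1 - p * (1 + α * z) := by noncomm_ring
      _ = 1 - q := by rw [← hud, ← hqd]
  have ecq : c * q = 0 := by rw [hqd, ← mul_assoc, hcp, zero_mul]
  have ezq : z * q = p * (z * u) := by rw [hqd, ← mul_assoc, czp.eq, mul_assoc]
  have eqq : q * q = p * (u * u) := by
    rw [hqd]
    calc p * u * (p * u) = p * ((u * p) * u) := by noncomm_ring
      _ = p * ((p * u) * u) := by rw [cup.eq]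
      _ = (p * p) * (u * u) := by noncomm_ring
      _ = p * (u * u) := by rw [hpp]
  have ewq : w * q = -(p * (z * u)) := by
    rw [hwd]
    calc (c - p * z) * q = c * q - p * (z * q) := by noncomm_ring
      _ = 0 - p * (p * (z * u)) := by rw [ecq, ezq]
      _ = -((p * p) * (z * u)) := by noncomm_ring
      _ = -(p * (z * u)) := by rw [hpp]
  have hsum : w * q + q * q = 0 := by
    rw [ewq, eqq]
    calc -(p * (z * u)) + p * (u * u) = p * ((u - z) * u) := by noncomm_ring
      _ = p * (α ^ k * u) := by rw [hgeom]
      _ = (p * α ^ k) * u := by noncomm_ring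
      _ = 0 := by rw [← (cαp.pow_left k).eq, hkp, zero_mul]
  -- sandwich facts
  have hβb : β * b = b * α := by
    calc β * b = (1 - b * a) * b := by rw [hβ']
      _ = b - b * (a * b) := by noncomm_ring
      _ = b - b * (1 - α) := by rw [hα]
      _ = b * α := by noncomm_ring
  have haβ : a * β = α * a := by
    calc a * β = a * (1 - b * a) := by rw [hβ']
      _ = a - (a * b) * a := by noncomm_ring
      _ = a - (1 - α) * a := by rw [hα]
      _ = α * a := by noncomm_ring
  have hpowb : ∀ n : ℕ, β ^ n * b = b * α ^ n := by
    intro n; induction n with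
    | zero => simp
    | succ n ih =>
      rw [pow_succ, pow_succ, mul_assoc, hβb, ← mul_assoc, ih, mul_assoc]
  have hmulβ : ∀ x : R, x * β = x - (x * b) * a := by
    intro x; rw [hβ']; noncomm_ring
  refine ⟨1 + b * w * a, ?_, ?_, k, hk, ?_⟩
  · calc β * (1 + b * w * a) = β + (β * b) * (w * a) := by noncomm_ring
      _ = β + (b * α) * (w * a) := by rw [hβb]
      _ = β + b * (α * w) * a := by noncomm_ring
      _ = β + b * (w * α) * a := by rw [cαw.eq]
      _ = β + (b * w) * (α * a) := by noncomm_ring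
      _ = β + (b * w) * (a * β) := by rw [haβ]
      _ = (1 + b * w * a) * β := by noncomm_ring
  · have hbd : β * (1 + b * w * a) = 1 - b * q * a := by
      calc β * (1 + b * w * a) = β + (β * b) * (w * a) := by noncomm_ring
        _ = β + (b * α) * (w * a) := by rw [hβb]
        _ = β + b * (α * w) * a := by noncomm_ring
        _ = β + b * (1 - q) * a := by rw [hαw]
        _ = (1 - b * a) + b * (1 - q) * a := by rw [hβ']
        _ = 1 - b * q * a := by noncomm_ring
    calc (1 + b * w * a) * β * (1 + b * w * a)
        = (1 + b * w * a) * (β * (1 + b * w * a)) := by rw [mul_assoc]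
      _ = (1 + b * w * a) * (1 - b * q * a) := by rw [hbd]
      _ = 1 + b * w * a - b * q * a - (b * w) * ((a * b) * (q * a)) := by noncomm_ring
      _ = 1 + b * w * a - b * q * a - (b * w) * ((1 - α) * (q * a)) := by rw [hα]
      _ = 1 + b * w * a - b * (q + w * q - (w * α) * q) * a := by noncomm_ring
      _ = 1 + b * w * a - b * (q + w * q - (α * w) * q) * a := by rw [← cαw.eq]
      _ = 1 + b * w * a - b * (q + w * q - (1 - q) * q) * a := by rw [hαw]
      _ = 1 + b * w * a - b * (w * q + q * q) * a := by noncomm_ring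
      _ = 1 + b * w * a := by rw [hsum]; noncomm_ring
  · have hb1 : β ^ (k + 1) = β ^ k - (b * α ^ k) * a := by
      rw [pow_succ, hmulβ, hpowb]
    refine Eq.symm ?_
    calc β ^ (k + 1) * (1 + b * w * a)
        = β ^ (k + 1) + (β ^ (k + 1) * b) * (w * a) := by noncomm_ring
      _ = β ^ (k + 1) + (b * α ^ (k + 1)) * (w * a) := by rw [hpowb]
      _ = β ^ (k + 1) + b * (α ^ (k + 1) * w) * a := by noncomm_ring
      _ = β ^ (k + 1) + b * α ^ k * a := by rw [hkey]
      _ = (β ^ k - (b * α ^ k) * a) + b * α ^ k * a := by rw [hb1]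
      _ = β ^ k := by noncomm_ring

theorem stmt4 (a b : R) :
    IsDrazinInvertible (1 - a * b) ↔ IsDrazinInvertible (1 - b * a) := by
  constructor <;> rintro ⟨c, h1, h2, k, hk, h3⟩
  · exact jac_aux a b (1 - a * b) (1 - b * a) c (by noncomm_ring) (by noncomm_ring) h1 h2 k hk h3
  · exact jac_aux b a (1 - b * a) (1 - a * b) c (by noncomm_ring) (by noncomm_ring) h1 h2 k hk h3
end

section
/- Let a, b be Drazin invertible in a ring R and p an idempotent commuting with both a and b. Then ap + b(1-p) is Drazin invertible and (ap + b(1-p))^D = a^D p + b^D (1-p). -/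
variable {R : Type*} [Ring R]

/-- Double-commutant property of the group inverse. -/
lemma grp_double_comm (c g x : R) (h1 : c * g = g * c) (h2 : g * c * g = g)
    (h3 : c * g * c = c) (hx : x * c = c * x) : x * g = g * x := by
  have hce : c * (g * c) = c := by rw [← mul_assoc, h3]
  have hge : g * (c * g) = g := by rw [← mul_assoc]; exact h2
  have hgxc : c * g * x = g * x * c := by
    rw [h1, mul_assoc, ← hx, ← mul_assoc]
  have hexe1 : c * g * x * (c * g) = x * (c * g) := by
    calc c * g * x * (c * g) = c * g * (x * c * g) := by simp only [mul_assoc]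
      _ = c * g * (c * x * g) := by rw [hx]
      _ = c * g * c * (x * g) := by simp only [mul_assoc]
      _ = c * (x * g) := by rw [h3]
      _ = x * c * g := by rw [← mul_assoc, ← hx]
      _ = x * (c * g) := by rw [mul_assoc]
  have hexe2 : c * g * x * (c * g) = c * g * x := by
    calc c * g * x * (c * g) = c * g * x * (g * c) := congrArg (c * g * x * ·) h1
      _ = g * x * c * (g * c) := by rw [hgxc]
      _ = g * x * (c * (g * c)) := by simp only [mul_assoc]
      _ = g * x * c := by rw [hce]
      _ = c * g * x := hgxc.symm
  have hex : c * g * x = x * (c * g) := by rw [← hexe2, hexe1]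
  have hex' : g * c * x = x * (g * c) := by rw [← h1, hex]
  calc x * g = x * (g * c * g) := by rw [h2]
    _ = x * (g * c) * g := by simp only [mul_assoc]
    _ = g * c * x * g := by rw [← hex']
    _ = g * (c * x) * g := by simp only [mul_assoc]
    _ = g * (x * c) * g := by rw [hx]
    _ = g * (x * (c * g)) := by simp only [mul_assoc]
    _ = g * (c * g * x) := by rw [hex]
    _ = g * (c * g) * x := by simp only [mul_assoc]
    _ = g * x := by rw [hge]

lemma drazin_double_comm (a y x : R)
    (h1 : a * y = y * a) (h2 : y * a * y = y) (k : ℕ) (h3 : a ^ k = a ^ (k + 1) * y)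
    (hx : x * a = a * x) : x * y = y * x := by
  have cay : Commute a y := h1
  have cxa : Commute x a := hx
  have hay2 : a * (y * y) = y := by rw [← mul_assoc, h1]; exact h2
  have haypow : ∀ j : ℕ, a * y ^ (j + 2) = y ^ (j + 1) := by
    intro j
    have e1 : y ^ (j + 2) = y * y * y ^ j := by
      rw [mul_assoc, ← pow_succ', ← pow_succ']
    rw [e1, ← mul_assoc, hay2, ← pow_succ']
  have hayy : ∀ m : ℕ, a * y * y ^ (m + 1) = y ^ (m + 1) := by
    intro m
    rw [mul_assoc, ← pow_succ']
    exact haypow m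
  have hf1 : ∀ m : ℕ, y = a ^ m * y ^ (m + 1) := by
    intro m; induction m with
    | zero => simp
    | succ n ih =>
      have e : a ^ (n + 1) * y ^ (n + 2) = a ^ n * (a * y ^ (n + 2)) := by
        rw [pow_succ]
        simp only [mul_assoc]
      rw [e, haypow n]; exact ih
  have heya : ∀ j : ℕ, a * y * a ^ (k + j) = a ^ (k + j) := by
    intro j; induction j with
    | zero =>
      have e : a * y * a ^ (k + 0) = a ^ (k + 1) * y := by
        rw [Nat.add_zero, mul_assoc, (cay.symm.pow_right k).eq, ← mul_assoc, ← pow_succ']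
      rw [e, ← h3, Nat.add_zero]
    | succ n ih =>
      have e1 : a ^ (k + (n + 1)) = a * a ^ (k + n) := by
        rw [← pow_succ', Nat.add_assoc]
      calc a * y * a ^ (k + (n + 1)) = a * y * (a * a ^ (k + n)) := by rw [e1]
        _ = a * (y * a) * a ^ (k + n) := by simp only [mul_assoc]
        _ = a * (a * y) * a ^ (k + n) := by rw [← h1]
        _ = a * (a * y * a ^ (k + n)) := by simp only [mul_assoc]
        _ = a * a ^ (k + n) := by rw [ih]
        _ = a ^ (k + (n + 1)) := e1.symm
  have heyy : ∀ n m : ℕ, (a * y) ^ n * y ^ (m + 1) = y ^ (m + 1) := by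
    intro n m; induction n with
    | zero => simp
    | succ j ih => rw [pow_succ', mul_assoc, ih, hayy m]
  have heaa : ∀ n j : ℕ, (a * y) ^ n * a ^ (k + j) = a ^ (k + j) := by
    intro n j; induction n with
    | zero => simp
    | succ m ih => rw [pow_succ', mul_assoc, ih, heya j]
  have hcg : a ^ (2*k+1) * y ^ (2*k+1) = y ^ (2*k+1) * a ^ (2*k+1) := (cay.pow_pow _ _).eq
  have hcgay : a ^ (2*k+1) * y ^ (2*k+1) = (a * y) ^ (2*k+1) := (cay.mul_pow _).symm
  have hgcg : y ^ (2*k+1) * a ^ (2*k+1) * y ^ (2*k+1) = y ^ (2*k+1) := by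
    rw [← hcg, hcgay]; exact heyy _ (2*k)
  have hcgc : a ^ (2*k+1) * y ^ (2*k+1) * a ^ (2*k+1) = a ^ (2*k+1) := by
    rw [hcgay, show 2*k+1 = k + (k+1) by omega]; exact heaa _ (k+1)
  have hxc : x * a ^ (2*k+1) = a ^ (2*k+1) * x := (cxa.pow_right _).eq
  have hxg : x * y ^ (2*k+1) = y ^ (2*k+1) * x :=
    grp_double_comm _ _ _ hcg hgcg hcgc hxc
  have hy : y = a ^ (2*k) * y ^ (2*k+1) := hf1 (2*k)
  calc x * y = x * (a ^ (2*k) * y ^ (2*k+1)) := by rw [← hy]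
    _ = x * a ^ (2*k) * y ^ (2*k+1) := by rw [mul_assoc]
    _ = a ^ (2*k) * x * y ^ (2*k+1) := by rw [(cxa.pow_right (2*k)).eq]
    _ = a ^ (2*k) * (y ^ (2*k+1) * x) := by rw [mul_assoc, hxg]
    _ = a ^ (2*k) * y ^ (2*k+1) * x := by rw [mul_assoc]
    _ = y * x := by rw [← hy]

lemma qcomm (p z : R) (hz : z * p = p * z) : z * (1 - p) = (1 - p) * z := by
  rw [mul_sub, sub_mul, mul_one, one_mul, hz]

lemma key_mul (p u v w z : R) (hp : p * p = p) (hu : u * p = p * u) (hv : v * p = p * v)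
    (hw : w * p = p * w) (hz : z * p = p * z) :
    (u * p + v * (1 - p)) * (w * p + z * (1 - p)) = (u * w) * p + (v * z) * (1 - p) := by
  have hq : (1 - p) * (1 - p) = 1 - p := by
    have e : (1 - p) * (1 - p) = 1 - p - p + p * p := by noncomm_ring
    rw [e, hp]; abel
  have hpq : p * (1 - p) = 0 := by rw [mul_sub, mul_one, hp, sub_self]
  have hqp : (1 - p) * p = 0 := by rw [sub_mul, one_mul, hp, sub_self]
  have c1 : u * p * (z * (1 - p)) = 0 := by
    calc u * p * (z * (1 - p)) = u * (p * z) * (1 - p) := by simp only [mul_assoc]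
      _ = u * (z * p) * (1 - p) := by rw [hz]
      _ = u * z * (p * (1 - p)) := by simp only [mul_assoc]
      _ = 0 := by rw [hpq, mul_zero]
  have c2 : v * (1 - p) * (w * p) = 0 := by
    calc v * (1 - p) * (w * p) = v * ((1 - p) * w) * p := by simp only [mul_assoc]
      _ = v * (w * (1 - p)) * p := by rw [← qcomm p w hw]
      _ = v * w * ((1 - p) * p) := by simp only [mul_assoc]
      _ = 0 := by rw [hqp, mul_zero]
  have d1 : u * p * (w * p) = u * w * p := by
    calc u * p * (w * p) = u * (p * w) * p := by simp only [mul_assoc]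
      _ = u * (w * p) * p := by rw [hw]
      _ = u * w * (p * p) := by simp only [mul_assoc]
      _ = u * w * p := by rw [hp]
  have d2 : v * (1 - p) * (z * (1 - p)) = v * z * (1 - p) := by
    calc v * (1 - p) * (z * (1 - p)) = v * ((1 - p) * z) * (1 - p) := by simp only [mul_assoc]
      _ = v * (z * (1 - p)) * (1 - p) := by rw [← qcomm p z hz]
      _ = v * z * ((1 - p) * (1 - p)) := by simp only [mul_assoc]
      _ = v * z * (1 - p) := by rw [hq]
  calc (u * p + v * (1 - p)) * (w * p + z * (1 - p))
      = u * p * (w * p) + u * p * (z * (1 - p)) + (v * (1 - p) * (w * p) + v * (1 - p) * (z * (1 - p))) := by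
        noncomm_ring
    _ = u * w * p + 0 + (0 + v * z * (1 - p)) := by rw [c1, c2, d1, d2]
    _ = (u * w) * p + (v * z) * (1 - p) := by abel

theorem stmt5 (a b p ad bd : R) (hp : p ^ 2 = p)
    (hap : a * p = p * a) (hbp : b * p = p * b)
    (ha : IsDrazinInverse a ad) (hb : IsDrazinInverse b bd) :
    IsDrazinInverse (a * p + b * (1 - p)) (ad * p + bd * (1 - p)) := by
  obtain ⟨ha1, ha2, ka, hka, ha3⟩ := ha
  obtain ⟨hb1, hb2, kb, hkb, hb3⟩ := hb
  have hpp : p * p = p := by rw [← pow_two, hp]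
  have had : ad * p = p * ad :=
    (drazin_double_comm a ad p ha1 ha2 ka ha3 hap.symm).symm
  have hbd : bd * p = p * bd :=
    (drazin_double_comm b bd p hb1 hb2 kb hb3 hbp.symm).symm
  have hada : (ad * a) * p = p * (ad * a) := by
    calc ad * a * p = ad * (a * p) := by rw [mul_assoc]
      _ = ad * (p * a) := by rw [hap]
      _ = (ad * p) * a := by rw [mul_assoc]
      _ = p * (ad * a) := by rw [had, mul_assoc]
  have hbdb : (bd * b) * p = p * (bd * b) := by
    calc bd * b * p = bd * (b * p) := by rw [mul_assoc]
      _ = bd * (p * b) := by rw [hbp]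
      _ = (bd * p) * b := by rw [mul_assoc]
      _ = p * (bd * b) := by rw [hbd, mul_assoc]
  have hapow : ∀ m : ℕ, a ^ m * p = p * a ^ m := fun m =>
    ((Commute.pow_right (hap.symm : Commute p a) m).symm).eq
  have hbpow : ∀ m : ℕ, b ^ m * p = p * b ^ m := fun m =>
    ((Commute.pow_right (hbp.symm : Commute p b) m).symm).eq
  refine ⟨?_, ?_, ?_⟩
  · rw [key_mul p a b ad bd hpp hap hbp had hbd,
      key_mul p ad bd a b hpp had hbd hap hbp, ha1, hb1]
  · rw [key_mul p ad bd a b hpp had hbd hap hbp,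
      key_mul p (ad * a) (bd * b) ad bd hpp hada hbdb had hbd, ha2, hb2]
  · have hpow : ∀ m : ℕ, (a * p + b * (1 - p)) ^ (m + 1)
        = a ^ (m + 1) * p + b ^ (m + 1) * (1 - p) := by
      intro m; induction m with
      | zero => rw [pow_one, pow_one, pow_one]
      | succ n ih =>
        rw [pow_succ, ih, key_mul p (a ^ (n + 1)) (b ^ (n + 1)) a b hpp
          (hapow (n + 1)) (hbpow (n + 1)) hap hbp, ← pow_succ, ← pow_succ]
    set k := max ka kb with hk
    have hkpos : 0 < k := lt_of_lt_of_le hka (le_max_left _ _)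
    obtain ⟨m, hm⟩ := Nat.exists_eq_succ_of_ne_zero hkpos.ne'
    have haK : a ^ (k + 1) * ad = a ^ k := by
      obtain ⟨d, hd⟩ := Nat.exists_eq_add_of_le (le_max_left ka kb)
      calc a ^ (k + 1) * ad = a ^ (d + (ka + 1)) * ad := by
            rw [show k + 1 = d + (ka + 1) by omega]
        _ = a ^ d * a ^ (ka + 1) * ad := by rw [pow_add]
        _ = a ^ d * (a ^ (ka + 1) * ad) := by rw [mul_assoc]
        _ = a ^ d * a ^ ka := by rw [← ha3]
        _ = a ^ (d + ka) := by rw [← pow_add]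
        _ = a ^ k := by rw [show d + ka = k by omega]
    have hbK : b ^ (k + 1) * bd = b ^ k := by
      obtain ⟨d, hd⟩ := Nat.exists_eq_add_of_le (le_max_right ka kb)
      calc b ^ (k + 1) * bd = b ^ (d + (kb + 1)) * bd := by
            rw [show k + 1 = d + (kb + 1) by omega]
        _ = b ^ d * b ^ (kb + 1) * bd := by rw [pow_add]
        _ = b ^ d * (b ^ (kb + 1) * bd) := by rw [mul_assoc]
        _ = b ^ d * b ^ kb := by rw [← hb3]
        _ = b ^ (d + kb) := by rw [← pow_add]
        _ = b ^ k := by rw [show d + kb = k by omega]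
    refine ⟨k, hkpos, ?_⟩
    have e1 : (a * p + b * (1 - p)) ^ k = a ^ k * p + b ^ k * (1 - p) := by
      rw [hm]; exact hpow m
    have e2 : (a * p + b * (1 - p)) ^ (k + 1) = a ^ (k + 1) * p + b ^ (k + 1) * (1 - p) :=
      hpow k
    rw [e1, e2, key_mul p (a ^ (k + 1)) (b ^ (k + 1)) ad bd hpp
      (hapow (k + 1)) (hbpow (k + 1)) had hbd, haK, hbK]
end

section
/- Let a be an element of a ring R, p an idempotent, and set b = pa(1-p), c = (1-p)ap. Then b + c is Drazin invertible if and only if bc is Drazin invertible, if and only if b - c is Drazin invertible. -/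
variable {R : Type*} [Ring R]

section Aux

lemma drazin_pow_step {s w : R} {k : ℕ}
    (hpow : s ^ k = s ^ (k + 1) * w) (j : ℕ) :
    s ^ (k + j) = s ^ (k + j + 1) * w := by
  have h1 : s ^ (k + j) = s ^ j * s ^ k := by rw [← pow_add, Nat.add_comm]
  rw [h1, hpow, ← mul_assoc, ← pow_add]
  rw [show j + (k + 1) = k + j + 1 by omega]

lemma drazin_w_sq {s w : R} (hcom : s * w = w * s) (hwsw : w * s * w = w) :
    w = w ^ 2 * s := by
  calc w = w * s * w := hwsw.symm
    _ = w * (w * s) := by rw [mul_assoc, hcom]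
    _ = w ^ 2 * s := by rw [← mul_assoc, ← sq]

lemma drazin_w_pow {s w : R} (hcom : s * w = w * s) (hwsw : w * s * w = w) (n : ℕ) :
    w = w ^ (n + 1) * s ^ n := by
  induction n with
  | zero => simp
  | succ n ih =>
    have h2 := drazin_w_sq hcom hwsw
    calc w = w ^ (n + 1) * s ^ n := ih
      _ = w ^ n * w * s ^ n := by rw [← pow_succ]
      _ = w ^ n * (w ^ 2 * s) * s ^ n := by rw [← h2]
      _ = w ^ (n + 2) * s ^ (n + 1) := by
          rw [← mul_assoc, ← pow_add, mul_assoc, ← pow_succ']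

lemma drazin_w_pow' {s w : R} (hcom : s * w = w * s) (hwsw : w * s * w = w) (n : ℕ) :
    w = s ^ n * w ^ (n + 1) := by
  induction n with
  | zero => simp
  | succ n ih =>
    have h2 : w = s * w ^ 2 := by
      calc w = w * s * w := hwsw.symm
        _ = s * w * w := by rw [hcom]
        _ = s * w ^ 2 := by rw [mul_assoc, ← sq]
    calc w = s ^ n * w ^ (n + 1) := ih
      _ = s ^ n * (w * w ^ n) := by rw [← pow_succ']
      _ = s ^ n * ((s * w ^ 2) * w ^ n) := by rw [← h2]
      _ = s ^ (n + 1) * (w ^ 2 * w ^ n) := by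
          rw [← mul_assoc, ← mul_assoc, ← pow_succ, mul_assoc]
      _ = s ^ (n + 1) * w ^ (n + 1 + 1) := by
          rw [← pow_add, show 2 + n = n + 1 + 1 by omega]

/-- Double commutant property of Drazin inverses. -/
lemma drazin_double_commute {s w x : R} (h : IsDrazinInverse s w)
    (hxs : x * s = s * x) : x * w = w * x := by
  obtain ⟨hcom, hwsw, k, hk, hpow⟩ := h
  have hC : Commute x s := hxs
  have hsw : Commute s w := hcom
  have hA := drazin_w_pow hcom hwsw k
  have hB := drazin_w_pow' hcom hwsw k
  have hCC : w ^ (k + 1) * s ^ (k + 1) = w * s := by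
    rw [pow_succ s k, ← mul_assoc, ← hA]
  have hDD : s ^ (k + 1) * w ^ (k + 1) = s * w := by
    rw [pow_succ' s k, mul_assoc, ← hB]
  have e1 : w * x = w * s * x * w := by
    calc w * x = w ^ (k+1) * s ^ k * x := by rw [← hA]
      _ = w ^ (k+1) * (x * s ^ k) := by rw [mul_assoc, (hC.pow_right k).eq]
      _ = w ^ (k+1) * (x * (s ^ (k+1) * w)) := by rw [← hpow]
      _ = w ^ (k+1) * (s ^ (k+1) * x) * w := by
          rw [← (hC.pow_right (k+1)).eq, ← mul_assoc, ← mul_assoc,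
            mul_assoc (w^(k+1)) x]
      _ = w * s * x * w := by rw [← mul_assoc, hCC]
  have e2 : x * w = w * x * s * w := by
    calc x * w = x * (s ^ k * w ^ (k+1)) := by rw [← hB]
      _ = s ^ k * x * w ^ (k+1) := by rw [← mul_assoc, (hC.pow_right k).eq]
      _ = w * s ^ (k+1) * x * w ^ (k+1) := by
          rw [hpow, (hsw.pow_left (k+1)).eq]
      _ = w * (x * s ^ (k+1)) * w ^ (k+1) := by
          rw [mul_assoc w, (hC.pow_right (k+1)).eq]
      _ = w * x * (s ^ (k+1) * w ^ (k+1)) := by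
          rw [← mul_assoc, mul_assoc (w*x)]
      _ = w * x * s * w := by rw [hDD, ← mul_assoc]
  rw [e1, e2, mul_assoc w x s, hxs, ← mul_assoc]

lemma drazin_sq_inv {s y : R} (hcom : s * y = y * s) (h : y * s * y = y) :
    y ^ 2 * s ^ 2 * y ^ 2 = y ^ 2 := by
  have hxy : Commute s y := hcom
  have c1 : Commute (y * s) y := Commute.mul_left (Commute.refl y) hxy
  rw [← hxy.symm.mul_pow, ← c1.mul_pow, h]

lemma di_neg {x : R} (h : IsDrazinInvertible x) : IsDrazinInvertible (-x) := by
  obtain ⟨y, hcom, hyxy, k, hk, hpow⟩ := h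
  refine ⟨-y, ?_, ?_, k, hk, ?_⟩
  · rw [neg_mul_neg, neg_mul_neg, hcom]
  · rw [neg_mul_neg, mul_neg, hyxy]
  · have key : x ^ k * (x * y) = x ^ k := by
      rw [← mul_assoc, ← pow_succ, ← hpow]
    calc (-x) ^ k = (-1) ^ k * x ^ k := by rw [neg_pow]
      _ = (-1) ^ k * (x ^ k * (x * y)) := by rw [key]
      _ = (-x) ^ k * (x * y) := by rw [← mul_assoc, ← neg_pow]
      _ = (-x) ^ k * ((-x) * (-y)) := by rw [neg_mul_neg]
      _ = (-x) ^ (k + 1) * (-y) := by rw [← mul_assoc, ← pow_succ]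

lemma di_sq {x : R} (h : IsDrazinInvertible x) : IsDrazinInvertible (x ^ 2) := by
  obtain ⟨y, hcom, hyxy, k, hk, hpow⟩ := h
  have hxy : Commute x y := hcom
  refine ⟨y ^ 2, (hxy.pow_pow 2 2).eq, drazin_sq_inv hcom hyxy, k, hk, ?_⟩
  have h1 : x ^ (k + k) = x ^ (k + k + 1) * y := drazin_pow_step hpow k
  have h2 : x ^ (k + (k + 1)) = x ^ (k + (k + 1) + 1) * y := drazin_pow_step hpow (k + 1)
  calc (x ^ 2) ^ k = x ^ (k + k) := by rw [← pow_mul]; ring_nf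
    _ = x ^ (k + k + 1) * y := h1
    _ = x ^ (k + (k + 1) + 1) * y * y := by
        rw [show k + k + 1 = k + (k + 1) by omega, h2]
    _ = x ^ (2 * (k + 1)) * y ^ 2 := by
        rw [mul_assoc, ← sq, show k + (k + 1) + 1 = 2 * (k + 1) by omega]
    _ = (x ^ 2) ^ (k + 1) * y ^ 2 := by rw [pow_mul]

lemma di_of_sq {x : R} (h : IsDrazinInvertible (x ^ 2)) : IsDrazinInvertible x := by
  obtain ⟨z, hz⟩ := h
  have hxz : x * z = z * x :=
    drazin_double_commute hz (((Commute.refl x).pow_right 2).eq)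
  obtain ⟨hcom, hzxz, k, hk, hpow⟩ := hz
  refine ⟨x * z, ?_, ?_, 2 * k, by omega, ?_⟩
  · calc x * (x * z) = x * (z * x) := by rw [hxz]
      _ = x * z * x := by rw [← mul_assoc]
  · calc x * z * x * (x * z) = x * (z * (x * x) * z) := by simp only [mul_assoc]
      _ = x * (z * x ^ 2 * z) := by rw [← sq]
      _ = x * z := by rw [hzxz]
  · calc x ^ (2 * k) = (x ^ 2) ^ k := by rw [← pow_mul]
      _ = (x ^ 2) ^ (k + 1) * z := hpow
      _ = x ^ (2 * k + 2) * z := by rw [← pow_mul]; ring_nf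
      _ = x ^ (2 * k + 1) * (x * z) := by
          rw [← mul_assoc, ← pow_succ]

lemma drazin_w_sq' {s w : R} (hcom : s * w = w * s) (hwsw : w * s * w = w) :
    w = s * w ^ 2 := by
  calc w = w * s * w := hwsw.symm
    _ = s * w * w := by rw [hcom]
    _ = s * w ^ 2 := by rw [mul_assoc, ← sq]

/-- Cline's formula. -/
lemma di_cline {a b : R} (h : IsDrazinInvertible (a * b)) :
    IsDrazinInvertible (b * a) := by
  obtain ⟨y, hcom, hyxy, k, hk, hpow⟩ := h
  have hcy : Commute (a * b) y := hcom
  have hsc : SemiconjBy b (a * b) (b * a) := (mul_assoc b a b).symm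
  refine ⟨b * y ^ 2 * a, ?_, ?_, k + 1, by omega, ?_⟩
  · calc (b * a) * (b * y ^ 2 * a) = b * ((a * b) * y ^ 2) * a := by
          simp only [mul_assoc]
      _ = b * (y ^ 2 * (a * b)) * a := by rw [(hcy.pow_right 2).eq]
      _ = (b * y ^ 2 * a) * (b * a) := by simp only [mul_assoc]
  · calc (b * y ^ 2 * a) * (b * a) * (b * y ^ 2 * a)
        = b * (y ^ 2 * ((a * b) * (a * b)) * y ^ 2) * a := by simp only [mul_assoc]
      _ = b * (y ^ 2 * (a * b) ^ 2 * y ^ 2) * a := by rw [← sq]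
      _ = b * y ^ 2 * a := by rw [drazin_sq_inv hcom hyxy]
  · have hstep : (a * b) ^ (k + 1) = (a * b) ^ (k + 1 + 1) * y := drazin_pow_step hpow 1
    have key : (a * b) ^ (k + 1 + 1) * y ^ 2 = (a * b) ^ k := by
      calc (a * b) ^ (k + 1 + 1) * y ^ 2 = (a * b) ^ (k + 1 + 1) * y * y := by
            rw [mul_assoc, ← sq]
        _ = (a * b) ^ (k + 1) * y := by rw [← hstep]
        _ = (a * b) ^ k := hpow.symm
    calc (b * a) ^ (k + 1) = (b * a) ^ k * (b * a) := by rw [pow_succ]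
      _ = (b * (a * b) ^ k) * a := by rw [← mul_assoc, ← (hsc.pow_right k).eq]
      _ = b * ((a * b) ^ (k + 1 + 1) * y ^ 2) * a := by rw [key]
      _ = (b * (a * b) ^ (k + 1 + 1)) * (y ^ 2 * a) := by simp only [mul_assoc]
      _ = (b * a) ^ (k + 1 + 1) * b * (y ^ 2 * a) := by rw [(hsc.pow_right (k + 1 + 1)).eq]
      _ = (b * a) ^ (k + 1 + 1) * (b * y ^ 2 * a) := by simp only [mul_assoc]

/-- Orthogonal sums of Drazin invertible elements. -/
lemma di_orth {u v : R} (huv : u * v = 0) (hvu : v * u = 0)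
    (hu : IsDrazinInvertible u) (hv : IsDrazinInvertible v) :
    IsDrazinInvertible (u + v) := by
  obtain ⟨y, hcu, hyuy, ku, hku, hpu⟩ := hu
  obtain ⟨z, hcv, hzvz, kv, hkv, hpv⟩ := hv
  have hy2 : y = y ^ 2 * u := drazin_w_sq hcu hyuy
  have hy2' : y = u * y ^ 2 := drazin_w_sq' hcu hyuy
  have hz2 : z = z ^ 2 * v := drazin_w_sq hcv hzvz
  have hz2' : z = v * z ^ 2 := drazin_w_sq' hcv hzvz
  have huz : u * z = 0 := by rw [hz2', ← mul_assoc, huv, zero_mul]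
  have hzu : z * u = 0 := by rw [hz2, mul_assoc, hvu, mul_zero]
  have hvy : v * y = 0 := by rw [hy2', ← mul_assoc, hvu, zero_mul]
  have hyv : y * v = 0 := by rw [hy2, mul_assoc, huv, mul_zero]
  have hyz : y * z = 0 := by rw [hz2', ← mul_assoc, hyv, zero_mul]
  have hzy : z * y = 0 := by rw [hy2', ← mul_assoc, hzu, zero_mul]
  -- powers
  have hupow : ∀ n, u ^ (n + 1) * z = 0 := fun n => by
    rw [pow_succ, mul_assoc, huz, mul_zero]
  have hvpow : ∀ n, v ^ (n + 1) * y = 0 := fun n => by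
    rw [pow_succ, mul_assoc, hvy, mul_zero]
  have huvpow : ∀ n, u ^ (n + 1) * v = 0 := fun n => by
    rw [pow_succ, mul_assoc, huv, mul_zero]
  have hvupow : ∀ n, v ^ (n + 1) * u = 0 := fun n => by
    rw [pow_succ, mul_assoc, hvu, mul_zero]
  have hsum : ∀ n, (u + v) ^ (n + 1) = u ^ (n + 1) + v ^ (n + 1) := by
    intro n
    induction n with
    | zero => simp
    | succ n ih =>
      rw [pow_succ, ih, add_mul, mul_add, mul_add, huvpow, hvupow,
        ← pow_succ, ← pow_succ, add_zero, zero_add]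
  refine ⟨y + z, ?_, ?_, max ku kv, by omega, ?_⟩
  · rw [add_mul, mul_add, mul_add, mul_add, add_mul, add_mul,
      huz, hvy, hyv, hzu, hcu, hcv]
  · have hyuy' : y * (u * y) = y := by rw [← mul_assoc, hyuy]
    have hzvz' : z * (v * z) = z := by rw [← mul_assoc, hzvz]
    simp only [mul_add, add_mul, mul_assoc, huz, hzu, hvy, hyv, hyz, hzy,
      mul_zero, zero_mul, add_zero, zero_add, hyuy', hzvz']
  · set N := max ku kv with hN
    obtain ⟨m, hm⟩ : ∃ m, N = ku + m := ⟨N - ku, by omega⟩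
    obtain ⟨m', hm'⟩ : ∃ m', N = kv + m' := ⟨N - kv, by omega⟩
    have hu' : u ^ N = u ^ (N + 1) * y := by rw [hm]; exact drazin_pow_step hpu m
    have hv' : v ^ N = v ^ (N + 1) * z := by rw [hm']; exact drazin_pow_step hpv m'
    have h1 : u ^ (N + 1) * z = 0 := by rw [pow_succ, mul_assoc, huz, mul_zero]
    have h2 : v ^ (N + 1) * y = 0 := by rw [pow_succ, mul_assoc, hvy, mul_zero]
    calc (u + v) ^ N = u ^ N + v ^ N := by
          rw [show N = (N - 1) + 1 by omega, hsum]
      _ = u ^ (N + 1) * y + v ^ (N + 1) * z := by rw [hu', hv']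
      _ = (u ^ (N + 1) + v ^ (N + 1)) * (y + z) := by
          rw [add_mul, mul_add, mul_add, h1, h2, add_zero, zero_add]
      _ = (u + v) ^ (N + 1) * (y + z) := by
          rw [show N + 1 = ((N - 1) + 1) + 1 by omega, hsum]

/-- Corner compression: if p is idempotent commuting with s, then s*p is DI. -/
lemma di_corner {s p : R} (hpp : p * p = p) (hps : p * s = s * p)
    (h : IsDrazinInvertible s) : IsDrazinInvertible (s * p) := by
  obtain ⟨w, hw⟩ := h
  have hpw : p * w = w * p := drazin_double_commute hw hps
  obtain ⟨hcom, hwsw, k, hk, hpow⟩ := hw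
  have hsp : ∀ n, (s * p) ^ (n + 1) = s ^ (n + 1) * p := by
    intro n
    induction n with
    | zero => simp
    | succ n ih =>
      calc (s * p) ^ (n + 1 + 1) = s ^ (n + 1) * p * (s * p) := by rw [pow_succ, ih]
        _ = s ^ (n + 1) * (p * s) * p := by simp only [mul_assoc]
        _ = s ^ (n + 1) * (s * p) * p := by rw [hps]
        _ = s ^ (n + 1 + 1) * (p * p) := by
            rw [← mul_assoc, ← mul_assoc, ← pow_succ, mul_assoc]
        _ = s ^ (n + 1 + 1) * p := by rw [hpp]
  refine ⟨w * p, ?_, ?_, k, hk, ?_⟩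
  · have hL : (s * p) * (w * p) = w * s * p := by
      calc (s * p) * (w * p) = s * (p * w) * p := by simp only [mul_assoc]
        _ = s * (w * p) * p := by rw [hpw]
        _ = s * w * (p * p) := by simp only [mul_assoc]
        _ = w * s * p := by rw [hpp, hcom]
    have hR : (w * p) * (s * p) = w * s * p := by
      calc (w * p) * (s * p) = w * (p * s) * p := by simp only [mul_assoc]
        _ = w * (s * p) * p := by rw [hps]
        _ = w * s * (p * p) := by simp only [mul_assoc]
        _ = w * s * p := by rw [hpp]
    rw [hL, hR]
  · calc (w * p) * (s * p) * (w * p) = w * (p * s) * (p * w) * p := by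
          simp only [mul_assoc]
      _ = w * (s * p) * (w * p) * p := by rw [hps, hpw]
      _ = w * s * (p * w) * (p * p) := by simp only [mul_assoc]
      _ = w * s * (w * p) * p := by rw [hpw, hpp]
      _ = (w * s * w) * (p * p) := by simp only [mul_assoc]
      _ = w * p := by rw [hwsw, hpp]
  · obtain ⟨m, rfl⟩ : ∃ m, k = m + 1 := ⟨k - 1, by omega⟩
    calc (s * p) ^ (m + 1) = s ^ (m + 1) * p := hsp m
      _ = s ^ (m + 1 + 1) * w * p := by rw [← hpow]
      _ = s ^ (m + 1 + 1) * (p * w) * p := by rw [hpw]; simp only [mul_assoc, hpp]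
      _ = (s * p) ^ (m + 1 + 1) * (w * p) := by rw [hsp (m + 1)]; simp only [mul_assoc]

end Aux

theorem stmt6 (a p : R) (hp : p ^ 2 = p) (b c : R)
    (hb : b = p * a * (1 - p)) (hc : c = (1 - p) * a * p) :
    (IsDrazinInvertible (b + c) ↔ IsDrazinInvertible (b * c)) ∧
    (IsDrazinInvertible (b * c) ↔ IsDrazinInvertible (b - c)) := by
  have hpp : p * p = p := by rw [← sq]; exact hp
  have h1p : (1 - p) * p = 0 := by rw [sub_mul, one_mul, hpp, sub_self]
  have hp1 : p * (1 - p) = 0 := by rw [mul_sub, mul_one, hpp, sub_self]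
  have hbb : b * b = 0 := by
    calc b * b = (p * a) * ((1 - p) * p) * (a * (1 - p)) := by
          rw [hb]; simp only [mul_assoc]
      _ = 0 := by rw [h1p, mul_zero, zero_mul]
  have hcc : c * c = 0 := by
    calc c * c = ((1 - p) * a) * (p * (1 - p)) * (a * p) := by
          rw [hc]; simp only [mul_assoc]
      _ = 0 := by rw [hp1, mul_zero, zero_mul]
  have hpb : p * b = b := by rw [hb, ← mul_assoc, ← mul_assoc, hpp]
  have hbp : b * p = 0 := by rw [hb, mul_assoc, h1p, mul_zero]
  have hcp : c * p = c := by rw [hc, mul_assoc, hpp]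
  have hpc : p * c = 0 := by rw [hc, ← mul_assoc, ← mul_assoc, hp1, zero_mul, zero_mul]
  have hps1 : p * (b * c + c * b) = b * c := by
    rw [mul_add, ← mul_assoc, ← mul_assoc, hpb, hpc, zero_mul, add_zero]
  have hsp_eq : (b * c + c * b) * p = b * c := by
    rw [add_mul, mul_assoc, mul_assoc, hcp, hbp, mul_zero, add_zero]
  have hps : p * (b * c + c * b) = (b * c + c * b) * p := by rw [hps1, hsp_eq]
  have hsq : (b + c) ^ 2 = b * c + c * b := by
    rw [sq, add_mul, mul_add, mul_add, hbb, hcc]; abel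
  have hsq' : (b - c) ^ 2 = -(b * c + c * b) := by
    rw [sq, sub_mul, mul_sub, mul_sub, hbb, hcc]; abel
  have hDI1 : IsDrazinInvertible (b * c + c * b) → IsDrazinInvertible (b * c) := by
    intro h
    have := di_corner hpp hps h
    rwa [hsp_eq] at this
  have hDI2 : IsDrazinInvertible (b * c) → IsDrazinInvertible (b * c + c * b) := by
    intro h
    refine di_orth ?_ ?_ h (di_cline h)
    · calc b * c * (c * b) = b * (c * c) * b := by simp only [mul_assoc]
        _ = 0 := by rw [hcc, mul_zero, zero_mul]
    · calc c * b * (b * c) = c * (b * b) * c := by simp only [mul_assoc]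
        _ = 0 := by rw [hbb, mul_zero, zero_mul]
  have hA : IsDrazinInvertible (b + c) ↔ IsDrazinInvertible (b * c + c * b) := by
    constructor
    · intro h; have := di_sq h; rwa [hsq] at this
    · intro h; exact di_of_sq (by rwa [hsq])
  have hB : IsDrazinInvertible (b - c) ↔ IsDrazinInvertible (b * c + c * b) := by
    constructor
    · intro h
      have h1 := di_sq h
      rw [hsq'] at h1
      have h2 := di_neg h1
      rwa [neg_neg] at h2
    · intro h
      exact di_of_sq (by rw [hsq']; exact di_neg h)
  exact ⟨⟨fun h => hDI1 (hA.mp h), fun h => hA.mpr (hDI2 h)⟩,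
    ⟨fun h => hB.mpr (hDI2 h), fun h => hDI1 (hB.mp h)⟩⟩
end

section
/- If a is an element of a ring R such that a - a^2 is Drazin invertible, then a is Drazin invertible. -/
variable {R : Type*} [Ring R]

/-- Commutative core of the argument: in a commutative ring, if `b` is a
Drazin-type inverse of `a - a ^ 2`, then `a` has a Drazin inverse. -/
lemma comm_core {S : Type*} [CommRing S] (a b : S) (k : ℕ) (hk : 0 < k)
    (hb : b * (a - a ^ 2) * b = b)
    (hxk : (a - a ^ 2) ^ k = (a - a ^ 2) ^ (k + 1) * b) :
    ∃ d : S, d * a * d = d ∧ a ^ k = a ^ (k + 1) * d := by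
  obtain ⟨u, v, huv⟩ : IsCoprime (a ^ k) ((1 - a) ^ k) :=
    IsCoprime.pow ⟨1, 1, by ring⟩
  have hsplit : (a - a ^ 2) ^ k = a ^ k * (1 - a) ^ k := by
    rw [show a - a ^ 2 = a * (1 - a) by ring, mul_pow]
  have hpow : a * a ^ (k - 1) = a ^ k := by
    rw [← pow_succ', Nat.sub_add_cancel hk]
  have hss : ((a - a ^ 2) * b) * ((a - a ^ 2) * b) = (a - a ^ 2) * b := by
    linear_combination (a - a ^ 2) * hb
  have hxs : (a - a ^ 2) ^ k * (1 - (a - a ^ 2) * b) = 0 := by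
    linear_combination hxk
  have hbs : b * ((a - a ^ 2) * b) = b := by linear_combination hb
  -- below, `g := a ^ k * u * (1 - s)` where `s := (a - a ^ 2) * b`
  have hg2 : (a ^ k * u * (1 - (a - a ^ 2) * b)) * (a ^ k * u * (1 - (a - a ^ 2) * b))
      = a ^ k * u * (1 - (a - a ^ 2) * b) := by
    linear_combination (a ^ k * u) ^ 2 * hss + (a ^ k * u * (1 - (a - a ^ 2) * b)) * huv
      + u * v * (1 - (a - a ^ 2) * b) * hsplit - u * v * hxs
  have hgs : (a ^ k * u * (1 - (a - a ^ 2) * b)) * ((a - a ^ 2) * b) = 0 := by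
    linear_combination (-(a ^ k * u)) * hss
  have hgb : (a ^ k * u * (1 - (a - a ^ 2) * b)) * b = 0 := by
    linear_combination (-(a ^ k * u)) * hbs
  have hag : a ^ k * u * (a ^ k * u * (1 - (a - a ^ 2) * b))
      = a ^ k * u * (1 - (a - a ^ 2) * b) := by
    linear_combination (a ^ k * u * (1 - (a - a ^ 2) * b)) * huv
      + u * v * (1 - (a - a ^ 2) * b) * hsplit - u * v * hxs
  have key : a ^ k * (1 - (a - a ^ 2) * b - a ^ k * u * (1 - (a - a ^ 2) * b)) = 0 := by
    linear_combination (-(a ^ k * (1 - (a - a ^ 2) * b))) * huv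
      - v * (1 - (a - a ^ 2) * b) * hsplit + v * hxs
  refine ⟨(1 - a) * b + a ^ (k - 1) * u * (a ^ k * u * (1 - (a - a ^ 2) * b)), ?_, ?_⟩
  · -- D * a * D = D
    have haD : ((1 - a) * b + a ^ (k - 1) * u * (a ^ k * u * (1 - (a - a ^ 2) * b))) * a
        = (a - a ^ 2) * b + a ^ k * u * (1 - (a - a ^ 2) * b) := by
      linear_combination (u * (a ^ k * u * (1 - (a - a ^ 2) * b))) * hpow + hag
    rw [haD]
    linear_combination (1 - a) * hbs + (a ^ (k - 1) * u) * hgs + (1 - a) * hgb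
      + (a ^ (k - 1) * u) * hg2
  · -- a ^ k = a ^ (k + 1) * D
    have h3 : a ^ (k + 1) *
          ((1 - a) * b + a ^ (k - 1) * u * (a ^ k * u * (1 - (a - a ^ 2) * b)))
        = a ^ k * ((a - a ^ 2) * b + a ^ k * u * (1 - (a - a ^ 2) * b)) := by
      linear_combination (a ^ k * u * (a ^ k * u * (1 - (a - a ^ 2) * b))) * hpow
        + a ^ k * hag
    rw [h3]
    linear_combination key

/-- Drazin's double-commutant argument, specialised: any Drazin-type inverse of
`a - a ^ 2` commutes with `a`. -/
lemma ab_comm {R : Type*} [Ring R] (a b : R) (k : ℕ) (hk : 0 < k)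
    (h1 : (a - a ^ 2) * b = b * (a - a ^ 2))
    (hb : b * (a - a ^ 2) * b = b)
    (hxk : (a - a ^ 2) ^ k = (a - a ^ 2) ^ (k + 1) * b) :
    a * b = b * a := by
  obtain ⟨m, rfl⟩ : ∃ m, k = m + 1 := ⟨k - 1, (Nat.succ_pred_eq_of_pos hk).symm⟩
  obtain ⟨x, hxdef⟩ : ∃ x, x = a - a ^ 2 := ⟨_, rfl⟩
  rw [← hxdef] at h1 hb hxk
  have cax : Commute a x := by
    show a * x = x * a
    rw [hxdef]; noncomm_ring
  have c1 : Commute x b := h1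
  obtain ⟨e, he⟩ : ∃ e, e = x * b := ⟨_, rfl⟩
  have h1' : e = b * x := by rw [he, h1]
  have hee : e * e = e := by
    rw [he, mul_assoc, ← mul_assoc b, hb]
  have heb : e * b = b := by
    rw [h1']; exact hb
  have hbe : b * e = b := by
    rw [he, ← mul_assoc]; exact hb
  have ce_x : Commute e x := by
    rw [he]; exact Commute.mul_left (Commute.refl x) c1.symm
  have hepow : ∀ n : ℕ, e ^ (n + 1) = e := by
    intro n
    induction n with
    | zero => rw [pow_one]
    | succ p ih => rw [pow_succ, ih, hee]
  have hxbk : x ^ (m + 1) * b ^ (m + 1) = e := by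
    rw [← c1.mul_pow, ← he]; exact hepow m
  have hbxk : b ^ (m + 1) * x ^ (m + 1) = e := by
    rw [← c1.symm.mul_pow, ← h1']; exact hepow m
  have hxke : x ^ (m + 1) * e = x ^ (m + 1) := by
    rw [he, ← mul_assoc, ← pow_succ, ← hxk]
  have hexk : e * x ^ (m + 1) = x ^ (m + 1) := by
    rw [(ce_x.pow_right (m + 1)).eq, hxke]
  have hae1 : a * e = x ^ (m + 1) * (a * b ^ (m + 1)) := by
    rw [← hxbk, ← mul_assoc, (cax.pow_right (m + 1)).eq, mul_assoc]
  have claim1 : e * (a * e) = a * e := by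
    rw [hae1, ← mul_assoc, hexk]
  have hae2 : e * a = (b ^ (m + 1) * a) * x ^ (m + 1) := by
    rw [← hbxk, mul_assoc, ← (cax.pow_right (m + 1)).eq, ← mul_assoc]
  have claim2 : (e * a) * e = e * a := by
    rw [hae2, mul_assoc, hxke]
  have hae : a * e = e * a := by
    calc a * e = e * (a * e) := claim1.symm
      _ = (e * a) * e := (mul_assoc e a e).symm
      _ = e * a := claim2
  have cae : Commute a e := hae
  have hbxe : b * (x * e) = e := by
    rw [← mul_assoc, ← h1, ← he, hee]
  have hxeb : (x * e) * b = e := by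
    rw [mul_assoc, heb, ← he]
  have c_ae_xe : Commute (a * e) (x * e) :=
    Commute.mul_left (cax.mul_right cae) (ce_x.mul_right (Commute.refl e))
  have hete : (a * e) * e = a * e := by rw [mul_assoc, hee]
  have key : b * (a * e) = (a * e) * b := by
    calc b * (a * e) = b * ((a * e) * e) := by rw [hete]
      _ = b * ((a * e) * ((x * e) * b)) := by rw [hxeb]
      _ = b * (((a * e) * (x * e)) * b) := by rw [mul_assoc (a * e) (x * e) b]
      _ = b * (((x * e) * (a * e)) * b) := by rw [c_ae_xe.eq]
      _ = (b * (x * e)) * ((a * e) * b) := by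
          rw [mul_assoc (x * e) (a * e) b, ← mul_assoc b (x * e)]
      _ = e * ((a * e) * b) := by rw [hbxe]
      _ = (e * (a * e)) * b := (mul_assoc e (a * e) b).symm
      _ = (a * e) * b := by rw [claim1]
  calc a * b = a * (e * b) := by rw [heb]
    _ = (a * e) * b := (mul_assoc a e b).symm
    _ = b * (a * e) := key.symm
    _ = b * (e * a) := by rw [hae]
    _ = (b * e) * a := (mul_assoc b e a).symm
    _ = b * a := by rw [hbe]

theorem stmt7 (a : R) (h : IsDrazinInvertible (a - a ^ 2)) :
    IsDrazinInvertible a := by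
  obtain ⟨b, h1, h2, k, hk, h3⟩ := h
  have hab : a * b = b * a := ab_comm a b k hk h1 h2 h3
  have hcomm : ∀ x ∈ ({a, b} : Set R), ∀ y ∈ ({a, b} : Set R), x * y = y * x := by
    rintro x (rfl | rfl) y (rfl | rfl)
    · rfl
    · exact hab
    · exact hab.symm
    · rfl
  letI : CommRing (Subring.closure ({a, b} : Set R)) :=
    Subring.closureCommRingOfComm hcomm
  have haS : a ∈ Subring.closure ({a, b} : Set R) := Subring.subset_closure (by left; rfl)
  have hbS : b ∈ Subring.closure ({a, b} : Set R) := Subring.subset_closure (by right; rfl)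
  obtain ⟨d, hd1, hd2⟩ := comm_core (⟨a, haS⟩ : Subring.closure ({a, b} : Set R)) ⟨b, hbS⟩ k hk
    (Subtype.ext h2) (Subtype.ext h3)
  exact ⟨(d : R), (congrArg Subtype.val (mul_comm ⟨a, haS⟩ d) : _),
    (congrArg Subtype.val hd1 : _), k, hk, (congrArg Subtype.val hd2 : _)⟩
end

section
/- If a is an element of a ring R such that a + a^2 is Drazin invertible, then a is Drazin invertible. -/
variable {R : Type*} [Ring R]

private lemma drz_pow (x y : R) (hc : x * y = y * x) (h2 : y * x * y = y) :
    ∀ j : ℕ, y ^ (j + 1) * x ^ j = y := by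
  intro j
  induction j with
  | zero => simp
  | succ n ih =>
    have e : y ^ (n + 2) * x ^ (n + 1) = y * (y ^ (n + 1) * x ^ n) * x := by
      rw [pow_succ' y, pow_succ x]; noncomm_ring
    rw [e, ih, mul_assoc, ← hc, ← mul_assoc, h2]

private lemma drz_dcomm (x y w : R) (hc : x * y = y * x) (h2 : y * x * y = y)
    (k : ℕ) (h3 : x ^ k = x ^ (k + 1) * y) (hw : x * w = w * x) : y * w = w * y := by
  have hcxy : Commute x y := hc
  have hcxw : Commute x w := hw
  have h1 : y ^ (k + 1) * x ^ k = y := drz_pow x y hc h2 k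
  have h1' : x ^ k * y ^ (k + 1) = y := by
    rw [(hcxy.pow_pow k (k + 1)).eq, h1]
  have hE : (y * x) * (y * x) = y * x := by
    rw [← mul_assoc, mul_assoc y x y, ← mul_assoc y x y, h2]
  have hE' : (x * y) * (x * y) = x * y := by
    rw [mul_assoc, ← mul_assoc y x y, h2]
  have hE1 : y ^ (k + 1) * x ^ (k + 1) = y * x := by
    rw [← hcxy.symm.mul_pow]
    exact IsIdempotentElem.pow_succ_eq k hE
  have hE2 : x ^ (k + 1) * y ^ (k + 1) = x * y := by
    rw [← hcxy.mul_pow]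
    exact IsIdempotentElem.pow_succ_eq k hE'
  have hxk : y * x ^ (k + 1) = x ^ k := by
    rw [← (hcxy.pow_left (k + 1)).eq, ← h3]
  have hA : y * w = (y * x) * (w * y) := by
    calc y * w = (y ^ (k + 1) * x ^ k) * w := by rw [h1]
      _ = y ^ (k + 1) * (w * x ^ k) := by rw [mul_assoc, (hcxw.pow_left k).eq]
      _ = y ^ (k + 1) * (w * (x ^ (k + 1) * y)) := by rw [← h3]
      _ = y ^ (k + 1) * (x ^ (k + 1) * (w * y)) := by
          rw [← mul_assoc w, ← (hcxw.pow_left (k + 1)).eq, mul_assoc]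
      _ = (y ^ (k + 1) * x ^ (k + 1)) * (w * y) := by rw [mul_assoc]
      _ = (y * x) * (w * y) := by rw [hE1]
  have hB : w * y = (y * w) * (x * y) := by
    calc w * y = w * (x ^ k * y ^ (k + 1)) := by rw [h1']
      _ = (w * x ^ k) * y ^ (k + 1) := by rw [mul_assoc]
      _ = (x ^ k * w) * y ^ (k + 1) := by rw [(hcxw.pow_left k).eq]
      _ = ((y * x ^ (k + 1)) * w) * y ^ (k + 1) := by rw [hxk]
      _ = y * ((w * x ^ (k + 1)) * y ^ (k + 1)) := by
          rw [mul_assoc y, ← (hcxw.pow_left (k + 1)).eq, mul_assoc]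
      _ = y * (w * (x ^ (k + 1) * y ^ (k + 1))) := by rw [mul_assoc w]
      _ = y * (w * (x * y)) := by rw [hE2]
      _ = (y * w) * (x * y) := by rw [mul_assoc]
  calc y * w = (y * x) * (w * y) := hA
    _ = (y * x) * ((y * w) * (x * y)) := by rw [← hB]
    _ = ((y * x * y) * w) * (x * y) := by simp only [mul_assoc]
    _ = (y * w) * (x * y) := by rw [h2]
    _ = w * y := hB.symm

private lemma drz_spr (a c : R) (hc : a * c = c * a) (k : ℕ) (hk : 0 < k)
    (h : a ^ k = a ^ (k + 1) * c) : IsDrazinInverse a (a ^ k * c ^ (k + 1)) := by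
  have hac : Commute a c := hc
  have hj : ∀ j : ℕ, a ^ k = a ^ (k + j) * c ^ j := by
    intro j
    induction j with
    | zero => simp
    | succ n ih =>
      have e : a ^ (k + (n + 1)) * c ^ (n + 1) = (a ^ (k + n) * c ^ n) * (a * c) := by
        rw [← Nat.add_assoc, pow_succ a, pow_succ c,
          mul_assoc (a ^ (k + n)) a, ← mul_assoc a (c ^ n) c, (hac.pow_right n).eq,
          mul_assoc (c ^ n) a c, ← mul_assoc]
      rw [e, ← ih, ← mul_assoc, ← pow_succ, ← h]
  have hba : (a ^ k * c ^ (k + 1)) * a = a ^ (k + 1) * c ^ (k + 1) := by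
    rw [mul_assoc, ← (hac.pow_right (k + 1)).eq, ← mul_assoc, ← pow_succ]
  have hab : a * (a ^ k * c ^ (k + 1)) = a ^ (k + 1) * c ^ (k + 1) := by
    rw [← mul_assoc, ← pow_succ']
  refine ⟨hab.trans hba.symm, ?_, k, hk, ?_⟩
  · calc (a ^ k * c ^ (k + 1)) * a * (a ^ k * c ^ (k + 1))
        = (a ^ (k + 1) * c ^ (k + 1)) * (a ^ k * c ^ (k + 1)) := by rw [hba]
      _ = a ^ (k + 1) * ((c ^ (k + 1) * a ^ k) * c ^ (k + 1)) := by
          simp only [mul_assoc]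
      _ = a ^ (k + 1) * ((a ^ k * c ^ (k + 1)) * c ^ (k + 1)) := by
          rw [(hac.symm.pow_pow (k + 1) k).eq]
      _ = (a ^ (k + 1) * a ^ k) * (c ^ (k + 1) * c ^ (k + 1)) := by
          simp only [mul_assoc]
      _ = (a ^ (k + (k + 1)) * c ^ (k + 1)) * c ^ (k + 1) := by
          rw [← pow_add, Nat.add_comm (k + 1) k, mul_assoc]
      _ = a ^ k * c ^ (k + 1) := by rw [← hj (k + 1)]
  · rw [← mul_assoc, ← pow_add, Nat.add_comm (k + 1) k]
    exact hj (k + 1)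

private lemma drz_s (a : R) (k : ℕ) :
    ∃ s : R, (1 + a) ^ k = 1 + a * s ∧ a * s = s * a := by
  induction k with
  | zero => exact ⟨0, by simp, by simp⟩
  | succ n ih =>
    obtain ⟨s, hs, hsa⟩ := ih
    refine ⟨1 + s + s * a, ?_, ?_⟩
    · rw [pow_succ, hs]
      calc (1 + a * s) * (1 + a) = 1 + a + a * s + a * s * a := by noncomm_ring
        _ = 1 + a * (1 + s + s * a) := by rw [mul_assoc a s a, ← hsa, ← mul_assoc]; noncomm_ring
    · calc a * (1 + s + s * a) = a + a * s + a * s * a := by noncomm_ring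
        _ = (1 + s + s * a) * a := by rw [hsa]; noncomm_ring

theorem stmt8 (a : R) (h : IsDrazinInvertible (a + a ^ 2)) :
    IsDrazinInvertible a := by
  obtain ⟨y, hc, h2, k, hk, h3⟩ := h
  obtain ⟨m, rfl⟩ : ∃ m, k = m + 1 := ⟨k - 1, (Nat.succ_pred_eq_of_pos hk).symm⟩
  set k := m + 1 with hkdef
  have hax : (a + a ^ 2) * a = a * (a + a ^ 2) := by noncomm_ring
  have hay : y * a = a * y := drz_dcomm (a + a ^ 2) y a hc h2 k h3 hax
  obtain ⟨s, hs, hsa⟩ := drz_s a k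
  have hxfac : (a + a ^ 2) ^ k = a ^ k * (1 + a) ^ k := by
    have h1a : Commute a (1 + a) := (Commute.one_right a).add_right (Commute.refl a)
    have e : a + a ^ 2 = a * (1 + a) := by noncomm_ring
    rw [e, h1a.mul_pow]
  have Cay : Commute a y := hay.symm
  have Cax : Commute a (a + a ^ 2) := hax.symm
  have Ca1a : Commute a (1 + a) := (Commute.one_right a).add_right (Commute.refl a)
  have Cas : Commute a s := hsa
  set c : R := (1 + a) * y + s * ((a + a ^ 2) * y - 1) with hcdef
  have Cac : Commute a c :=
    (Ca1a.mul_right Cay).add_right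
      (Cas.mul_right ((Cax.mul_right Cay).sub_right (Commute.one_right a)))
  have e4 : a ^ k * ((a + a ^ 2) * y) = a ^ (k + 1) * ((1 + a) * y) := by
    have e3 : a * ((a + a ^ 2) * y) = a ^ 2 * ((1 + a) * y) := by
      rw [← mul_assoc, ← mul_assoc]
      congr 1
      noncomm_ring
    calc a ^ (m + 1) * ((a + a ^ 2) * y) = a ^ m * (a * ((a + a ^ 2) * y)) := by
          rw [pow_succ, mul_assoc]
      _ = a ^ m * (a ^ 2 * ((1 + a) * y)) := by rw [e3]
      _ = (a ^ m * a ^ 2) * ((1 + a) * y) := by rw [mul_assoc]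
      _ = a ^ (k + 1) * ((1 + a) * y) := by rw [← pow_add]
  have e2 : (a ^ k + a ^ (k + 1) * s) * ((a + a ^ 2) * y) = a ^ k + a ^ (k + 1) * s := by
    have h5 : a ^ k + a ^ (k + 1) * s = a ^ k * (1 + a) ^ k := by
      rw [hs, mul_add, mul_one, ← mul_assoc, ← pow_succ]
    rw [h5, ← hxfac, ← mul_assoc, ← pow_succ]
    exact h3.symm
  have key : a ^ k = a ^ (k + 1) * c := by
    calc a ^ k = (a ^ k + a ^ (k + 1) * s) - a ^ (k + 1) * s := (add_sub_cancel_right _ _).symm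
      _ = (a ^ k + a ^ (k + 1) * s) * ((a + a ^ 2) * y) - a ^ (k + 1) * s := by rw [e2]
      _ = a ^ k * ((a + a ^ 2) * y) + a ^ (k + 1) * (s * ((a + a ^ 2) * y))
            - a ^ (k + 1) * s := by simp only [add_mul, mul_assoc]
      _ = a ^ (k + 1) * ((1 + a) * y) + a ^ (k + 1) * (s * ((a + a ^ 2) * y))
            - a ^ (k + 1) * s := by rw [e4]
      _ = a ^ (k + 1) * c := by rw [hcdef]; simp only [mul_add, mul_sub, mul_one, mul_assoc, add_sub_assoc]
  exact ⟨a ^ k * c ^ (k + 1), drz_spr a c Cac.eq k hk key⟩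
end

section
/- Let p, q be idempotents in a ring R. Then 1 - pq is Drazin invertible if and only if 1 - pqp is Drazin invertible. -/
set_option maxHeartbeats 1000000

variable {R : Type*} [Ring R]

private lemma jac (a b : R) (h : IsDrazinInvertible (1 - a * b)) :
    IsDrazinInvertible (1 - b * a) := by
  obtain ⟨c, hc1, hc2, k, hk, hc3⟩ := h
  obtain ⟨α, hα⟩ : ∃ x : R, x = 1 - a * b := ⟨_, rfl⟩
  rw [← hα] at hc1 hc2 hc3
  have hab : a * b = 1 - α := by rw [hα]; noncomm_ring
  obtain ⟨s, hs⟩ : ∃ x : R, x = ∑ i ∈ Finset.range k, α ^ i := ⟨_, rfl⟩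
  obtain ⟨e, he⟩ : ∃ x : R, x = 1 - α * c := ⟨_, rfl⟩
  obtain ⟨w, hw⟩ : ∃ x : R, x = c - s * e := ⟨_, rfl⟩
  have hcα : Commute α c := hc1
  have hsα : Commute α s := hs ▸ Commute.sum_right _ _ _ (fun i _ => (Commute.refl α).pow_right i)
  have hsc : Commute c s := hs ▸ Commute.sum_right _ _ _ (fun i _ => hcα.symm.pow_right i)
  have heα : Commute α e :=
    he ▸ ((Commute.one_right α).sub_right ((Commute.refl α).mul_right hcα))
  have hse : Commute s e := he ▸ ((Commute.one_right s).sub_right (hsα.symm.mul_right hsc.symm))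
  have hwα : Commute α w := hw ▸ (hcα.sub_right (hsα.mul_right heα))
  have hαcc : α * (c * c) = c := by rw [← mul_assoc, hc1]; exact hc2
  have hce : c * e = 0 := by
    have h1 : c * e = c - c * α * c := by rw [he]; noncomm_ring
    rw [h1, hc2, sub_self]
  have hec : e * c = 0 := by
    have h1 : e * c = c - α * (c * c) := by rw [he]; noncomm_ring
    rw [h1, hαcc, sub_self]
  have hek : α ^ k * e = 0 := by
    have h1 : α ^ k * e = α ^ k - α ^ (k + 1) * c := by rw [he, pow_succ]; noncomm_ring
    rw [h1, ← hc3, sub_self]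
  have hee : e * e = e := by
    have h1 : e * e = e - α * (c * e) := by nth_rewrite 1 [he]; noncomm_ring
    rw [h1, hce, mul_zero, sub_zero]
  have hgeo : (1 - α) * s = 1 - α ^ k := by
    have h2 := geom_sum_mul α k
    rw [← hs] at h2
    have hcm : (1 - α) * s = s * (1 - α) := ((Commute.one_left s).sub_left hsα).eq
    have h3 : s * (1 - α) = -(s * (α - 1)) := by noncomm_ring
    rw [hcm, h3, h2]; noncomm_ring
  have h1w : 1 - α * w = (1 + α * s) * e := by rw [hw, he]; noncomm_ring
  have h2w : e * (1 + (1 - α) * w) = α ^ k * e := by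
    have heA : e * (1 - α) = (1 - α) * e := ((Commute.one_left e).sub_left heα).eq.symm
    have hew : e * w = -(s * e) := by
      have h1 : e * w = e * c - e * s * e := by rw [hw]; noncomm_ring
      rw [h1, hec, ← hse.eq, mul_assoc, hee, zero_sub]
    have h2 : e * (1 + (1 - α) * w) = e + e * (1 - α) * w := by noncomm_ring
    rw [h2, heA, mul_assoc, hew]
    have h4 : e + (1 - α) * -(s * e) = e - (1 - α) * s * e := by noncomm_ring
    rw [h4, hgeo]; noncomm_ring
  have hP : (1 - α * w) * (1 + (1 - α) * w) = 0 := by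
    rw [h1w, mul_assoc, h2w, hek, mul_zero]
  have hwα' : ∀ x : R, w * (α * x) = α * (w * x) := fun x => by
    rw [← mul_assoc, ← hwα.eq, mul_assoc]
  have hwα0 : w * α = α * w := hwα.eq.symm
  have hM : (1 : R) + w - α * w - α * w - α * (w * w) + α * (α * (w * w)) = 0 := by
    have e1 : (1 - α * w) * (1 + (1 - α) * w)
        = 1 + w - α * w - α * w - α * (w * w) + (α * w) * (α * w) := by noncomm_ring
    have e2 : (α * w) * (α * w) = α * (α * (w * w)) := by
      rw [mul_assoc, hwα' w]
    rw [e1, e2] at hP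
    exact hP
  refine ⟨1 + b * w * a, ?_, ?_, k, hk, ?_⟩
  · -- commutativity
    have habw : a * b * w = w * (a * b) := by
      rw [hab]; exact ((Commute.one_left w).sub_left hwα).eq
    calc (1 - b * a) * (1 + b * w * a)
        = 1 + b * w * a - b * a - b * (a * b * w) * a := by noncomm_ring
      _ = 1 + b * w * a - b * a - b * (w * (a * b)) * a := by rw [habw]
      _ = (1 + b * w * a) * (1 - b * a) := by noncomm_ring
  · -- d β d = d
    have hB : (-1 + w - w * (1 - α) - (1 - α) * w + w * ((1 - α) * w)
        - w * ((1 - α) * ((1 - α) * w))) = 0 := by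
      have e3 : (-1 + w - w * (1 - α) - (1 - α) * w + w * ((1 - α) * w)
          - w * ((1 - α) * ((1 - α) * w)))
          = -(1 + w - α * w - α * w - α * (w * w) + α * (α * (w * w)))
            + (w * α - α * w) + (w * (α * w) - α * (w * w))
            + (α * (α * (w * w)) - w * (α * (α * w))) := by
        noncomm_ring
      rw [e3, hM]
      simp only [hwα', hwα0]
      noncomm_ring
    calc (1 + b * w * a) * (1 - b * a) * (1 + b * w * a)
        = (1 + b * w * a) + b * (-1 + w - w * (a * b) - (a * b) * w + w * ((a * b) * w)
            - w * ((a * b) * ((a * b) * w))) * a := by noncomm_ring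
      _ = (1 + b * w * a) + b * (-1 + w - w * (1 - α) - (1 - α) * w + w * ((1 - α) * w)
            - w * ((1 - α) * ((1 - α) * w))) * a := by rw [hab]
      _ = 1 + b * w * a := by rw [hB, mul_zero, zero_mul, add_zero]
  · -- power condition
    have hβb : ∀ n : ℕ, (1 - b * a) ^ n * b = b * α ^ n := by
      intro n
      induction n with
      | zero => simp
      | succ n ih =>
        have hstep : (1 - b * a) * b = b * α := by rw [hα]; noncomm_ring
        calc (1 - b * a) ^ (n + 1) * b = (1 - b * a) ^ n * ((1 - b * a) * b) := by
              rw [pow_succ, mul_assoc]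
          _ = (1 - b * a) ^ n * b * α := by rw [hstep, ← mul_assoc]
          _ = b * α ^ n * α := by rw [ih]
          _ = b * α ^ (n + 1) := by rw [mul_assoc, ← pow_succ]
    have hαk1w : α ^ (k + 1) * w = α ^ k := by
      have h5 : α ^ (k + 1) * (s * e) = 0 := by
        rw [← mul_assoc, (hsα.pow_left (k + 1)).eq, mul_assoc, pow_succ', mul_assoc, hek,
          mul_zero, mul_zero]
      have h6 : α ^ (k + 1) * w = α ^ (k + 1) * c - α ^ (k + 1) * (s * e) := by
        rw [hw]; noncomm_ring
      rw [h6, h5, sub_zero, ← hc3]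
    have hend : (1 - b * a) ^ k = (1 - b * a) ^ (k + 1) + b * α ^ k * a := by
      calc (1 - b * a) ^ k = (1 - b * a) ^ (k + 1) + (1 - b * a) ^ k * b * a := by
            rw [pow_succ]; noncomm_ring
        _ = (1 - b * a) ^ (k + 1) + b * α ^ k * a := by rw [hβb k]
    calc (1 - b * a) ^ k = (1 - b * a) ^ (k + 1) + b * α ^ k * a := hend
      _ = (1 - b * a) ^ (k + 1) + b * (α ^ (k + 1) * w) * a := by rw [hαk1w]
      _ = (1 - b * a) ^ (k + 1) + (1 - b * a) ^ (k + 1) * b * (w * a) := by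
            rw [hβb (k + 1)]; noncomm_ring
      _ = (1 - b * a) ^ (k + 1) * (1 + b * w * a) := by noncomm_ring

theorem stmt9 (p q : R) (hp : p ^ 2 = p) (hq : q ^ 2 = q) :
    IsDrazinInvertible (1 - p * q) ↔ IsDrazinInvertible (1 - p * q * p) := by
  have hpp : p * p = p := by rw [← sq, hp]
  constructor
  · intro h
    have h1 : IsDrazinInvertible (1 - q * p) := jac p q h
    have h2 : IsDrazinInvertible (1 - (q * p) * p) := by
      rwa [mul_assoc, hpp]
    have h3 := jac (q * p) p h2
    rwa [← mul_assoc] at h3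
  · intro h
    have h1 : IsDrazinInvertible (1 - p * (q * p)) := by rwa [← mul_assoc]
    have h2 := jac p (q * p) h1
    have h3 : IsDrazinInvertible (1 - q * p) := by rwa [mul_assoc, hpp] at h2
    exact jac q p h3
end

section
/- Let p, q be idempotents in a ring R. Then 1 - pqp is Drazin invertible if and only if p - pqp is Drazin invertible. -/
variable {R : Type*} [Ring R]

/-- Any element commuting with `a` commutes with a Drazin inverse of `a`. -/
lemma drazin_comm {a y x : R} (h : IsDrazinInverse a y) (hx : x * a = a * x) :
    x * y = y * x := by
  obtain ⟨h1, h2, k, hk, h3⟩ := h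
  have hcya : Commute y a := h1.symm
  have hcxa : Commute x a := hx
  have hey : a * y * y = y := by rw [h1, h2]
  have hye : y * (a * y) = y := by rw [← mul_assoc, h2]
  have hake : a ^ k * (a * y) = a ^ k := by
    rw [← mul_assoc, ← pow_succ, ← h3]
  have hcae : Commute (a * y) a := by
    show a * y * a = a * (a * y)
    rw [h1, ← mul_assoc, h1]
  have heak : (a * y) * a ^ k = a ^ k := by
    rw [(hcae.pow_right k).eq, hake]
  have hepow : ∀ n : ℕ, 0 < n → (a * y) ^ n = a * y := by
    intro n hn
    induction n with
    | zero => exact absurd hn (lt_irrefl 0)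
    | succ m ih =>
      rcases Nat.eq_zero_or_pos m with h0 | h0
      · subst h0; simp
      · rw [pow_succ, ih h0, mul_assoc, ← mul_assoc y a y, h2]
  have he1 : a * y = y ^ k * a ^ k := by
    rw [← hcya.mul_pow, ← h1, hepow k hk]
  have he2 : a * y = a ^ k * y ^ k := by
    rw [← hcya.symm.mul_pow, hepow k hk]
  have hxak : x * a ^ k = a ^ k * x := (hcxa.pow_right k).eq
  have e1 : a * y * x = y ^ k * x * a ^ k := by
    rw [he1, mul_assoc, ← hxak, ← mul_assoc]
  have hA : a * y * x * (a * y) = a * y * x := by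
    rw [e1, mul_assoc, hake]
  have e2 : x * (a * y) = a ^ k * (x * y ^ k) := by
    rw [he2, ← mul_assoc, hxak, mul_assoc]
  have hB : a * y * (x * (a * y)) = x * (a * y) := by
    rw [e2, ← mul_assoc, heak]
  have hxe : x * (a * y) = a * y * x := by
    rw [← hB, ← mul_assoc, hA]
  symm
  calc y * x = (y * (a * y)) * x := by rw [hye]
    _ = y * ((a * y) * x) := by rw [mul_assoc]
    _ = y * (x * (a * y)) := by rw [← hxe]
    _ = y * x * (a * y) := by rw [← mul_assoc]
    _ = y * x * a * y := by rw [← mul_assoc]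
    _ = y * (x * a) * y := by rw [mul_assoc y x a]
    _ = y * (a * x) * y := by rw [hx]
    _ = y * a * x * y := by rw [← mul_assoc y a x]
    _ = a * y * x * y := by rw [← h1]
    _ = x * (a * y) * y := by rw [← hxe]
    _ = x * (a * y * y) := by rw [mul_assoc]
    _ = x * y := by rw [hey]

lemma idem_pow {p : R} (hp : p * p = p) : ∀ {k : ℕ}, 0 < k → p ^ k = p := by
  intro k hk
  induction k with
  | zero => exact absurd hk (lt_irrefl 0)
  | succ n ih =>
    rcases Nat.eq_zero_or_pos n with h0 | h0
    · subst h0; simp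
    · rw [pow_succ, ih h0, hp]

lemma drazin_corner {a y p : R} (h : IsDrazinInverse a y) (hp : p * p = p)
    (hpa : p * a = a * p) : IsDrazinInverse (p * a) (p * y) := by
  have hpy : p * y = y * p := drazin_comm h hpa
  obtain ⟨h1, h2, k, hk, h3⟩ := h
  have cpa : Commute p a := hpa
  have hya : y * a = a * y := h1.symm
  have hey : a * y * y = y := by rw [h1, h2]
  have rpa : ∀ z : R, p * (a * z) = a * (p * z) := fun z => by
    rw [← mul_assoc, hpa, mul_assoc]
  have rpy : ∀ z : R, p * (y * z) = y * (p * z) := fun z => by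
    rw [← mul_assoc, hpy, mul_assoc]
  have rya : ∀ z : R, y * (a * z) = a * (y * z) := fun z => by
    rw [← mul_assoc, hya, mul_assoc]
  have rpp : ∀ z : R, p * (p * z) = p * z := fun z => by
    rw [← mul_assoc, hp]
  have rayy : ∀ z : R, a * (y * (y * z)) = y * z := fun z => by
    rw [← mul_assoc, ← mul_assoc, hey]
  have hayy : a * (y * y) = y := by rw [← mul_assoc, hey]
  refine ⟨?_, ?_, k, hk, ?_⟩
  · simp only [mul_assoc, rpa, rpy, rya, rpp, hpa, hpy, hya]
  · simp only [mul_assoc, rpa, rpy, rya, rpp, hpa, hpy, hya, rayy, hayy, hp]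
  · rw [cpa.mul_pow, cpa.mul_pow, idem_pow hp hk, idem_pow hp (Nat.succ_pos k)]
    have cpan : p * a ^ (k + 1) = a ^ (k + 1) * p := (cpa.pow_right _).eq
    rw [mul_assoc p (a ^ (k + 1)) (p * y), ← mul_assoc (a ^ (k + 1)) p y,
      ← cpan, mul_assoc p (a ^ (k + 1)) y, rpp, ← h3]

lemma drazin_ext {b c e : R} (h : IsDrazinInverse b c) (he : e * e = e)
    (heb : e * b = 0) (hbe : b * e = 0) :
    IsDrazinInverse (e + b) (e + c) := by
  have hec : e * c = c * e := drazin_comm h (by rw [heb, hbe])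
  obtain ⟨h1, h2, k, hk, h3⟩ := h
  have hec0 : e * c = 0 := by
    rw [← h2, ← mul_assoc, ← mul_assoc, mul_assoc e c b, ← h1, ← mul_assoc,
      heb, zero_mul, zero_mul]
  have hce0 : c * e = 0 := by rw [← hec, hec0]
  have hcbe : c * b * e = 0 := by rw [mul_assoc, hbe, mul_zero]
  have hbne : ∀ n : ℕ, b ^ (n + 1) * e = 0 := fun n => by
    rw [pow_succ, mul_assoc, hbe, mul_zero]
  have hebn : ∀ n : ℕ, e * b ^ (n + 1) = 0 := fun n => by
    rw [pow_succ', ← mul_assoc, heb, zero_mul]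
  have hpow : ∀ n : ℕ, 0 < n → (e + b) ^ n = e + b ^ n := by
    intro n hn
    induction n with
    | zero => exact absurd hn (lt_irrefl 0)
    | succ m ih =>
      rcases Nat.eq_zero_or_pos m with h0 | h0
      · subst h0; simp
      · obtain ⟨m', rfl⟩ := Nat.exists_eq_succ_of_ne_zero h0.ne'
        rw [pow_succ, ih h0, add_mul, mul_add, mul_add, he, heb, hbne,
          ← pow_succ]
        abel
  refine ⟨?_, ?_, k, hk, ?_⟩
  · simp only [mul_add, add_mul, ← mul_assoc, he, heb, hbe, hec0, hce0, h1,
      zero_mul, mul_zero, add_zero, zero_add]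
  · simp only [mul_add, add_mul, ← mul_assoc, he, heb, hbe, hec0, hce0, h1, h2,
      hcbe, zero_mul, mul_zero, add_zero, zero_add]
  · rw [hpow k hk, hpow (k + 1) (Nat.succ_pos k)]
    simp only [mul_add, add_mul, ← mul_assoc, he, hec0, hbne, hebn, ← h3,
      zero_mul, mul_zero, add_zero, zero_add]

theorem stmt11 (p q : R) (hp : p ^ 2 = p) (hq : q ^ 2 = q) :
    IsDrazinInvertible (1 - p * q * p) ↔ IsDrazinInvertible (p - p * q * p) := by
  have hpp : p * p = p := by rw [← pow_two, hp]
  have hpqp : p * (p * q * p) = p * q * p := by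
    rw [← mul_assoc, ← mul_assoc, hpp]
  have hqpp : (p * q * p) * p = p * q * p := by rw [mul_assoc, hpp]
  have hpa : p * (1 - p * q * p) = (1 - p * q * p) * p := by
    rw [mul_sub, mul_one, hpqp, sub_mul, one_mul, hqpp]
  have hb : p * (1 - p * q * p) = p - p * q * p := by
    rw [mul_sub, mul_one, hpqp]
  constructor
  · rintro ⟨y, hy⟩
    exact ⟨p * y, hb ▸ drazin_corner hy hpp hpa⟩
  · rintro ⟨c, hc⟩
    have he : (1 - p) * (1 - p) = 1 - p := by
      rw [mul_sub, mul_one, sub_mul, one_mul, hpp]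
      simp
    have heb : (1 - p) * (p - p * q * p) = 0 := by
      rw [sub_mul, one_mul, mul_sub, hpp, hpqp]
      simp
    have hbe : (p - p * q * p) * (1 - p) = 0 := by
      rw [mul_sub, mul_one, sub_mul, hpp, hqpp]
      simp
    have hsum : (1 - p) + (p - p * q * p) = 1 - p * q * p := by abel
    exact ⟨_, hsum ▸ drazin_ext hc he heb hbe⟩
end

section
/- Let p, q be idempotents in a ring R. Then p - pq is Drazin invertible if and only if p - pqp is Drazin invertible. -/
variable {R : Type*} [Ring R]

lemma pow_swap' (u v : R) : ∀ n : ℕ, (v*u)^(n+1) = v*((u*v)^n)*u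
  | 0 => by simp
  | n+1 => by
    rw [pow_succ, pow_swap' u v n, pow_succ]
    simp only [mul_assoc]

lemma cline (u v c : R) (h : IsDrazinInverse (u*v) c) :
    IsDrazinInverse (v*u) (v*(c*c)*u) := by
  obtain ⟨h1, h2, k, hk, h3⟩ := h
  have hac0 : u*v*(c*c) = c := by
    rw [← mul_assoc, h1]; exact h2
  have hca0 : c*c*(u*v) = c := by
    rw [mul_assoc, ← h1, ← mul_assoc]; exact h2
  have hac : ∀ x : R, u*(v*(c*(c*x))) = c*x := by
    intro x
    have := congrArg (· * x) hac0
    simpa [mul_assoc] using this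
  have hca : ∀ x : R, c*(c*(u*(v*x))) = c*x := by
    intro x
    have := congrArg (· * x) hca0
    simpa [mul_assoc] using this
  have hp1 : (u*v)^(k+2)*c = (u*v)^(k+1) := by
    have : (u*v)^(k+1+1)*c = (u*v)^(k+1) := by
      rw [pow_succ, mul_assoc, h1, ← mul_assoc, ← h3, ← pow_succ]
    exact this
  have e1 : (v*u)*(v*(c*c)*u) = v*(c*u) := by
    simp only [mul_assoc]; rw [hac u]
  have e2 : (v*(c*c)*u)*(v*u) = v*(c*u) := by
    simp only [mul_assoc]; rw [hca u]
  refine ⟨e1.trans e2.symm, ?_, k+2, by omega, ?_⟩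
  · rw [e2]
    simp only [mul_assoc]
    rw [hac u]
  · show (v*u)^(k+1+1) = (v*u)^(k+2+1)*(v*(c*c)*u)
    rw [pow_swap' u v (k+1), pow_swap' u v (k+2)]
    simp only [mul_assoc]
    rw [hac u, ← mul_assoc ((u*v)^(k+2)) c u, hp1]

theorem stmt12 (p q : R) (hp : p ^ 2 = p) (hq : q ^ 2 = q) :
    IsDrazinInvertible (p - p * q) ↔ IsDrazinInvertible (p - p * q * p) := by
  have hpp : p * p = p := by rw [← sq, hp]
  have key1 : p * (p - p * q) = p - p * q := by
    rw [mul_sub, ← mul_assoc, hpp]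
  have key2 : (p - p * q) * p = p - p * q * p := by
    rw [sub_mul, hpp]
  constructor
  · rintro ⟨c, hc⟩
    have h := cline p (p - p * q) c (by rwa [key1])
    rw [key2] at h
    exact ⟨_, h⟩
  · rintro ⟨c, hc⟩
    have h := cline (p - p * q) p c (by rwa [key2])
    rw [key1] at h
    exact ⟨_, h⟩
end

section
/- Let p, q be idempotents in a ring R. Then 1 - pq is Drazin invertible if and only if q - qp is Drazin invertible. -/
variable {R : Type*} [Ring R]

namespace Stmt13Aux

lemma iter_left (x t : R) (k : ℕ) (h : x ^ k = t * x ^ (k+1)) :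
    ∀ j : ℕ, x ^ k = t ^ j * x ^ (k + j) := by
  intro j
  induction j with
  | zero => simp
  | succ j ih =>
      calc x ^ k = t * x ^ (k+1) := h
        _ = t * (x ^ k * x) := by rw [pow_succ]
        _ = t * ((t ^ j * x ^ (k + j)) * x) := by rw [← ih]
        _ = (t * t ^ j) * (x ^ (k + j) * x) := by rw [mul_assoc, mul_assoc]
        _ = t ^ (j+1) * x ^ (k + (j+1)) := by rw [← pow_succ', ← pow_succ, Nat.add_assoc]

lemma iter_right (x s : R) (k : ℕ) (h : x ^ k = x ^ (k+1) * s) :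
    ∀ j : ℕ, x ^ k = x ^ (k + j) * s ^ j := by
  intro j
  induction j with
  | zero => simp
  | succ j ih =>
      calc x ^ k = x ^ (k+1) * s := h
        _ = (x * x ^ k) * s := by rw [pow_succ']
        _ = (x * (x ^ (k + j) * s ^ j)) * s := by rw [← ih]
        _ = (x * x ^ (k + j)) * (s ^ j * s) := by rw [mul_assoc, mul_assoc, mul_assoc]
        _ = x ^ (k + (j+1)) * s ^ (j+1) := by rw [← pow_succ', ← pow_succ, Nat.add_assoc]

lemma grp_core (X α β w : R) (hXa : X = α * (X * X)) (hXb : X = X * X * β)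
    (hw : w * X = X * w) :
    ∃ z : R, X * z = z * X ∧ X * z * z = z ∧ X * (X * z) = X ∧ w * z = z * w := by
  have hyX : (α * X) * X = X := by rw [mul_assoc, ← hXa]
  have h2 : X * (X * β) = X := by rw [← mul_assoc, ← hXb]
  have hyb : α * X = X * β := by
    conv_lhs => rw [hXb]
    rw [← mul_assoc, ← hXa]
  have hXy : X * (α * X) = X := by rw [hyb]; exact h2
  have hyy : (α * X) * (α * X) = α * X := by rw [mul_assoc, hXy]
  have hz2 : α * (α * X) = (α * X) * β := by
    conv_lhs => rw [hyb]
    rw [← mul_assoc]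
  have hzX : (α * (α * X)) * X = α * X := by rw [mul_assoc, hyX]
  have hXz : X * (α * (α * X)) = α * X := by
    rw [hz2, ← mul_assoc, hXy, ← hyb]
  have hzy : (α * (α * X)) * (α * X) = α * (α * X) := by rw [mul_assoc, hyy]
  have hyz : (α * X) * (α * (α * X)) = α * (α * X) := by
    rw [hz2, ← mul_assoc, hyy, ← hz2]
  clear hXa hXb h2 hyb
  generalize hYdef : α * X = Y at hyX hXy hyy hzX hXz hzy hyz
  generalize hZdef : α * Y = Z at hzX hXz hzy hyz
  clear hYdef hZdef
  have e1 : w * Y = X * (w * Z) := by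
    rw [← hXz, ← mul_assoc, hw, mul_assoc]
  have C1 : Y * (w * Y) = w * Y := by
    rw [e1, ← mul_assoc, hyX, ← e1]
  have e2 : Y * w = (Z * w) * X := by
    rw [← hzX, mul_assoc, ← hw, ← mul_assoc]
  have C2 : (Y * w) * Y = Y * w := by
    rw [e2, mul_assoc, hXy, ← e2]
  have hwy : w * Y = Y * w := by
    calc w * Y = Y * (w * Y) := C1.symm
      _ = (Y * w) * Y := by rw [mul_assoc]
      _ = Y * w := C2
  have hwz : w * Z = Z * w := by
    calc w * Z = w * (Y * Z) := by rw [hyz]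
      _ = (w * Y) * Z := by rw [mul_assoc]
      _ = (Y * w) * Z := by rw [hwy]
      _ = Y * (w * Z) := by rw [mul_assoc]
      _ = (Z * X) * (w * Z) := by rw [hzX]
      _ = Z * ((X * w) * Z) := by rw [mul_assoc, mul_assoc]
      _ = Z * ((w * X) * Z) := by rw [hw]
      _ = Z * (w * (X * Z)) := by rw [mul_assoc]
      _ = Z * (w * Y) := by rw [hXz]
      _ = Z * (Y * w) := by rw [hwy]
      _ = (Z * Y) * w := by rw [mul_assoc]
      _ = Z * w := by rw [hzy]
  refine ⟨Z, ?_, ?_, ?_, hwz⟩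
  · rw [hXz, hzX]
  · rw [hXz, hyz]
  · rw [hXz, hXy]

theorem drazin_of_two_sided (x t s : R) (k : ℕ) (hk : 0 < k)
    (h1 : x ^ k = t * x ^ (k+1)) (h2 : x ^ k = x ^ (k+1) * s) :
    IsDrazinInvertible x := by
  have hw : x * x ^ k = x ^ k * x := by rw [← pow_succ', ← pow_succ]
  have hXa : x ^ k = t ^ k * (x ^ k * x ^ k) := by
    have := iter_left x t k h1 k
    rwa [pow_add] at this
  have hXb : x ^ k = x ^ k * x ^ k * s ^ k := by
    have := iter_right x s k h2 k
    rwa [pow_add] at this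
  obtain ⟨z, hc, habs, hXX, hwz⟩ := grp_core (x ^ k) (t ^ k) (s ^ k) x hXa hXb hw
  have hk1 : k - 1 + 1 = k := Nat.succ_pred_eq_of_pos hk
  refine ⟨x ^ (k-1) * z, ?_, ?_, k, hk, ?_⟩
  · calc x * (x ^ (k-1) * z) = (x * x ^ (k-1)) * z := by rw [mul_assoc]
      _ = x ^ k * z := by rw [← pow_succ', hk1]
      _ = x ^ (k-1) * x * z := by rw [← pow_succ, hk1]
      _ = x ^ (k-1) * (x * z) := by rw [mul_assoc]
      _ = x ^ (k-1) * (z * x) := by rw [hwz]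
      _ = (x ^ (k-1) * z) * x := by rw [mul_assoc]
  · have hbx : (x ^ (k-1) * z) * x = x ^ k * z := by
      calc (x ^ (k-1) * z) * x = x ^ (k-1) * (z * x) := by rw [mul_assoc]
        _ = x ^ (k-1) * (x * z) := by rw [hwz]
        _ = (x ^ (k-1) * x) * z := by rw [mul_assoc]
        _ = x ^ k * z := by rw [← pow_succ, hk1]
    have hYx : (x ^ k * z) * x = x * (x ^ k * z) := by
      calc (x ^ k * z) * x = x ^ k * (z * x) := by rw [mul_assoc]
        _ = x ^ k * (x * z) := by rw [hwz]
        _ = (x ^ k * x) * z := by rw [mul_assoc]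
        _ = (x * x ^ k) * z := by rw [hw]
        _ = x * (x ^ k * z) := by rw [mul_assoc]
    have hYpow : (x ^ k * z) * x ^ (k-1) = x ^ (k-1) * (x ^ k * z) :=
      ((Commute.pow_left (hYx.symm : Commute x (x ^ k * z)) (k-1)).symm).eq
    calc (x ^ (k-1) * z) * x * (x ^ (k-1) * z) = (x ^ k * z) * (x ^ (k-1) * z) := by rw [hbx]
      _ = ((x ^ k * z) * x ^ (k-1)) * z := by rw [← mul_assoc]
      _ = (x ^ (k-1) * (x ^ k * z)) * z := by rw [hYpow]
      _ = x ^ (k-1) * ((x ^ k * z) * z) := by rw [mul_assoc]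
      _ = x ^ (k-1) * z := by rw [habs]
  · calc x ^ k = x ^ k * (x ^ k * z) := (hXX).symm
      _ = (x ^ k * x ^ k) * z := by rw [mul_assoc]
      _ = x ^ (k + k) * z := by rw [pow_add]
      _ = x ^ ((k+1) + (k-1)) * z := by rw [show (k+1) + (k-1) = k + k by omega]
      _ = (x ^ (k+1) * x ^ (k-1)) * z := by rw [pow_add]
      _ = x ^ (k+1) * (x ^ (k-1) * z) := by rw [mul_assoc]

lemma pow_shift (x b : R) (k : ℕ) (h : x ^ k = x ^ (k+1) * b) :
    ∀ n : ℕ, k ≤ n → x ^ n = x ^ (n+1) * b := by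
  intro n hn
  obtain ⟨j, rfl⟩ := Nat.exists_eq_add_of_le hn
  calc x ^ (k+j) = x ^ j * x ^ k := by rw [← pow_add, Nat.add_comm k j]
    _ = x ^ j * (x ^ (k+1) * b) := by rw [h]
    _ = (x ^ j * x ^ (k+1)) * b := by rw [mul_assoc]
    _ = x ^ (k+j+1) * b := by rw [← pow_add, show j+(k+1) = k+j+1 by omega]

section ids
variable (p q : R)

lemma base_qa (hq' : q * q = q) : q * (1 - p*q) = (q - q*p) * q := by
  rw [show q * (1 - p*q) = q - q*p*q by noncomm_ring,
      show (q - q*p) * q = q*q - q*p*q by noncomm_ring, hq']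

lemma base_aq : (1 - q*p) * q = q * (1 - p*q) := by noncomm_ring

lemma base_ap : (1 - p*q) * p = p * (1 - q*p) := by noncomm_ring

lemma base_ac (hq' : q * q = q) : (1 - q*p) * (q - q*p) = (q - q*p) * (q - q*p) := by
  rw [show (1 - q*p) * (q - q*p) = q - q*p - q*p*q + q*p*q*p by noncomm_ring,
      show (q - q*p) * (q - q*p) = q*q - q*q*p - q*p*q + q*p*q*p by noncomm_ring, hq']

lemma Iqa (hq' : q * q = q) : ∀ m : ℕ, q * (1 - p*q)^m = (q - q*p)^m * q := by
  intro m
  induction m with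
  | zero => simp
  | succ m ih =>
      calc q * (1 - p*q)^(m+1) = q * ((1 - p*q)^m * (1 - p*q)) := by rw [pow_succ]
        _ = (q * (1 - p*q)^m) * (1 - p*q) := by rw [mul_assoc]
        _ = ((q - q*p)^m * q) * (1 - p*q) := by rw [ih]
        _ = (q - q*p)^m * (q * (1 - p*q)) := by rw [mul_assoc]
        _ = (q - q*p)^m * ((q - q*p) * q) := by rw [base_qa p q hq']
        _ = ((q - q*p)^m * (q - q*p)) * q := by rw [mul_assoc]
        _ = (q - q*p)^(m+1) * q := by rw [pow_succ]

lemma Iap : ∀ m : ℕ, (1 - p*q)^m * p = p * (1 - q*p)^m := by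
  intro m
  induction m with
  | zero => simp
  | succ m ih =>
      calc (1 - p*q)^(m+1) * p = ((1 - p*q) * (1 - p*q)^m) * p := by rw [pow_succ']
        _ = (1 - p*q) * ((1 - p*q)^m * p) := by rw [mul_assoc]
        _ = (1 - p*q) * (p * (1 - q*p)^m) := by rw [ih]
        _ = ((1 - p*q) * p) * (1 - q*p)^m := by rw [mul_assoc]
        _ = (p * (1 - q*p)) * (1 - q*p)^m := by rw [base_ap]
        _ = p * ((1 - q*p) * (1 - q*p)^m) := by rw [mul_assoc]
        _ = p * (1 - q*p)^(m+1) := by rw [pow_succ']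

lemma Iaq : ∀ m : ℕ, (1 - q*p)^m * q = q * (1 - p*q)^m := by
  intro m
  induction m with
  | zero => simp
  | succ m ih =>
      calc (1 - q*p)^(m+1) * q = ((1 - q*p) * (1 - q*p)^m) * q := by rw [pow_succ']
        _ = (1 - q*p) * ((1 - q*p)^m * q) := by rw [mul_assoc]
        _ = (1 - q*p) * (q * (1 - p*q)^m) := by rw [ih]
        _ = ((1 - q*p) * q) * (1 - p*q)^m := by rw [mul_assoc]
        _ = (q * (1 - p*q)) * (1 - p*q)^m := by rw [base_aq]
        _ = q * ((1 - p*q) * (1 - p*q)^m) := by rw [mul_assoc]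
        _ = q * (1 - p*q)^(m+1) := by rw [pow_succ']

lemma Iac (hq' : q * q = q) : ∀ m : ℕ, (1 - q*p)^m * (q - q*p) = (q - q*p)^(m+1) := by
  intro m
  induction m with
  | zero => simp
  | succ m ih =>
      calc (1 - q*p)^(m+1) * (q - q*p) = ((1 - q*p) * (1 - q*p)^m) * (q - q*p) := by rw [pow_succ']
        _ = (1 - q*p) * ((1 - q*p)^m * (q - q*p)) := by rw [mul_assoc]
        _ = (1 - q*p) * (q - q*p)^(m+1) := by rw [ih]
        _ = (1 - q*p) * ((q - q*p) * (q - q*p)^m) := by rw [pow_succ']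
        _ = ((1 - q*p) * (q - q*p)) * (q - q*p)^m := by rw [mul_assoc]
        _ = ((q - q*p) * (q - q*p)) * (q - q*p)^m := by rw [base_ac p q hq']
        _ = (q - q*p) * ((q - q*p) * (q - q*p)^m) := by rw [mul_assoc]
        _ = (q - q*p) * (q - q*p)^(m+1) := by rw [pow_succ']
        _ = (q - q*p)^(m+2) := by rw [← pow_succ']

end ids

end Stmt13Aux

open Stmt13Aux in
theorem stmt13 (p q : R) (hp : p ^ 2 = p) (hq : q ^ 2 = q) :
    IsDrazinInvertible (1 - p * q) ↔ IsDrazinInvertible (q - q * p) := by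
  have hq' : q * q = q := by rw [← pow_two, hq]
  constructor
  · -- 1 - pq Drazin invertible → q - qp Drazin invertible
    rintro ⟨b, hcomm, -, k, hk, hpow⟩
    have hsr : ∀ n, k ≤ n → (1 - p*q)^n = (1 - p*q)^(n+1) * b :=
      pow_shift (1 - p*q) b k hpow
    have hsl : ∀ n, k ≤ n → (1 - p*q)^n = b * (1 - p*q)^(n+1) := by
      intro n hn
      rw [hsr n hn]
      exact (Commute.pow_left (hcomm : Commute (1 - p*q) b) (n+1)).eq
    have hsr2 : ∀ n, k ≤ n → (1 - p*q)^n = (1 - p*q)^(n+1+1) * (b*b) := by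
      intro n hn
      calc (1 - p*q)^n = (1 - p*q)^(n+1) * b := hsr n hn
        _ = ((1 - p*q)^(n+1+1) * b) * b := by rw [← hsr (n+1) (by omega)]
        _ = (1 - p*q)^(n+1+1) * (b*b) := by rw [mul_assoc]
    have hc_eq : ∀ n : ℕ, (q - q*p)^(n+1) = (q * (1 - p*q)^n) * (1-p) := by
      intro n
      calc (q - q*p)^(n+1) = (q - q*p)^n * (q - q*p) := pow_succ _ _
        _ = (q - q*p)^n * (q * (1-p)) := by rw [show q*(1-p) = q - q*p by noncomm_ring]
        _ = ((q - q*p)^n * q) * (1-p) := by rw [mul_assoc]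
        _ = (q * (1 - p*q)^n) * (1-p) := by rw [← Iqa p q hq' n]
    -- right divisibility for c
    have hR : ∀ n, k ≤ n → (q - q*p)^(n+1) = (q - q*p)^(n+1+1) * (q * ((b*b) * (1-p))) := by
      intro n hn
      calc (q - q*p)^(n+1) = (q * (1 - p*q)^n) * (1-p) := hc_eq n
        _ = (q * ((1 - p*q)^(n+1+1) * (b*b))) * (1-p) := by rw [← hsr2 n hn]
        _ = ((q * (1 - p*q)^(n+1+1)) * (b*b)) * (1-p) := by
              rw [← mul_assoc q ((1 - p*q)^(n+1+1)) (b*b)]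
        _ = (((q - q*p)^(n+1+1) * q) * (b*b)) * (1-p) := by rw [Iqa p q hq' (n+1+1)]
        _ = (q - q*p)^(n+1+1) * (q * ((b*b) * (1-p))) := by
              rw [mul_assoc ((q - q*p)^(n+1+1)) q (b*b),
                  mul_assoc ((q - q*p)^(n+1+1)) (q * (b*b)) (1-p),
                  mul_assoc q (b*b) (1-p)]
    -- left divisibility for a' = 1 - qp
    have hLa' : ∀ n, k ≤ n → (1 - q*p)^(n+1) = (1 + q*b*p) * (1 - q*p)^(n+1+1) := by
      intro n hn
      have hmain : (1 - q*p)^(n+1) * (q*p) = (q*b*p) * (1 - q*p)^(n+1+1) := by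
        calc (1 - q*p)^(n+1) * (q*p) = ((1 - q*p)^(n+1) * q) * p := by rw [mul_assoc]
          _ = (q * (1 - p*q)^(n+1)) * p := by rw [Iaq p q (n+1)]
          _ = (q * (b * (1 - p*q)^(n+1+1))) * p := by rw [← hsl (n+1) (by omega)]
          _ = ((q * b) * ((1 - p*q)^(n+1+1) * p)) := by
                rw [← mul_assoc q b ((1 - p*q)^(n+1+1)), mul_assoc (q*b) ((1 - p*q)^(n+1+1)) p]
          _ = (q * b) * (p * (1 - q*p)^(n+1+1)) := by rw [Iap p q (n+1+1)]
          _ = (q*b*p) * (1 - q*p)^(n+1+1) := by rw [← mul_assoc (q*b) p ((1 - q*p)^(n+1+1))]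
      have hstep : (1 - q*p)^(n+1+1) = (1 - q*p)^(n+1) - (1 - q*p)^(n+1) * (q*p) := by
        calc (1 - q*p)^(n+1+1) = (1 - q*p)^(n+1) * (1 - q*p) := pow_succ _ _
          _ = (1 - q*p)^(n+1) - (1 - q*p)^(n+1) * (q*p) := by
                rw [mul_sub ((1 - q*p)^(n+1)) 1 (q*p), mul_one]
      calc (1 - q*p)^(n+1)
          = (1 - q*p)^(n+1+1) + (1 - q*p)^(n+1) * (q*p) := by rw [hstep]; abel
        _ = (1 - q*p)^(n+1+1) + (q*b*p) * (1 - q*p)^(n+1+1) := by rw [hmain]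
        _ = (1 + q*b*p) * (1 - q*p)^(n+1+1) := by rw [add_mul, one_mul]
    -- left divisibility for c
    have hL : (q - q*p)^(k+1+1) = (1 + q*b*p) * (q - q*p)^(k+1+1+1) := by
      calc (q - q*p)^(k+1+1) = (1 - q*p)^(k+1) * (q - q*p) := (Iac p q hq' (k+1)).symm
        _ = ((1 + q*b*p) * (1 - q*p)^(k+1+1)) * (q - q*p) := by rw [← hLa' k le_rfl]
        _ = (1 + q*b*p) * ((1 - q*p)^(k+1+1) * (q - q*p)) := by rw [mul_assoc]
        _ = (1 + q*b*p) * (q - q*p)^(k+1+1+1) := by rw [Iac p q hq' (k+1+1)]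
    exact drazin_of_two_sided (q - q*p) (1 + q*b*p) (q * ((b*b) * (1-p))) (k+1+1)
      (by omega) hL (hR (k+1) (by omega))
  · -- q - qp Drazin invertible → 1 - pq Drazin invertible
    rintro ⟨d, hcomm, -, m, hm, hpow⟩
    have hsr : ∀ n, m ≤ n → (q - q*p)^n = (q - q*p)^(n+1) * d :=
      pow_shift (q - q*p) d m hpow
    have hsl : ∀ n, m ≤ n → (q - q*p)^n = d * (q - q*p)^(n+1) := by
      intro n hn
      rw [hsr n hn]
      exact (Commute.pow_left (hcomm : Commute (q - q*p) d) (n+1)).eq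
    have hsr2 : ∀ n, m ≤ n → (q - q*p)^n = (q - q*p)^(n+1+1) * (d*d) := by
      intro n hn
      calc (q - q*p)^n = (q - q*p)^(n+1) * d := hsr n hn
        _ = ((q - q*p)^(n+1+1) * d) * d := by rw [← hsr (n+1) (by omega)]
        _ = (q - q*p)^(n+1+1) * (d*d) := by rw [mul_assoc]
    have hkey : ∀ n : ℕ, (1 - p*q)^n * (p*q) = p * ((q - q*p)^n * q) := by
      intro n
      calc (1 - p*q)^n * (p*q) = ((1 - p*q)^n * p) * q := by rw [mul_assoc]
        _ = (p * (1 - q*p)^n) * q := by rw [Iap p q n]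
        _ = p * ((1 - q*p)^n * q) := by rw [mul_assoc]
        _ = p * (q * (1 - p*q)^n) := by rw [Iaq p q n]
        _ = p * ((q - q*p)^n * q) := by rw [Iqa p q hq' n]
    have hstep : ∀ n : ℕ, (1 - p*q)^n = (1 - p*q)^(n+1) + (1 - p*q)^n * (p*q) := by
      intro n
      have : (1 - p*q)^(n+1) = (1 - p*q)^n - (1 - p*q)^n * (p*q) := by
        calc (1 - p*q)^(n+1) = (1 - p*q)^n * (1 - p*q) := pow_succ _ _
          _ = (1 - p*q)^n - (1 - p*q)^n * (p*q) := by
                rw [mul_sub ((1 - p*q)^n) 1 (p*q), mul_one]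
      rw [this]; abel
    -- left divisibility for a
    have hL : (1 - p*q)^m = (1 + p*d*q) * (1 - p*q)^(m+1) := by
      have hmain : (1 - p*q)^m * (p*q) = (p*d*q) * (1 - p*q)^(m+1) := by
        calc (1 - p*q)^m * (p*q) = p * ((q - q*p)^m * q) := hkey m
          _ = p * ((d * (q - q*p)^(m+1)) * q) := by rw [← hsl m le_rfl]
          _ = (p * d) * ((q - q*p)^(m+1) * q) := by
                rw [mul_assoc d ((q - q*p)^(m+1)) q, ← mul_assoc p d (((q - q*p)^(m+1)) * q)]
          _ = (p * d) * (q * (1 - p*q)^(m+1)) := by rw [← Iqa p q hq' (m+1)]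
          _ = (p*d*q) * (1 - p*q)^(m+1) := by rw [← mul_assoc (p*d) q ((1 - p*q)^(m+1))]
      calc (1 - p*q)^m = (1 - p*q)^(m+1) + (1 - p*q)^m * (p*q) := hstep m
        _ = (1 - p*q)^(m+1) + (p*d*q) * (1 - p*q)^(m+1) := by rw [hmain]
        _ = (1 + p*d*q) * (1 - p*q)^(m+1) := by rw [add_mul, one_mul]
    -- right divisibility for a
    have hRa : (1 - p*q)^m = (1 - p*q)^(m+1) * (1 + p * ((q - q*p) * ((d*d) * q))) := by
      have hmain : (1 - p*q)^m * (p*q) = (1 - p*q)^(m+1) * (p * ((q - q*p) * ((d*d) * q))) := by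
        calc (1 - p*q)^m * (p*q) = p * ((q - q*p)^m * q) := hkey m
          _ = p * (((q - q*p)^(m+1+1) * (d*d)) * q) := by rw [← hsr2 m le_rfl]
          _ = p * ((((1 - q*p)^(m+1) * (q - q*p)) * (d*d)) * q) := by
                rw [Iac p q hq' (m+1)]
          _ = (p * (1 - q*p)^(m+1)) * ((q - q*p) * ((d*d) * q)) := by
                rw [mul_assoc ((1 - q*p)^(m+1)) (q - q*p) (d*d),
                    mul_assoc ((1 - q*p)^(m+1)) ((q - q*p) * (d*d)) q,
                    mul_assoc (q - q*p) (d*d) q,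
                    ← mul_assoc p ((1 - q*p)^(m+1)) ((q - q*p) * ((d*d) * q))]
          _ = ((1 - p*q)^(m+1) * p) * ((q - q*p) * ((d*d) * q)) := by rw [← Iap p q (m+1)]
          _ = (1 - p*q)^(m+1) * (p * ((q - q*p) * ((d*d) * q))) := by
                rw [mul_assoc ((1 - p*q)^(m+1)) p ((q - q*p) * ((d*d) * q))]
      calc (1 - p*q)^m = (1 - p*q)^(m+1) + (1 - p*q)^m * (p*q) := hstep m
        _ = (1 - p*q)^(m+1) + (1 - p*q)^(m+1) * (p * ((q - q*p) * ((d*d) * q))) := by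
              rw [hmain]
        _ = (1 - p*q)^(m+1) * (1 + p * ((q - q*p) * ((d*d) * q))) := by
              rw [mul_add, mul_one]
    exact drazin_of_two_sided (1 - p*q) (1 + p*d*q) (1 + p * ((q - q*p) * ((d*d) * q))) m hm hL hRa
end

section
/- Let p, q be idempotents in a ring R. Then p - q is Drazin invertible if and only if p + q - pq is Drazin invertible. -/
variable {R : Type*} [Ring R]

lemma drz_pow_ge {a b : R} (hk : a ^ k = a ^ (k + 1) * b) :
    ∀ n, k ≤ n → a ^ n = a ^ (n + 1) * b := by
  intro n hn
  induction n, hn using Nat.le_induction with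
  | base => exact hk
  | succ n hn ih =>
    calc a ^ (n + 1) = a * a ^ n := (pow_succ' a n)
    _ = a * (a ^ (n + 1) * b) := by rw [← ih]
    _ = a ^ (n + 2) * b := by rw [← mul_assoc, ← pow_succ']

lemma drz_idem_pow {e : R} (he : e * e = e) : ∀ n, e ^ (n + 1) = e := by
  intro n
  induction n with
  | zero => simp
  | succ n ih => rw [pow_succ, ih, he]

lemma drz_commutant {a b y : R} (h : IsDrazinInverse a b) (hy : y * a = a * y) :
    y * b = b * y := by
  obtain ⟨hab, hbab, k, hk0, hkp⟩ := h
  have hcab : Commute a b := hab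
  have hcya : Commute y a := hy
  -- b = b*b*a and b = a*b*b
  have hb1 : b = b * b * a := by
    calc b = b * a * b := hbab.symm
    _ = b * (a * b) := by rw [mul_assoc]
    _ = b * (b * a) := by rw [hab]
    _ = b * b * a := by rw [mul_assoc]
  have hb2 : b = a * (b * b) := by
    calc b = b * a * b := hbab.symm
    _ = (a * b) * b := by rw [show b * a = a * b from hab.symm]
    _ = a * (b * b) := by rw [mul_assoc]
  -- b = b^(n+1) * a^n
  have hbn : ∀ n : ℕ, b = b ^ (n + 1) * a ^ n := by
    intro n
    induction n with
    | zero => simp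
    | succ n ih =>
      calc b = b ^ (n + 1) * a ^ n := ih
      _ = b ^ n * b * a ^ n := by rw [pow_succ]
      _ = b ^ n * (b * b * a) * a ^ n := by rw [← hb1]
      _ = b ^ (n + 2) * a ^ (n + 1) := by
        rw [pow_succ, pow_succ, pow_succ']
        noncomm_ring
  -- b = a^n * b^(n+1)
  have hbn' : ∀ n : ℕ, b = a ^ n * b ^ (n + 1) := by
    intro n
    induction n with
    | zero => simp
    | succ n ih =>
      calc b = a ^ n * b ^ (n + 1) := ih
      _ = a ^ n * (b * b ^ n) := by rw [pow_succ']
      _ = a ^ n * ((a * (b * b)) * b ^ n) := by rw [← hb2]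
      _ = a ^ (n + 1) * b ^ (n + 2) := by
        rw [pow_succ, pow_succ', pow_succ']
        noncomm_ring
  -- (b*a) is idempotent
  have hba : (b * a) * (b * a) = b * a := by
    calc (b * a) * (b * a) = (b * a * b) * a := by noncomm_ring
    _ = b * a := by rw [hbab]
  have hab' : (a * b) * (a * b) = a * b := by
    calc (a * b) * (a * b) = a * (b * a * b) := by noncomm_ring
    _ = a * b := by rw [hbab]
  have hbapow : ∀ n : ℕ, (b * a) ^ (n + 1) = b * a := drz_idem_pow hba
  have habpow : ∀ n : ℕ, (a * b) ^ (n + 1) = a * b := drz_idem_pow hab'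
  have hyan : ∀ n : ℕ, y * a ^ n = a ^ n * y := fun n => (hcya.pow_right n).eq
  -- by = (by)(ab)
  have h1 : b * y = (b * y) * (a * b) := by
    calc b * y = (b ^ (k + 1) * a ^ k) * y := by rw [← hbn k]
    _ = b ^ (k + 1) * (a ^ k * y) := by rw [mul_assoc]
    _ = b ^ (k + 1) * (y * a ^ k) := by rw [hyan k]
    _ = b ^ (k + 1) * (y * (a ^ (k + 1) * b)) := by rw [← hkp]
    _ = b ^ (k + 1) * ((y * a ^ (k + 1)) * b) := by rw [mul_assoc]
    _ = b ^ (k + 1) * ((a ^ (k + 1) * y) * b) := by rw [hyan (k + 1)]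
    _ = (b ^ (k + 1) * a ^ (k + 1)) * (y * b) := by noncomm_ring
    _ = (b * a) ^ (k + 1) * (y * b) := by rw [(hcab.symm).mul_pow]
    _ = (b * a) * (y * b) := by rw [hbapow k]
    _ = b * (a * y) * b := by noncomm_ring
    _ = b * (y * a) * b := by rw [← hy]
    _ = (b * y) * (a * b) := by noncomm_ring
  have h2 : y * b = (b * y) * (a * b) := by
    calc y * b = y * (a ^ k * b ^ (k + 1)) := by rw [← hbn' k]
    _ = (y * a ^ k) * b ^ (k + 1) := by rw [mul_assoc]
    _ = (a ^ k * y) * b ^ (k + 1) := by rw [hyan k]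
    _ = ((a ^ (k + 1) * b) * y) * b ^ (k + 1) := by rw [← hkp]
    _ = ((b * a ^ (k + 1)) * y) * b ^ (k + 1) := by rw [(hcab.pow_left (k+1)).eq]
    _ = b * (a ^ (k + 1) * y) * b ^ (k + 1) := by noncomm_ring
    _ = b * (y * a ^ (k + 1)) * b ^ (k + 1) := by rw [hyan (k + 1)]
    _ = (b * y) * (a ^ (k + 1) * b ^ (k + 1)) := by noncomm_ring
    _ = (b * y) * (a * b) ^ (k + 1) := by rw [hcab.mul_pow]
    _ = (b * y) * (a * b) := by rw [habpow k]
  rw [h2, ← h1]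

lemma drz_sq_mpr {a : R} (h : IsDrazinInvertible a) : IsDrazinInvertible (a * a) := by
  obtain ⟨b, hab, hbab, k, hk0, hkp⟩ := h
  have hcab : Commute a b := hab
  have hge := drz_pow_ge hkp
  refine ⟨b * b, ?_, ?_, k, hk0, ?_⟩
  · exact ((hcab.mul_right hcab).mul_left (hcab.mul_right hcab)).eq.symm ▸ rfl
  · have key : (a * a) * (b * b) = a * b := by
      calc (a * a) * (b * b) = a * ((a * b) * b) := by noncomm_ring
      _ = a * ((b * a) * b) := by rw [hab]
      _ = a * b := by rw [show (b * a) * b = b from hbab]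
    calc (b * b) * (a * a) * (b * b) = (b * b) * ((a * a) * (b * b)) := by noncomm_ring
    _ = (b * b) * (a * b) := by rw [key]
    _ = b * (b * a * b) := by noncomm_ring
    _ = b * b := by rw [hbab]
  · have h1 : a ^ (2 * k) = a ^ (2 * k + 1) * b := hge (2 * k) (by omega)
    have h2 : a ^ (2 * k + 1) = a ^ (2 * k + 2) * b := hge (2 * k + 1) (by omega)
    have e0 : (a * a) ^ k = a ^ (2 * k) := by rw [← pow_two, ← pow_mul]
    rw [e0, show (a * a) ^ (k + 1) = a ^ (2 * (k + 1)) from by rw [← pow_two, ← pow_mul]]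
    calc a ^ (2 * k) = a ^ (2 * k + 1) * b := h1
    _ = (a ^ (2 * k + 2) * b) * b := by rw [h2]
    _ = a ^ (2 * k + 2) * (b * b) := by rw [mul_assoc]
    _ = a ^ (2 * (k + 1)) * (b * b) := by rw [show 2 * (k + 1) = 2 * k + 2 from by omega]

lemma drz_sq_mp {a : R} (h : IsDrazinInvertible (a * a)) : IsDrazinInvertible a := by
  obtain ⟨c, hac, hcac, k, hk0, hkp⟩ := h
  have hca : a * c = c * a :=
    drz_commutant ⟨hac, hcac, k, hk0, hkp⟩ (mul_assoc a a a).symm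
  refine ⟨a * c, ?_, ?_, 2 * k, by omega, ?_⟩
  · calc a * (a * c) = a * (c * a) := by rw [hca]
    _ = (a * c) * a := by noncomm_ring
  · calc (a * c) * a * (a * c) = a * ((c * (a * a)) * c) := by noncomm_ring
    _ = a * c := by rw [show c * (a * a) * c = c from hcac]
  · have e1 : (a * a) ^ k = a ^ (2 * k) := by rw [← pow_two, ← pow_mul]
    have e2 : (a * a) ^ (k + 1) = a ^ (2 * k + 1) * a := by
      rw [← pow_two, ← pow_mul, show 2 * (k + 1) = (2 * k + 1) + 1 from by omega, pow_succ]
    calc a ^ (2 * k) = (a * a) ^ k := e1.symm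
    _ = (a * a) ^ (k + 1) * c := hkp
    _ = (a ^ (2 * k + 1) * a) * c := by rw [e2]
    _ = a ^ (2 * k + 1) * (a * c) := by rw [mul_assoc]

lemma drz_sq {a : R} : IsDrazinInvertible a ↔ IsDrazinInvertible (a * a) :=
  ⟨drz_sq_mpr, drz_sq_mp⟩

lemma drz_cline {a b c : R} (h : IsDrazinInverse (a * b) c) :
    IsDrazinInverse (b * a) (b * (c * c) * a) := by
  obtain ⟨hxc, hcxc, k, hk0, hkp⟩ := h
  have hge := drz_pow_ge hkp
  have hxc2 : (a * b) * (c * c) = (c * c) * (a * b) := by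
    calc (a * b) * (c * c) = ((a * b) * c) * c := by noncomm_ring
    _ = (c * (a * b)) * c := by rw [hxc]
    _ = c * ((a * b) * c) := by noncomm_ring
    _ = c * (c * (a * b)) := by rw [hxc]
    _ = (c * c) * (a * b) := by noncomm_ring
  have hx2c2 : (a * b) * (a * b) * (c * c) = (a * b) * c := by
    calc (a * b) * (a * b) * (c * c) = (a * b) * (((a * b) * c) * c) := by noncomm_ring
    _ = (a * b) * ((c * (a * b)) * c) := by rw [hxc]
    _ = (a * b) * (c * (a * b) * c) := by noncomm_ring
    _ = (a * b) * c := by rw [hcxc]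
  have hban : ∀ n : ℕ, (b * a) ^ (n + 1) = b * (a * b) ^ n * a := by
    intro n
    induction n with
    | zero => simp
    | succ n ih =>
      calc (b * a) ^ (n + 2) = (b * a) ^ (n + 1) * (b * a) := by rw [pow_succ]
      _ = (b * (a * b) ^ n * a) * (b * a) := by rw [ih]
      _ = b * ((a * b) ^ n * (a * b)) * a := by noncomm_ring
      _ = b * (a * b) ^ (n + 1) * a := by rw [← pow_succ]
  refine ⟨?_, ?_, k + 2, by omega, ?_⟩
  · calc (b * a) * (b * (c * c) * a) = b * ((a * b) * (c * c)) * a := by noncomm_ring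
    _ = b * ((c * c) * (a * b)) * a := by rw [hxc2]
    _ = (b * (c * c) * a) * (b * a) := by noncomm_ring
  · have key : (c * c) * ((a * b) * (a * b) * (c * c)) = c * c := by
      calc (c * c) * ((a * b) * (a * b) * (c * c)) = (c * c) * ((a * b) * c) := by rw [hx2c2]
      _ = c * (c * (a * b) * c) := by noncomm_ring
      _ = c * c := by rw [hcxc]
    calc (b * (c * c) * a) * (b * a) * (b * (c * c) * a)
        = b * ((c * c) * ((a * b) * (a * b) * (c * c))) * a := by noncomm_ring
    _ = b * (c * c) * a := by rw [key]
  · have h1 : (a * b) ^ (k + 1) = (a * b) ^ (k + 2) * c := hge (k + 1) (by omega)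
    calc (b * a) ^ (k + 2) = b * (a * b) ^ (k + 1) * a := hban (k + 1)
    _ = b * ((a * b) ^ (k + 2) * c) * a := by rw [h1]
    _ = b * ((a * b) ^ ( k + 1) * ((a * b) * c)) * a := by rw [pow_succ]; noncomm_ring
    _ = b * ((a * b) ^ (k + 1) * ((a * b) * (a * b) * (c * c))) * a := by rw [hx2c2]
    _ = (b * (a * b) ^ (k + 2) * a) * (b * (c * c) * a) := by rw [pow_succ]; noncomm_ring
    _ = (b * a) ^ (k + 3) * (b * (c * c) * a) := by rw [hban (k + 2)]

lemma drz_cline' (a b : R) : IsDrazinInvertible (a * b) ↔ IsDrazinInvertible (b * a) :=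
  ⟨fun ⟨_, hc⟩ => ⟨_, drz_cline hc⟩, fun ⟨_, hc⟩ => ⟨_, drz_cline hc⟩⟩

lemma drz_mul_idem {s p : R} (hpp : p * p = p) (hc : s * p = p * s)
    (h : IsDrazinInvertible s) : IsDrazinInvertible (s * p) := by
  obtain ⟨b, hab, hbab, k, hk0, hkp⟩ := h
  have hpb : p * b = b * p := drz_commutant ⟨hab, hbab, k, hk0, hkp⟩ hc.symm
  have hcsp : Commute s p := hc
  have hspn : ∀ n : ℕ, (s * p) ^ (n + 1) = s ^ (n + 1) * p := by
    intro n
    rw [hcsp.mul_pow, drz_idem_pow hpp n]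
  have key1 : (s * p) * (b * p) = (b * s) * p := by
    calc (s * p) * (b * p) = s * (p * b) * p := by noncomm_ring
    _ = s * (b * p) * p := by rw [hpb]
    _ = (s * b) * (p * p) := by noncomm_ring
    _ = (b * s) * p := by rw [hab, hpp]
  have key2 : (b * p) * (s * p) = (b * s) * p := by
    calc (b * p) * (s * p) = b * (p * s) * p := by noncomm_ring
    _ = b * (s * p) * p := by rw [← hc]
    _ = (b * s) * (p * p) := by noncomm_ring
    _ = (b * s) * p := by rw [hpp]
  refine ⟨b * p, ?_, ?_, k, hk0, ?_⟩
  · rw [key1, key2]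
  · calc (b * p) * (s * p) * (b * p) = ((b * s) * p) * (b * p) := by rw [key2]
    _ = (b * s) * (p * b) * p := by noncomm_ring
    _ = (b * s) * (b * p) * p := by rw [hpb]
    _ = (b * s * b) * (p * p) := by noncomm_ring
    _ = b * p := by rw [hbab, hpp]
  · obtain ⟨m, rfl⟩ : ∃ m, k = m + 1 := ⟨k - 1, by omega⟩
    calc (s * p) ^ (m + 1) = s ^ (m + 1) * p := hspn m
    _ = (s ^ (m + 2) * b) * p := by rw [hkp]
    _ = s ^ (m + 2) * (b * (p * p)) := by rw [hpp]; noncomm_ring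
    _ = s ^ (m + 2) * ((p * b) * p) := by rw [hpb]; noncomm_ring
    _ = (s ^ (m + 2) * p) * (b * p) := by noncomm_ring
    _ = (s * p) ^ (m + 2) * (b * p) := by rw [← hspn (m + 1)]

lemma drz_split {s p : R} (hpp : p * p = p) (hc : s * p = p * s) :
    IsDrazinInvertible s ↔ IsDrazinInvertible (s * p) ∧ IsDrazinInvertible (s * (1 - p)) := by
  have hpf : p * (1 - p) = 0 := by rw [mul_sub, mul_one, hpp, sub_self]
  have hfp : (1 - p) * p = 0 := by rw [sub_mul, one_mul, hpp, sub_self]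
  have hff : (1 - p) * (1 - p) = 1 - p := by rw [sub_mul, one_mul, mul_sub, mul_one, hpp]; abel
  have hcf : s * (1 - p) = (1 - p) * s := by rw [mul_sub, sub_mul, mul_one, one_mul, hc]
  constructor
  · intro h
    exact ⟨drz_mul_idem hpp hc h, drz_mul_idem hff hcf h⟩
  · rintro ⟨⟨b₁, h1c, h1i, k₁, hk₁, h1p⟩, ⟨b₂, h2c, h2i, k₂, hk₂, h2p⟩⟩
    set f := 1 - p with hf
    have hb₁p : p * b₁ = b₁ * p := by
      refine drz_commutant ⟨h1c, h1i, k₁, hk₁, h1p⟩ ?_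
      calc p * (s * p) = (p * s) * p := by noncomm_ring
      _ = (s * p) * p := by rw [← hc]
    have hb₂p : p * b₂ = b₂ * p := by
      refine drz_commutant ⟨h2c, h2i, k₂, hk₂, h2p⟩ ?_
      calc p * (s * f) = (p * s) * f := by noncomm_ring
      _ = (s * p) * f := by rw [← hc]
      _ = s * (p * f) := by noncomm_ring
      _ = s * (f * p) := by rw [hpf, hfp]
      _ = (s * f) * p := by noncomm_ring
    have hb₁f : f * b₁ = b₁ * f := by
      rw [hf, sub_mul, mul_sub, one_mul, mul_one, hb₁p]
    have hb₂f : f * b₂ = b₂ * f := by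
      rw [hf, sub_mul, mul_sub, one_mul, mul_one, hb₂p]
    have hspn : ∀ n : ℕ, (s * p) ^ (n + 1) = s ^ (n + 1) * p := by
      intro n; rw [(show Commute s p from hc).mul_pow, drz_idem_pow hpp n]
    have hsfn : ∀ n : ℕ, (s * f) ^ (n + 1) = s ^ (n + 1) * f := by
      intro n; rw [(show Commute s f from hcf).mul_pow, drz_idem_pow hff n]
    have t1 : (b₁ * p) * s = b₁ * (s * p) := by
      calc (b₁ * p) * s = b₁ * (p * s) := by noncomm_ring
      _ = b₁ * (s * p) := by rw [← hc]
    have t2 : (b₂ * f) * s = b₂ * (s * f) := by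
      calc (b₂ * f) * s = b₂ * (f * s) := by noncomm_ring
      _ = b₂ * (s * f) := by rw [← hcf]
    have t1' : s * (b₁ * p) = b₁ * (s * p) := by
      calc s * (b₁ * p) = s * (p * b₁) := by rw [hb₁p]
      _ = (s * p) * b₁ := by noncomm_ring
      _ = b₁ * (s * p) := by rw [h1c]
    have t2' : s * (b₂ * f) = b₂ * (s * f) := by
      calc s * (b₂ * f) = s * (f * b₂) := by rw [hb₂f]
      _ = (s * f) * b₂ := by noncomm_ring
      _ = b₂ * (s * f) := by rw [h2c]
    refine ⟨b₁ * p + b₂ * f, ?_, ?_, k₁ + k₂, by omega, ?_⟩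
    · rw [mul_add, add_mul, t1, t2, t1', t2']
    · have A11 : (b₁ * (s * p)) * (b₁ * p) = b₁ * p := by
        calc (b₁ * (s * p)) * (b₁ * p) = (b₁ * (s * p) * b₁) * p := by noncomm_ring
        _ = b₁ * p := by rw [h1i]
      have A22 : (b₂ * (s * f)) * (b₂ * f) = b₂ * f := by
        calc (b₂ * (s * f)) * (b₂ * f) = (b₂ * (s * f) * b₂) * f := by noncomm_ring
        _ = b₂ * f := by rw [h2i]
      have A12 : (b₁ * (s * p)) * (b₂ * f) = 0 := by
        calc (b₁ * (s * p)) * (b₂ * f) = b₁ * (s * ((p * b₂) * f)) := by noncomm_ring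
        _ = b₁ * (s * ((b₂ * p) * f)) := by rw [hb₂p]
        _ = b₁ * (s * (b₂ * (p * f))) := by rw [mul_assoc]
        _ = 0 := by rw [hpf, mul_zero, mul_zero, mul_zero]
      have A21 : (b₂ * (s * f)) * (b₁ * p) = 0 := by
        calc (b₂ * (s * f)) * (b₁ * p) = b₂ * (s * ((f * b₁) * p)) := by noncomm_ring
        _ = b₂ * (s * ((b₁ * f) * p)) := by rw [hb₁f]
        _ = b₂ * (s * (b₁ * (f * p))) := by rw [mul_assoc]
        _ = 0 := by rw [hfp, mul_zero, mul_zero, mul_zero]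
      calc (b₁ * p + b₂ * f) * s * (b₁ * p + b₂ * f)
          = ((b₁ * p) * s + (b₂ * f) * s) * (b₁ * p + b₂ * f) := by rw [add_mul]
      _ = (b₁ * (s * p) + b₂ * (s * f)) * (b₁ * p + b₂ * f) := by rw [t1, t2]
      _ = (b₁ * (s * p)) * (b₁ * p) + (b₁ * (s * p)) * (b₂ * f)
          + ((b₂ * (s * f)) * (b₁ * p) + (b₂ * (s * f)) * (b₂ * f)) := by
          rw [add_mul, mul_add, mul_add]
      _ = b₁ * p + b₂ * f := by rw [A11, A22, A12, A21]; abel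
    · obtain ⟨m, hm⟩ : ∃ m, k₁ + k₂ = m + 1 := ⟨k₁ + k₂ - 1, by omega⟩
      set N := k₁ + k₂ with hN
      have hge1 : (s * p) ^ N = (s * p) ^ (N + 1) * b₁ := drz_pow_ge h1p N (by omega)
      have hge2 : (s * f) ^ N = (s * f) ^ (N + 1) * b₂ := drz_pow_ge h2p N (by omega)
      have piece1 : s ^ (N + 1) * (b₁ * p) = s ^ N * p := by
        calc s ^ (N + 1) * (b₁ * p) = s ^ (N + 1) * (p * b₁) := by rw [hb₁p]
        _ = (s ^ (N + 1) * p) * b₁ := by rw [mul_assoc]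
        _ = (s * p) ^ (N + 1) * b₁ := by rw [hspn N]
        _ = (s * p) ^ N := hge1.symm
        _ = s ^ N * p := by rw [hm]; exact hspn m
      have piece2 : s ^ (N + 1) * (b₂ * f) = s ^ N * f := by
        calc s ^ (N + 1) * (b₂ * f) = s ^ (N + 1) * (f * b₂) := by rw [hb₂f]
        _ = (s ^ (N + 1) * f) * b₂ := by rw [mul_assoc]
        _ = (s * f) ^ (N + 1) * b₂ := by rw [hsfn N]
        _ = (s * f) ^ N := hge2.symm
        _ = s ^ N * f := by rw [hm]; exact hsfn m
      calc s ^ N = s ^ N * (p + f) := by rw [hf]; rw [show p + (1 - p) = 1 by abel, mul_one]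
      _ = s ^ N * p + s ^ N * f := by rw [mul_add]
      _ = s ^ (N + 1) * (b₁ * p) + s ^ (N + 1) * (b₂ * f) := by rw [piece1, piece2]
      _ = s ^ (N + 1) * (b₁ * p + b₂ * f) := by rw [mul_add]

lemma drz_corner {p w : R} (hpp : p * p = p) (hpw : p * w = p)
    (h : IsDrazinInvertible w) : IsDrazinInvertible ((1 - p) * w * (1 - p)) := by
  obtain ⟨d, hwd, hdwd, k, hk0, hkp⟩ := h
  set f := 1 - p with hf
  have hpf : p * f = 0 := by rw [hf, mul_sub, mul_one, hpp, sub_self]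
  have hfw : f * w = w - p := by rw [hf, sub_mul, one_mul, hpw]
  have hβ : f * w * f = w * f := by
    rw [hfw, sub_mul, hpf, sub_zero]
  have hpwn : ∀ n : ℕ, p * w ^ n = p := by
    intro n
    induction n with
    | zero => simp
    | succ n ih => rw [pow_succ, ← mul_assoc, ih, hpw]
  have hpd : p * d = p := by
    calc p * d = (p * w ^ (k + 1)) * d := by rw [hpwn (k + 1)]
    _ = p * (w ^ (k + 1) * d) := by rw [mul_assoc]
    _ = p * w ^ k := by rw [← hkp]
    _ = p := hpwn k
  have hfd : f * d = d - p := by rw [hf, sub_mul, one_mul, hpd]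
  have c1 : (w * f) * (d * f) = (w * d) * f := by
    calc (w * f) * (d * f) = w * ((f * d) * f) := by noncomm_ring
    _ = w * ((d - p) * f) := by rw [hfd]
    _ = w * (d * f - p * f) := by rw [sub_mul]
    _ = (w * d) * f := by rw [hpf, sub_zero, mul_assoc]
  have c1' : (d * f) * (w * f) = (w * d) * f := by
    calc (d * f) * (w * f) = d * ((f * w) * f) := by noncomm_ring
    _ = d * ((w - p) * f) := by rw [hfw]
    _ = d * (w * f - p * f) := by rw [sub_mul]
    _ = (d * w) * f := by rw [hpf, sub_zero, mul_assoc]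
    _ = (w * d) * f := by rw [← hwd]
  have c3 : ∀ n : ℕ, (w * f) ^ (n + 1) = w ^ (n + 1) * f := by
    intro n
    induction n with
    | zero => simp
    | succ n ih =>
      calc (w * f) ^ (n + 2) = (w * f) ^ (n + 1) * (w * f) := by rw [pow_succ]
      _ = (w ^ (n + 1) * f) * (w * f) := by rw [ih]
      _ = w ^ (n + 1) * ((f * w) * f) := by noncomm_ring
      _ = w ^ (n + 1) * ((w - p) * f) := by rw [hfw]
      _ = w ^ (n + 1) * (w * f - p * f) := by rw [sub_mul]
      _ = w ^ (n + 1) * (w * f) := by rw [hpf, sub_zero]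
      _ = w ^ (n + 2) * f := by rw [pow_succ]; noncomm_ring
  rw [hβ]
  refine ⟨d * f, by rw [c1, c1'], ?_, k, hk0, ?_⟩
  · calc (d * f) * (w * f) * (d * f) = ((w * d) * f) * (d * f) := by rw [c1']
    _ = (w * d) * ((f * d) * f) := by noncomm_ring
    _ = (w * d) * ((d - p) * f) := by rw [hfd]
    _ = (w * d) * (d * f - p * f) := by rw [sub_mul]
    _ = ((w * d) * d) * f := by rw [hpf, sub_zero]; noncomm_ring
    _ = ((d * w) * d) * f := by rw [hwd]
    _ = d * f := by rw [hdwd]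
  · obtain ⟨m, rfl⟩ : ∃ m, k = m + 1 := ⟨k - 1, by omega⟩
    calc (w * f) ^ (m + 1) = w ^ (m + 1) * f := c3 m
    _ = (w ^ (m + 2) * d) * f := by rw [← hkp]
    _ = w ^ (m + 2) * ((d - p) * f) := by rw [sub_mul, hpf, sub_zero, mul_assoc]
    _ = w ^ (m + 2) * ((f * d) * f) := by rw [hfd]
    _ = (w ^ (m + 2) * f) * (d * f) := by noncomm_ring
    _ = (w * f) ^ (m + 2) * (d * f) := by rw [← c3 (m + 1)]

lemma drz_op {a : R} (h : IsDrazinInvertible a) :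
    IsDrazinInvertible (MulOpposite.op a) := by
  obtain ⟨b, hab, hbab, k, hk0, hkp⟩ := h
  have hcomm : a ^ (k + 1) * b = b * a ^ (k + 1) :=
    ((show Commute a b from hab).pow_left (k + 1)).eq
  refine ⟨MulOpposite.op b, ?_, ?_, k, hk0, ?_⟩
  · simp only [← MulOpposite.op_mul]
    exact congrArg MulOpposite.op hab.symm
  · simp only [← MulOpposite.op_mul]
    exact congrArg MulOpposite.op (by rw [← mul_assoc]; exact hbab)
  · simp only [← MulOpposite.op_pow, ← MulOpposite.op_mul]
    exact congrArg MulOpposite.op (by rw [← hcomm]; exact hkp)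

lemma drz_unop {a : R} (h : IsDrazinInvertible (MulOpposite.op a)) :
    IsDrazinInvertible a := by
  obtain ⟨b, hab, hbab, k, hk0, hkp⟩ := h
  have h1 : b.unop * a = a * b.unop := by
    have := congrArg MulOpposite.unop hab
    simpa using this
  have hcomm : a ^ (k + 1) * b.unop = b.unop * a ^ (k + 1) :=
    ((show Commute a b.unop from h1.symm).pow_left (k + 1)).eq
  refine ⟨b.unop, h1.symm, ?_, k, hk0, ?_⟩
  · have h2 := congrArg MulOpposite.unop hbab
    simp only [MulOpposite.unop_mul, MulOpposite.unop_op] at h2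
    calc b.unop * a * b.unop = b.unop * (a * b.unop) := by rw [mul_assoc]
    _ = b.unop := h2
  · have h3 := congrArg MulOpposite.unop hkp
    simp only [MulOpposite.unop_mul, MulOpposite.unop_pow, MulOpposite.unop_op] at h3
    rw [hcomm]
    exact h3

lemma drz_corner' {q w : R} (hqq : q * q = q) (hwq : w * q = q)
    (h : IsDrazinInvertible w) : IsDrazinInvertible ((1 - q) * w * (1 - q)) := by
  apply drz_unop
  have h1 : (MulOpposite.op q) * (MulOpposite.op q) = MulOpposite.op q := by
    rw [← MulOpposite.op_mul]; exact congrArg MulOpposite.op hqq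
  have h2 : (MulOpposite.op q) * (MulOpposite.op w) = MulOpposite.op q := by
    rw [← MulOpposite.op_mul]; exact congrArg MulOpposite.op hwq
  have hcor := drz_corner h1 h2 (drz_op h)
  have heq : (1 - MulOpposite.op q) * (MulOpposite.op w) * (1 - MulOpposite.op q)
      = MulOpposite.op ((1 - q) * w * (1 - q)) := by
    simp only [← MulOpposite.op_one, ← MulOpposite.op_sub, ← MulOpposite.op_mul]
    exact congrArg MulOpposite.op (by rw [mul_assoc])
  rwa [heq] at hcor

lemma drz_lift {p w : R} (hpp : p * p = p) (hpw : p * w = p)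
    (h : IsDrazinInvertible ((1 - p) * w * (1 - p))) : IsDrazinInvertible w := by
  obtain ⟨c', hbc', hcbc', k, hk0, hkp'⟩ := h
  obtain ⟨m, rfl⟩ : ∃ m, k = m + 1 := ⟨k - 1, by omega⟩
  set f := 1 - p with hf
  set β := f * w * f with hβdef
  set z := f * w * p with hzdef
  clear_value f β z
  have hpf : p * f = 0 := by rw [hf, mul_sub, mul_one, hpp, sub_self]
  have hfp : f * p = 0 := by rw [hf, sub_mul, one_mul, hpp, sub_self]
  have hff : f * f = f := by rw [hf, sub_mul, one_mul, mul_sub, mul_one, hpp]; abel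
  have hfβ : f * β = β := by
    calc f * β = (f * f) * (w * f) := by rw [hβdef]; noncomm_ring
    _ = β := by rw [hff, hβdef, mul_assoc]
  have hβf : β * f = β := by
    calc β * f = (f * w) * (f * f) := by rw [hβdef]; noncomm_ring
    _ = β := by rw [hff, hβdef]
  have hpβ : p * β = 0 := by
    calc p * β = ((p * f) * w) * f := by rw [hβdef]; noncomm_ring
    _ = 0 := by rw [hpf, zero_mul, zero_mul]
  have hβp : β * p = 0 := by
    calc β * p = (f * w) * (f * p) := by rw [hβdef]; noncomm_ring
    _ = 0 := by rw [hfp, mul_zero]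
  have hpz : p * z = 0 := by
    calc p * z = ((p * f) * w) * p := by rw [hzdef]; noncomm_ring
    _ = 0 := by rw [hpf, zero_mul, zero_mul]
  have hzp : z * p = z := by
    calc z * p = (f * w) * (p * p) := by rw [hzdef]; noncomm_ring
    _ = z := by rw [hpp, hzdef]
  have hzf : z * f = 0 := by
    calc z * f = (f * w) * (p * f) := by rw [hzdef]; noncomm_ring
    _ = 0 := by rw [hpf, mul_zero]
  have hfz : f * z = z := by
    calc f * z = (f * f) * (w * p) := by rw [hzdef]; noncomm_ring
    _ = z := by rw [hff, hzdef, mul_assoc]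
  have hzz : z * z = 0 := by
    calc z * z = (f * w) * ((p * f) * (w * p)) := by rw [hzdef]; noncomm_ring
    _ = 0 := by rw [hpf, zero_mul, mul_zero]
  have hzβ : z * β = 0 := by
    calc z * β = (f * w) * ((p * f) * (w * f)) := by rw [hzdef, hβdef]; noncomm_ring
    _ = 0 := by rw [hpf, zero_mul, mul_zero]
  have hw : w = p + z + β := by
    have hpplusf : p + f = 1 := by rw [hf]; abel
    calc w = p * w + f * w := by rw [hf]; noncomm_ring
    _ = p + f * w := by rw [hpw]
    _ = p + (f * w) * 1 := by rw [mul_one]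
    _ = p + (f * w) * (p + f) := by rw [hpplusf]
    _ = p + ((f * w) * p + (f * w) * f) := by rw [mul_add]
    _ = p + z + β := by rw [hzdef, hβdef]; noncomm_ring
  -- cornerized Drazin inverse of β
  set c := β * (c' * c') with hcdef
  clear_value c
  have hc2 : c = (β * c') * c' := hcdef.trans (mul_assoc β c' c').symm
  have hc3 : c = (c' * c') * β := by
    calc c = ((β * c') * c') := hc2
    _ = (c' * β) * c' := by rw [hbc']
    _ = c' * (β * c') := by rw [mul_assoc]
    _ = c' * (c' * β) := by rw [hbc']
    _ = (c' * c') * β := by rw [mul_assoc]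
  have he : (β * c') * (β * c') = β * c' := by
    calc (β * c') * (β * c') = β * (c' * β * c') := by noncomm_ring
    _ = β * c' := by rw [hcbc']
  have h1cb : c * β = β * c' := by
    calc c * β = (β * c') * (c' * β) := by rw [hc2]; noncomm_ring
    _ = (β * c') * (β * c') := by rw [hbc']
    _ = β * c' := he
  have h2cb : β * c = β * c' := by
    calc β * c = (β * (β * c')) * c' := by rw [hcdef]; noncomm_ring
    _ = (β * (c' * β)) * c' := by rw [hbc']
    _ = (β * c') * (β * c') := by noncomm_ring
    _ = β * c' := he
  have hcβ : c * β = β * c := by rw [h1cb, h2cb]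
  have hcβc : c * β * c = c := by
    calc c * β * c = (β * c') * ((β * c') * c') := by rw [h1cb, hc2]
    _ = ((β * c') * (β * c')) * c' := by rw [← mul_assoc]
    _ = (β * c') * c' := by rw [he]
    _ = c := hc2.symm
  have hgec' := drz_pow_ge hkp'
  have hpowc : β ^ (m + 1) = β ^ ((m + 1) + 1) * c := by
    calc β ^ (m + 1) = β ^ ((m + 1) + 1) * c' := hkp'
    _ = (β ^ ((m + 1) + 2) * c') * c' := by rw [← hgec' ((m + 1) + 1) (by omega)]
    _ = (β ^ ((m + 1) + 1) * β) * (c' * c') := by rw [← pow_succ]; rw [mul_assoc]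
    _ = β ^ ((m + 1) + 1) * c := by rw [hcdef, mul_assoc]
  have hpc : p * c = 0 := by
    calc p * c = (p * β) * (c' * c') := by rw [hcdef, mul_assoc]
    _ = 0 := by rw [hpβ, zero_mul]
  have hcp : c * p = 0 := by
    calc c * p = (c' * c') * (β * p) := by rw [hc3, mul_assoc]
    _ = 0 := by rw [hβp, mul_zero]
  have hcf : c * f = c := by rw [hf, mul_sub, mul_one, hcp, sub_zero]
  have hfc : f * c = c := by rw [hf, sub_mul, one_mul, hpc, sub_zero]
  have hzc : z * c = 0 := by
    calc z * c = (f * w) * (p * c) := by rw [hzdef]; noncomm_ring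
    _ = 0 := by rw [hpc, mul_zero]
  have hcβn : ∀ n : ℕ, c * β ^ n = β ^ n * c :=
    fun n => ((show Commute c β from hcβ).pow_right n).eq
  have hgeC := drz_pow_ge hpowc
  have hβnf : ∀ n : ℕ, β ^ (n + 1) * f = β ^ (n + 1) := by
    intro n; rw [pow_succ, mul_assoc, hβf]
  -- the geometric-sum corrector
  set g := ∑ i ∈ Finset.range (m + 1), β ^ i * (f - β * c) with hgdef
  clear_value g
  have hterm0 : p * (f - β * c) = 0 := by
    rw [mul_sub, hpf, ← mul_assoc, hpβ, zero_mul, sub_zero]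
  have hterm0z : z * (f - β * c) = 0 := by
    rw [mul_sub, hzf, ← mul_assoc, hzβ, zero_mul, sub_zero]
  have htermc : c * (f - β * c) = 0 := by
    rw [mul_sub, hcf, ← mul_assoc, hcβc, sub_self]
  have htermk : β ^ (m + 1) * (f - β * c) = 0 := by
    rw [mul_sub, hβnf m, ← mul_assoc, ← pow_succ, ← hgeC (m + 1) (le_refl (m + 1)), sub_self]
  have hpg : p * g = 0 := by
    rw [hgdef, Finset.mul_sum]
    refine Finset.sum_eq_zero fun i _ => ?_
    cases i with
    | zero => rw [pow_zero, one_mul]; exact hterm0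
    | succ n =>
      calc p * (β ^ (n + 1) * (f - β * c)) = ((p * β) * β ^ n) * (f - β * c) := by
            rw [pow_succ']; noncomm_ring
      _ = 0 := by rw [hpβ, zero_mul, zero_mul]
  have hzg : z * g = 0 := by
    rw [hgdef, Finset.mul_sum]
    refine Finset.sum_eq_zero fun i _ => ?_
    cases i with
    | zero => rw [pow_zero, one_mul]; exact hterm0z
    | succ n =>
      calc z * (β ^ (n + 1) * (f - β * c)) = ((z * β) * β ^ n) * (f - β * c) := by
            rw [pow_succ']; noncomm_ring
      _ = 0 := by rw [hzβ, zero_mul, zero_mul]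
  have hcg : c * g = 0 := by
    rw [hgdef, Finset.mul_sum]
    refine Finset.sum_eq_zero fun i _ => ?_
    calc c * (β ^ i * (f - β * c)) = (c * β ^ i) * (f - β * c) := by rw [mul_assoc]
    _ = β ^ i * (c * (f - β * c)) := by rw [hcβn i, mul_assoc]
    _ = 0 := by rw [htermc, mul_zero]
  have hβkg : β ^ (m + 1) * g = 0 := by
    rw [hgdef, Finset.mul_sum]
    refine Finset.sum_eq_zero fun i _ => ?_
    calc β ^ (m + 1) * (β ^ i * (f - β * c)) = β ^ ((m + 1) + i) * (f - β * c) := by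
          rw [← mul_assoc, ← pow_add]
    _ = β ^ ((m + 1) + i) * f - (β ^ ((m + 1) + i) * β) * c := by rw [mul_sub, mul_assoc]
    _ = β ^ ((m + 1) + i) - β ^ ((m + 1) + i + 1) * c := by
          rw [← pow_succ, show (m + 1) + i = (m + i) + 1 from by omega, hβnf (m + i)]
    _ = 0 := by rw [← hgeC ((m + 1) + i) (by omega), sub_self]
  have hβg2 : β * g = g - (f - β * c) := by
    have hβg : β * g = ∑ i ∈ Finset.range (m + 1), β ^ (i + 1) * (f - β * c) := by
      rw [hgdef, Finset.mul_sum]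
      exact Finset.sum_congr rfl fun i _ => by rw [← mul_assoc, ← pow_succ']
    have htel : g - β * g = f - β * c := by
      rw [hβg, hgdef, ← Finset.sum_sub_distrib,
        Finset.sum_range_sub' (fun i => β ^ i * (f - β * c)) (m + 1),
        pow_zero, one_mul, htermk, sub_zero]
    rw [← htel]; abel
  -- the candidate Drazin inverse
  set X := g * z - c * z with hXdef
  clear_value X
  set W := p + X + c with hWdef
  clear_value W
  have hXp : X * p = X := by
    rw [hXdef, sub_mul, mul_assoc, hzp, mul_assoc, hzp]
  have hpX : p * X = 0 := by
    rw [hXdef, mul_sub, ← mul_assoc, hpg, zero_mul, ← mul_assoc, hpc, zero_mul, sub_self]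
  have hzX : z * X = 0 := by
    rw [hXdef, mul_sub, ← mul_assoc, hzg, zero_mul, ← mul_assoc, hzc, zero_mul, sub_self]
  have hXz : X * z = 0 := by
    rw [hXdef, sub_mul, mul_assoc, hzz, mul_zero, mul_assoc, hzz, mul_zero, sub_self]
  have hXβ : X * β = 0 := by
    rw [hXdef, sub_mul, mul_assoc, hzβ, mul_zero, mul_assoc, hzβ, mul_zero, sub_self]
  have hXc : X * c = 0 := by
    rw [hXdef, sub_mul, mul_assoc, hzc, mul_zero, mul_assoc, hzc, mul_zero, sub_self]
  have hβX : β * X = g * z - z := by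
    calc β * X = (β * g) * z - (β * c) * z := by
          rw [hXdef, mul_sub, ← mul_assoc, ← mul_assoc]
    _ = (g - (f - β * c)) * z - (β * c) * z := by rw [hβg2]
    _ = g * z - (f * z - (β * c) * z) - (β * c) * z := by rw [sub_mul, sub_mul]
    _ = g * z - z := by rw [hfz]; abel
  have hwW : w * W = p + g * z + β * c := by
    calc w * W = (p + z + β) * (p + X + c) := by rw [hw, hWdef]
    _ = p * p + p * X + p * c + (z * p + z * X + z * c) + (β * p + β * X + β * c) := by
          simp only [add_mul, mul_add]; abel
    _ = p + 0 + 0 + (z + 0 + 0) + (0 + (g * z - z) + β * c) := by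
          rw [hpp, hpX, hpc, hzp, hzX, hzc, hβp, hβX]
    _ = p + g * z + β * c := by abel
  have hWw : W * w = p + g * z + β * c := by
    calc W * w = (p + X + c) * (p + z + β) := by rw [hw, hWdef]
    _ = p * p + p * z + p * β + (X * p + X * z + X * β) + (c * p + c * z + c * β) := by
          simp only [add_mul, mul_add]; abel
    _ = p + 0 + 0 + (X + 0 + 0) + (0 + c * z + β * c) := by
          rw [hpp, hpz, hpβ, hXp, hXz, hXβ, hcp, hcβ]
    _ = p + g * z + β * c := by rw [hXdef]; abel
  -- the power formula for w
  have hwn : ∀ n : ℕ, w ^ (n + 1)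
      = p + (∑ i ∈ Finset.range (n + 1), β ^ i) * z + β ^ (n + 1) := by
    intro n
    induction n with
    | zero => rw [pow_one, hw, Finset.sum_range_one, pow_zero, one_mul, pow_one]
    | succ n ih =>
      have hS : ∀ j : ℕ, ((∑ i ∈ Finset.range (j + 1), β ^ i) * z) * p
          = (∑ i ∈ Finset.range (j + 1), β ^ i) * z := by
        intro j; rw [mul_assoc, hzp]
      calc w ^ (n + 2) = w ^ (n + 1) * w := by rw [pow_succ]
      _ = (p + (∑ i ∈ Finset.range (n + 1), β ^ i) * z + β ^ (n + 1)) * (p + z + β) := by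
            rw [ih, hw]
      _ = p * p + p * z + p * β
          + (((∑ i ∈ Finset.range (n + 1), β ^ i) * z) * p
            + ((∑ i ∈ Finset.range (n + 1), β ^ i) * z) * z
            + ((∑ i ∈ Finset.range (n + 1), β ^ i) * z) * β)
          + (β ^ (n + 1) * p + β ^ (n + 1) * z + β ^ (n + 1) * β) := by
            simp only [add_mul, mul_add]; abel
      _ = p + 0 + 0 + ((∑ i ∈ Finset.range (n + 1), β ^ i) * z + 0 + 0)
          + (0 + β ^ (n + 1) * z + β ^ (n + 2)) := by
            rw [hpp, hpz, hpβ, hS n, mul_assoc, hzz, mul_zero, mul_assoc, hzβ, mul_zero,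
              pow_succ β n, mul_assoc, hβp, mul_zero, ← pow_succ, ← pow_succ]
      _ = p + ((∑ i ∈ Finset.range (n + 1), β ^ i) * z + β ^ (n + 1) * z) + β ^ (n + 2) := by
            abel
      _ = p + (∑ i ∈ Finset.range (n + 2), β ^ i) * z + β ^ (n + 2) := by
            rw [Finset.sum_range_succ (fun i => β ^ i) (n + 1), add_mul]
  refine ⟨W, hwW.trans hWw.symm, ?_, (m + 1), hk0, ?_⟩
  · -- W * w * W = W
    calc W * w * W = W * (w * W) := by rw [mul_assoc]
    _ = (p + X + c) * (p + g * z + β * c) := by rw [hwW, hWdef]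
    _ = p * p + p * (g * z) + p * (β * c)
        + (X * p + X * (g * z) + X * (β * c))
        + (c * p + c * (g * z) + c * (β * c)) := by
          simp only [add_mul, mul_add]; abel
    _ = p + 0 + 0 + (X + 0 + 0) + (0 + 0 + c) := by
          have hXg : X * g = 0 := by
            rw [hXdef, sub_mul, mul_assoc, hzg, mul_zero, mul_assoc, hzg, mul_zero, sub_self]
          rw [hpp, ← mul_assoc p g z, hpg, zero_mul, ← mul_assoc p β c, hpβ, zero_mul,
            hXp, ← mul_assoc X g z, hXg, zero_mul, ← mul_assoc X β c, hXβ, zero_mul,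
            hcp, ← mul_assoc c g z, hcg, zero_mul, ← mul_assoc c β c, hcβc]
    _ = W := by rw [hWdef]; abel
  · -- w ^ (m + 1) = w ^ ((m + 1) + 1) * W
    have hwk := hwn m
    calc w ^ (m + 1) = p + (∑ i ∈ Finset.range (m + 1), β ^ i) * z + β ^ (m + 1) := hwk
    _ = p + (∑ i ∈ Finset.range (m + 1), β ^ i) * z + β ^ (m + 1)
        + (p * (g * z) + p * (β * c)
          + (((∑ i ∈ Finset.range (m + 1), β ^ i) * z) * (g * z)
            + ((∑ i ∈ Finset.range (m + 1), β ^ i) * z) * (β * c))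
          + (β ^ (m + 1) * (g * z) - β ^ (m + 1))
          + β ^ (m + 1) * (β * c)) := by
          have e1 : p * (g * z) = 0 := by rw [← mul_assoc, hpg, zero_mul]
          have e2 : p * (β * c) = 0 := by rw [← mul_assoc, hpβ, zero_mul]
          have e3 : ((∑ i ∈ Finset.range (m + 1), β ^ i) * z) * (g * z) = 0 := by
            rw [mul_assoc, ← mul_assoc z g z, hzg, zero_mul, mul_zero]
          have e4 : ((∑ i ∈ Finset.range (m + 1), β ^ i) * z) * (β * c) = 0 := by
            rw [mul_assoc, ← mul_assoc z β c, hzβ, zero_mul, mul_zero]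
          have e5 : β ^ (m + 1) * (g * z) = 0 := by rw [← mul_assoc, hβkg, zero_mul]
          have e6 : β ^ (m + 1) * (β * c) = β ^ (m + 1) := by rw [← mul_assoc, ← pow_succ, ← hpowc]
          rw [e1, e2, e3, e4, e5, e6]; abel
    _ = (p + (∑ i ∈ Finset.range (m + 1), β ^ i) * z + β ^ (m + 1)) * (p + g * z + β * c) := by
          have f1 : ((∑ i ∈ Finset.range (m + 1), β ^ i) * z) * p
              = (∑ i ∈ Finset.range (m + 1), β ^ i) * z := by rw [mul_assoc, hzp]
          have f2 : β ^ (m + 1) * p = 0 := by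
            rw [pow_succ, mul_assoc, hβp, mul_zero]
          simp only [add_mul, mul_add]
          rw [hpp, f1, f2]; abel
    _ = w ^ (m + 1) * (w * W) := by rw [hwk, hwW]
    _ = w ^ ((m + 1) + 1) * W := by rw [← mul_assoc, ← pow_succ]

theorem stmt15 (p q : R) (hp : p ^ 2 = p) (hq : q ^ 2 = q) :
    IsDrazinInvertible (p - q) ↔ IsDrazinInvertible (p + q - p * q) := by
  have hpp : p * p = p := by rw [← pow_two]; exact hp
  have hqq : q * q = q := by rw [← pow_two]; exact hq
  have hpw : p * (p + q - p * q) = p := by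
    rw [mul_sub, mul_add, ← mul_assoc p p q, hpp]; abel
  have hwq : (p + q - p * q) * q = q := by
    rw [sub_mul, add_mul, mul_assoc p q q, hqq]; abel
  have hs : (p - q) * (p - q) = p + q - p * q - q * p := by
    rw [mul_sub, sub_mul, sub_mul, hpp, hqq]; abel
  have hsp1 : ((p - q) * (p - q)) * p = p - p * q * p := by
    rw [hs, sub_mul, sub_mul, add_mul, mul_assoc q p p, hpp]; abel
  have hps1 : p * ((p - q) * (p - q)) = p - p * q * p := by
    rw [hs, mul_sub, mul_sub, mul_add, ← mul_assoc p p q, ← mul_assoc p q p, hpp]; abel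
  have hcomm : ((p - q) * (p - q)) * p = p * ((p - q) * (p - q)) := by rw [hsp1, hps1]
  have hsplit := drz_split hpp hcomm
  have hE1 : (1 - p) * (p + q - p * q) * (1 - p) = ((p - q) * (p - q)) * (1 - p) := by
    have l1 : (1 - p) * (p + q - p * q) = q - p * q := by
      rw [sub_mul, one_mul, hpw]; abel
    calc (1 - p) * (p + q - p * q) * (1 - p) = (q - p * q) * (1 - p) := by rw [l1]
    _ = q - p * q - (q * p - p * q * p) := by rw [mul_sub, mul_one, sub_mul]
    _ = ((p - q) * (p - q)) * (1 - p) := by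
        rw [mul_sub, mul_one, hsp1, hs]; abel
  have hE2 : ((p - q) * (p - q)) * p = p * ((1 - q) * p) := by
    rw [hsp1, sub_mul, one_mul, mul_sub, ← mul_assoc p q p, hpp]
  have hE3 : ((1 - q) * p) * p = (1 - q) * p := by rw [mul_assoc, hpp]
  have hqq1 : (1 - q) * (1 - q) = 1 - q := by
    rw [sub_mul, one_mul, mul_sub, mul_one, hqq]; abel
  have hE4 : (1 - q) * (p + q - p * q) * (1 - q) = ((1 - q) * p) * (1 - q) := by
    have r1 : (p + q - p * q) * (1 - q) = p * (1 - q) := by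
      rw [mul_sub, mul_one, hwq, mul_sub, mul_one]; abel
    rw [mul_assoc, r1, ← mul_assoc]
  have hE5 : (1 - q) * ((1 - q) * p) = (1 - q) * p := by rw [← mul_assoc, hqq1]
  constructor
  · intro h
    have h2 : IsDrazinInvertible ((p - q) * (p - q)) := drz_sq.mp h
    have h3 := (hsplit.mp h2).2
    rw [← hE1] at h3
    exact drz_lift hpp hpw h3
  · intro h
    have b1 : IsDrazinInvertible (((p - q) * (p - q)) * (1 - p)) := by
      have t := drz_corner hpp hpw h
      rwa [hE1] at t
    have b2 : IsDrazinInvertible (((p - q) * (p - q)) * p) := by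
      have t0 := drz_corner' hqq hwq h
      rw [hE4] at t0
      have t1 := (drz_cline' ((1 - q) * p) (1 - q)).mp t0
      rw [hE5, ← hE3] at t1
      have t4 := (drz_cline' ((1 - q) * p) p).mp t1
      rwa [← hE2] at t4
    exact drz_sq.mpr (hsplit.mpr ⟨b2, b1⟩)
end

section
/- Let p, q be idempotents in a ring R. Then pq is Drazin invertible if and only if 1 - p - q is Drazin invertible. -/
variable {R : Type*} [Ring R]

lemma dz_shift {x b : R} {k : ℕ} (hk : x ^ k = x ^ (k+1) * b) (j : ℕ) :
    x ^ (j + k) = x ^ (j + (k+1)) * b := by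
  calc x ^ (j+k) = x ^ j * x ^ k := pow_add x j k
  _ = x ^ j * (x ^ (k+1) * b) := by rw [hk]
  _ = (x ^ j * x ^ (k+1)) * b := by rw [mul_assoc]
  _ = x ^ (j+(k+1)) * b := by rw [← pow_add]

lemma dz_shift' {x b : R} {k : ℕ} (hk : x ^ k = x ^ (k+1) * b) {m : ℕ} (hm : k ≤ m) :
    x ^ m = x ^ (m+1) * b := by
  obtain ⟨j, rfl⟩ := Nat.exists_eq_add_of_le hm
  have h := dz_shift hk j
  rw [show j + k = k + j from by omega, show j + (k+1) = k + j + 1 from by omega] at h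
  exact h

lemma dz_pow_aux {x z : R} (h : Commute x z) {k : ℕ} (hk : x ^ k = x ^ (k+1) * z) :
    ∀ j, x ^ k = x ^ (k + j) * z ^ j := by
  intro j
  induction j with
  | zero => simp
  | succ j ih =>
    have h2 : x ^ (k + j) = x ^ (k + j + 1) * z := dz_shift' hk (by omega)
    calc x ^ k = x ^ (k+j) * z ^ j := ih
    _ = (x ^ (k+j+1) * z) * z ^ j := by rw [← h2]
    _ = x ^ (k+j+1) * (z * z ^ j) := by rw [mul_assoc]
    _ = x ^ (k+(j+1)) * z ^ (j+1) := by
        rw [← pow_succ', Nat.add_assoc]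

lemma dz_of_pow {x z : R} (hcomm : x * z = z * x) {k : ℕ} (hk0 : 0 < k)
    (hk : x ^ k = x ^ (k+1) * z) : IsDrazinInvertible x := by
  have hc : Commute x z := hcomm
  have key : x ^ k = x ^ (k + (k+1)) * z ^ (k+1) := dz_pow_aux hc hk (k+1)
  have e1 : x ^ k * z ^ (k+1) * x = x ^ (k+1) * z ^ (k+1) := by
    rw [mul_assoc, ((hc.symm).pow_left (k+1)).eq, ← mul_assoc, ← pow_succ]
  refine ⟨x ^ k * z ^ (k+1), ?_, ?_, k, hk0, ?_⟩
  · rw [← mul_assoc, ← pow_succ', e1]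
  · rw [e1]
    have e2 : z ^ (k+1) * (x ^ k * z ^ (k+1)) = x ^ k * (z ^ (k+1) * z ^ (k+1)) := by
      rw [← mul_assoc, ((hc.symm).pow_pow (k+1) k).eq, mul_assoc]
    rw [mul_assoc, e2, ← mul_assoc, ← pow_add]
    conv_rhs => rw [key]
    rw [mul_assoc, show k+1+k = k+(k+1) from by omega]
  · rw [← mul_assoc, ← pow_add, show k+1+k = k+(k+1) from by omega]
    exact key


section
variable {x y z : R}

section
variable {x y z : R}

lemma dz_commutant (hxy : x * y = y * x) (hyxy : y * x * y = y)
    {k : ℕ} (hk0 : 0 < k) (hpow : x ^ k = x ^ (k+1) * y)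
    (hz : z * x = x * z) : z * y = y * z := by
  have hcxy : Commute x y := hxy
  have hczx : Commute z x := hz
  obtain ⟨e, he_def⟩ : ∃ e, e = x * y := ⟨_, rfl⟩
  have he : e * e = e := by
    rw [he_def]
    calc (x*y)*(x*y) = x * (y*x*y) := by noncomm_ring
    _ = x * y := by rw [hyxy]
  have hepow : ∀ n, e ^ (n+1) = e := by
    intro n
    induction n with
    | zero => simp
    | succ n ih => rw [pow_succ, ih, he]
  have hye : y * e = y := by
    rw [he_def, ← mul_assoc, hyxy]
  have hey : e * y = y := by
    rw [he_def, hxy]; exact hyxy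
  have hexk : x ^ k * e = x ^ k := by
    rw [he_def, ← mul_assoc, ← pow_succ, ← hpow]
  have hek : e ^ k = e := by
    obtain ⟨k', rfl⟩ : ∃ k', k = k' + 1 := ⟨k - 1, by omega⟩
    exact hepow k'
  -- y = y^{k+1} * x^k
  have hY : y = y ^ (k+1) * x ^ k := by
    have : y * e ^ k = y := by rw [hek, hye]
    calc y = y * (x*y) ^ k := by rw [← he_def, this]
    _ = y * (x ^ k * y ^ k) := by rw [hcxy.mul_pow]
    _ = y * (y ^ k * x ^ k) := by rw [(hcxy.pow_pow k k).eq]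
    _ = y ^ (k+1) * x ^ k := by rw [← mul_assoc, ← pow_succ']
  -- y = x^k * y^(k+1)
  have hY2 : y = x ^ k * y ^ (k+1) := by
    have : e ^ k * y = y := by rw [hek, hey]
    calc y = (x*y) ^ k * y := by rw [← he_def, this]
    _ = x ^ k * y ^ k * y := by rw [hcxy.mul_pow]
    _ = x ^ k * y ^ (k+1) := by rw [mul_assoc, ← pow_succ]
  -- (A) y*z = e*z*y
  have hA : y * z = e * z * y := by
    calc y * z = (y ^ (k+1) * x ^ k) * z := by rw [← hY]
    _ = y ^ (k+1) * (x ^ k * z) := by rw [mul_assoc]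
    _ = y ^ (k+1) * (z * x ^ k) := by rw [(hczx.pow_right k).eq]
    _ = y ^ (k+1) * (z * (x ^ (k+1) * y)) := by rw [← hpow]
    _ = y ^ (k+1) * ((x ^ (k+1) * z) * y) := by rw [← mul_assoc z, (hczx.pow_right (k+1)).eq]
    _ = (y ^ (k+1) * x ^ (k+1)) * z * y := by noncomm_ring
    _ = e ^ (k+1) * z * y := by rw [← (hcxy.symm.mul_pow (k+1)), he_def, hxy]
    _ = e * z * y := by rw [hepow]
  -- (B) z*y = z*(e*y) trivially, so z*y = z*e*y
  have hB : z * y = z * e * y := by rw [mul_assoc, hey]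
  -- (C) y^m * z = e*z*y^m
  have hC : ∀ m, y ^ (m+1) * z = e * z * y ^ (m+1) := by
    intro m
    induction m with
    | zero => simpa using hA
    | succ m ih =>
      calc y ^ (m+2) * z = y * (y ^ (m+1) * z) := by rw [← mul_assoc, ← pow_succ']
      _ = y * (e * z * y ^ (m+1)) := by rw [ih]
      _ = (y * e) * z * y ^ (m+1) := by noncomm_ring
      _ = (e * z * y) * y ^ (m+1) := by rw [hye, hA]
      _ = e * z * y ^ (m+2) := by rw [mul_assoc (e*z), ← pow_succ']
  -- (D) e*z = z*e
  have hD : e * z = z * e := by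
    obtain ⟨k', rfl⟩ : ∃ k', k = k' + 1 := ⟨k - 1, by omega⟩
    calc e * z = e ^ (k'+1) * z := by rw [hepow]
    _ = (x ^ (k'+1) * y ^ (k'+1)) * z := by rw [he_def, hcxy.mul_pow]
    _ = x ^ (k'+1) * (y ^ (k'+1) * z) := by rw [mul_assoc]
    _ = x ^ (k'+1) * (e * z * y ^ (k'+1)) := by rw [hC]
    _ = (x ^ (k'+1) * e) * z * y ^ (k'+1) := by noncomm_ring
    _ = x ^ (k'+1) * z * y ^ (k'+1) := by rw [hexk]
    _ = z * (x ^ (k'+1) * y ^ (k'+1)) := by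
        rw [← (hczx.pow_right (k'+1)).eq, mul_assoc]
    _ = z * e ^ (k'+1) := by rw [he_def, hcxy.mul_pow]
    _ = z * e := by rw [hepow]
  calc z * y = z * e * y := hB
  _ = e * z * y := by rw [← hD]
  _ = y * z := by rw [← hA]


lemma dz_commutant' {x y z : R} (h : IsDrazinInverse x y) (hz : z * x = x * z) :
    z * y = y * z := by
  obtain ⟨h1, h2, k, hk0, h3⟩ := h
  exact dz_commutant h1 h2 hk0 h3 hz

end

lemma dz_idem {f : R} (hf : f * f = f) : IsDrazinInvertible f :=
  ⟨f, rfl, by rw [hf, hf], 1, one_pos, by rw [pow_one, pow_two, hf, hf]⟩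

lemma dz_sq {x : R} (h : IsDrazinInvertible x) : IsDrazinInvertible (x * x) := by
  obtain ⟨b, h1, h2, k, hk0, h3⟩ := h
  have hc : Commute x b := h1
  apply dz_of_pow (z := b * b) (k := k) ?_ hk0 ?_
  · exact ((hc.mul_left hc).mul_right (hc.mul_left hc)).eq
  · have key : x ^ k = x ^ (k + 2) * b ^ 2 := dz_pow_aux hc h3 2
    have : (x*x) ^ k = x ^ k * x ^ k := by
      rw [← pow_two, ← pow_mul, two_mul, pow_add]
    rw [this]
    have e2 : (x*x) ^ (k+1) * (b*b) = (x ^ k * (x ^ (k+2) * b ^ 2)) := by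
      calc (x*x) ^ (k+1) * (b*b) = x ^ (2*(k+1)) * b ^ 2 := by
            rw [← pow_two x, ← pow_mul, ← pow_two b]
      _ = x ^ (k+(k+2)) * b ^ 2 := by rw [show 2*(k+1) = k+(k+2) from by omega]
      _ = x ^ k * (x ^ (k+2) * b ^ 2) := by rw [pow_add, mul_assoc]
    rw [e2, ← key]

lemma dz_unsq {x : R} (h : IsDrazinInvertible (x * x)) : IsDrazinInvertible x := by
  obtain ⟨c, hD⟩ := h
  have hxc : x * c = c * x :=
    dz_commutant' (z := x) hD (by rw [← mul_assoc])
  obtain ⟨h1, h2, k, hk0, h3⟩ := hD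
  apply dz_of_pow (z := x * c) (k := 2*k) ?_ (by omega) ?_
  · rw [mul_assoc, ← hxc]
  · have e1 : (x*x) ^ k = x ^ (2*k) := by rw [← pow_two, ← pow_mul, Nat.mul_comm]
    have e2 : (x*x) ^ (k+1) = x ^ (2*k+2) := by
      rw [← pow_two, ← pow_mul, show 2*(k+1) = 2*k+2 from by omega]
    rw [e1, e2] at h3
    rw [h3, ← mul_assoc, ← pow_succ]

lemma dz_pow_prod {x y : R} : ∀ m : ℕ, (y * x) ^ (m+1) = y * (x * y) ^ m * x := by
  intro m
  induction m with
  | zero => simp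
  | succ m ih =>
    calc (y*x) ^ (m+2) = (y*x) ^ (m+1) * (y*x) := by rw [pow_succ]
    _ = (y * (x*y) ^ m * x) * (y * x) := by rw [ih]
    _ = y * ((x*y) ^ m * (x*y)) * x := by noncomm_ring
    _ = y * (x*y) ^ (m+1) * x := by rw [← pow_succ]

lemma dz_cline {x y : R} (h : IsDrazinInvertible (x * y)) : IsDrazinInvertible (y * x) := by
  obtain ⟨b, h1, h2, k, hk0, h3⟩ := h
  have hc : Commute (x*y) b := h1
  have hb2 : (x * y) * (b * b) = b := by
    rw [← mul_assoc, h1, mul_assoc, ← mul_assoc, h2]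
  have hb2' : (b * b) * (x * y) = b := by
    rw [mul_assoc, ← h1, ← mul_assoc, h2]
  apply dz_of_pow (z := y * (b * b) * x) (k := k + 2) ?_ (by omega) ?_
  · -- (y*x) * (y*b²*x) = y*b*x = (y*b²*x)*(y*x)
    have l1 : (y * x) * (y * (b*b) * x) = y * b * x := by
      calc (y*x) * (y * (b*b) * x) = y * ((x*y) * (b*b)) * x := by noncomm_ring
      _ = y * b * x := by rw [hb2]
    have l2 : (y * (b*b) * x) * (y * x) = y * b * x := by
      calc (y * (b*b) * x) * (y*x) = y * ((b*b) * (x*y)) * x := by noncomm_ring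
      _ = y * b * x := by rw [hb2']
    rw [l1, l2]
  · have key : (x*y) ^ (k+1) = (x*y) ^ (k+3) * (b*b) := by
      have := dz_pow_aux hc h3 2
      calc (x*y) ^ (k+1) = (x*y) * (x*y) ^ k := by rw [← pow_succ']
      _ = (x*y) * ((x*y) ^ (k+2) * b ^ 2) := by rw [← this]
      _ = (x*y) ^ (k+3) * (b*b) := by
          rw [← mul_assoc, ← pow_succ', pow_two]
    calc (y*x) ^ (k+2) = y * (x*y) ^ (k+1) * x := dz_pow_prod (k+1)
    _ = y * ((x*y) ^ (k+3) * (b*b)) * x := by rw [key]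
    _ = (y * (x*y) ^ (k+2) * x) * (y * (b*b) * x) := by
        calc y * ((x*y) ^ (k+3) * (b*b)) * x
            = y * (((x*y) ^ (k+2) * (x*y)) * (b*b)) * x := by rw [← pow_succ]
          _ = (y * (x*y) ^ (k+2) * x) * (y * (b*b) * x) := by noncomm_ring
    _ = (y*x) ^ (k+3) * (y * (b*b) * x) := by rw [← dz_pow_prod (k+2)]

lemma dz_corner {f x : R} (hf : f * f = f) (hfx : f * x = x * f)
    (h : IsDrazinInvertible x) : IsDrazinInvertible (f * x) := by
  obtain ⟨c, hD⟩ := h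
  have hfc : f * c = c * f := dz_commutant' hD hfx
  obtain ⟨h1, h2, k, hk0, h3⟩ := hD
  have hcf : Commute f x := hfx
  apply dz_of_pow (z := f * c) (k := k) ?_ hk0 ?_
  · calc (f*x) * (f*c) = f * (x * f) * c := by noncomm_ring
    _ = f * (f * x) * c := by rw [hfx]
    _ = (f * f) * (x * c) := by noncomm_ring
    _ = (f * f) * (c * x) := by rw [h1]
    _ = f * (f * c) * x := by noncomm_ring
    _ = f * (c * f) * x := by rw [hfc]
    _ = (f * c) * (f * x) := by noncomm_ring
  · have hfk : ∀ n : ℕ, f ^ (n+1) = f := by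
      intro n; induction n with
      | zero => simp
      | succ n ih => rw [pow_succ, ih, hf]
    obtain ⟨k', rfl⟩ : ∃ k', k = k' + 1 := ⟨k - 1, by omega⟩
    calc (f*x) ^ (k'+1) = f ^ (k'+1) * x ^ (k'+1) := hcf.mul_pow _
    _ = f * x ^ (k'+1) := by rw [hfk]
    _ = f * (x ^ (k'+2) * c) := by rw [dz_shift' h3 (by omega)]
    _ = (f * f) * (x ^ (k'+2) * c) := by rw [hf]
    _ = f * (f * x ^ (k'+2)) * c := by noncomm_ring
    _ = f * (x ^ (k'+2) * f) * c := by rw [(hcf.pow_right (k'+2)).eq]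
    _ = (f * x ^ (k'+2)) * (f * c) := by noncomm_ring
    _ = (f ^ (k'+2) * x ^ (k'+2)) * (f * c) := by
        have hfk2 : f ^ (k'+2) = f := hfk (k'+1)
        rw [hfk2]
    _ = (f*x) ^ (k'+2) * (f * c) := by rw [← hcf.mul_pow]

lemma dz_orth_pow {x y : R} (hxy : x * y = 0) (hyx : y * x = 0) :
    ∀ m : ℕ, (x + y) ^ (m+1) = x ^ (m+1) + y ^ (m+1) := by
  intro m
  induction m with
  | zero => simp
  | succ m ih =>
    calc (x+y) ^ (m+2) = (x+y) ^ (m+1) * (x+y) := by rw [pow_succ]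
    _ = (x ^ (m+1) + y ^ (m+1)) * (x + y) := by rw [ih]
    _ = x ^ (m+2) + (x ^ m * (x*y) + (y ^ m * (y*x) + y ^ (m+2))) := by
        rw [pow_succ x (m+1), pow_succ x m, pow_succ y (m+1), pow_succ y m]; noncomm_ring
    _ = x ^ (m+2) + y ^ (m+2) := by rw [hxy, hyx]; noncomm_ring

lemma dz_orth {x y : R} (hxy : x * y = 0) (hyx : y * x = 0)
    (hx : IsDrazinInvertible x) (hy : IsDrazinInvertible y) :
    IsDrazinInvertible (x + y) := by
  obtain ⟨b, hDb⟩ := hx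
  obtain ⟨c, hDc⟩ := hy
  have hyb : y * b = b * y := dz_commutant' hDb (by rw [hxy, hyx])
  have hxc : x * c = c * x := dz_commutant' hDc (by rw [hxy, hyx])
  obtain ⟨hb1, hb2, k, hk0, hb3⟩ := hDb
  obtain ⟨hc1, hc2, l, hl0, hc3⟩ := hDc
  have hb' : b = x * (b * b) := by
    calc b = b * x * b := by rw [hb2]
    _ = x * b * b := by rw [← hb1]
    _ = x * (b * b) := by rw [mul_assoc]
  have hc' : c = y * (c * c) := by
    calc c = c * y * c := by rw [hc2]
    _ = y * c * c := by rw [← hc1]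
    _ = y * (c * c) := by rw [mul_assoc]
  have hxc0 : x * c = 0 := by
    rw [hc', ← mul_assoc, hxy, zero_mul]
  have hcx0 : c * x = 0 := by rw [← hxc, hxc0]
  have hyb0 : y * b = 0 := by
    rw [hb', ← mul_assoc, hyx, zero_mul]
  have hby0 : b * y = 0 := by rw [← hyb, hyb0]
  apply dz_of_pow (z := b + c) (k := k + l) ?_ (by omega) ?_
  · calc (x+y) * (b+c) = x*b + (x*c + (y*b + y*c)) := by noncomm_ring
    _ = x*b + y*c := by rw [hxc0, hyb0]; abel
    _ = b*x + c*y := by rw [hb1, hc1]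
    _ = b*x + (b*y + (c*x + c*y)) := by rw [hby0, hcx0]; abel
    _ = (b+c) * (x+y) := by noncomm_ring
  · obtain ⟨k', rfl⟩ : ∃ k', k = k' + 1 := ⟨k - 1, by omega⟩
    rw [show k'+1+l = k'+l+1 from by omega]
    rw [dz_orth_pow hxy hyx (k'+l), dz_orth_pow hxy hyx (k'+l+1)]
    have ex : x ^ (k'+l+1) = x ^ (k'+l+1+1) * b := dz_shift' hb3 (by omega)
    have ey : y ^ (k'+l+1) = y ^ (k'+l+1+1) * c := dz_shift' hc3 (by omega)
    have zx : x ^ (k'+l+1+1) * c = 0 := by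
      rw [pow_succ, mul_assoc, hxc0, mul_zero]
    have zy : y ^ (k'+l+1+1) * b = 0 := by
      rw [pow_succ, mul_assoc, hyb0, mul_zero]
    calc x ^ (k'+l+1) + y ^ (k'+l+1)
        = x ^ (k'+l+1+1) * b + y ^ (k'+l+1+1) * c := by rw [ex, ey]
    _ = (x ^ (k'+l+1+1) * b + x ^ (k'+l+1+1) * c) + (y ^ (k'+l+1+1) * b + y ^ (k'+l+1+1) * c) := by
        rw [zx, zy]; noncomm_ring
    _ = (x ^ (k'+l+1+1) + y ^ (k'+l+1+1)) * (b + c) := by noncomm_ring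

lemma dz_jacobson {u v : R} (h : IsDrazinInvertible (1 - u * v)) :
    IsDrazinInvertible (1 - v * u) := by
  obtain ⟨d, h1, h2, k, hk0, h3⟩ := h
  have huvd : (u*v) * d = d * (u*v) := by
    have e : d - (u*v)*d = d - d*(u*v) := by
      calc d - (u*v)*d = (1 - u*v)*d := by noncomm_ring
      _ = d*(1-u*v) := h1
      _ = d - d*(u*v) := by noncomm_ring
    exact sub_right_injective e
  have hbv : ∀ m : ℕ, (1 - v*u) ^ m * v = v * (1 - u*v) ^ m := by
    intro m
    induction m with
    | zero => simp
    | succ m ih =>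
      calc (1-v*u) ^ (m+1) * v
          = (1-v*u) ^ m * ((1-v*u) * v) := by rw [pow_succ, mul_assoc]
        _ = (1-v*u) ^ m * (v * (1-u*v)) := by congr 1; noncomm_ring
        _ = ((1-v*u) ^ m * v) * (1-u*v) := by rw [mul_assoc]
        _ = v * ((1-u*v) ^ m * (1-u*v)) := by rw [ih, mul_assoc]
        _ = v * (1-u*v) ^ (m+1) := by rw [← pow_succ]
  have hub : ∀ m : ℕ, u * (1 - v*u) ^ m = (1 - u*v) ^ m * u := by
    intro m
    induction m with
    | zero => simp
    | succ m ih =>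
      calc u * (1-v*u) ^ (m+1)
          = (u * (1-v*u) ^ m) * (1-v*u) := by rw [pow_succ, mul_assoc]
        _ = (1-u*v) ^ m * (u * (1-v*u)) := by rw [ih, mul_assoc]
        _ = (1-u*v) ^ m * ((1-u*v) * u) := by congr 1; noncomm_ring
        _ = (1-u*v) ^ (m+1) * u := by rw [pow_succ, mul_assoc]
  have hrec : ∀ m : ℕ, (1 - v*u) ^ m = (1 - v*u) ^ (m+1) + v * (1-u*v) ^ m * u := by
    intro m
    induction m with
    | zero => simp only [pow_zero, pow_one, mul_one, one_mul]; noncomm_ring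
    | succ m ih =>
      calc (1-v*u) ^ (m+1)
          = (1-v*u) ^ m * (1-v*u) := by rw [pow_succ]
        _ = ((1-v*u) ^ (m+1) + v * (1-u*v) ^ m * u) * (1-v*u) := by rw [← ih]
        _ = (1-v*u) ^ (m+2) + v * (1-u*v) ^ m * (u * (1-v*u)) := by
            rw [pow_succ ((1:R)-v*u) (m+1)]; noncomm_ring
        _ = (1-v*u) ^ (m+2) + v * (1-u*v) ^ m * ((1-u*v) * u) := by congr 2; noncomm_ring
        _ = (1-v*u) ^ (m+2) + v * (1-u*v) ^ (m+1) * u := by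
            rw [pow_succ ((1:R)-u*v) m]; noncomm_ring
  apply dz_of_pow (z := 1 + v * d * u) (k := k) ?_ hk0 ?_
  · have e : (1 - v*u) * (1 + v*d*u) - (1 + v*d*u) * (1 - v*u)
        = v * (d * (u*v) - (u*v) * d) * u := by noncomm_ring
    rw [← huvd, sub_self, mul_zero, zero_mul] at e
    exact sub_eq_zero.mp e
  · calc (1-v*u) ^ k = (1-v*u) ^ (k+1) + v * (1-u*v) ^ k * u := hrec k
    _ = (1-v*u) ^ (k+1) + v * ((1-u*v) ^ (k+1) * d) * u := by rw [← h3]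
    _ = (1-v*u) ^ (k+1) + ((1-v*u) ^ (k+1) * v) * (d * u) := by
        rw [hbv (k+1)]
        noncomm_ring
    _ = (1-v*u) ^ (k+1) * (1 + v * d * u) := by noncomm_ring

section MatrixPart

lemma dz_fin2_pow (z w : R) : ∀ n : ℕ,
    (!![z,0;0,w] : Matrix (Fin 2) (Fin 2) R) ^ (n+1) = !![z^(n+1), 0; 0, w^(n+1)] := by
  intro n
  induction n with
  | zero => simp
  | succ n ih =>
    calc (!![z,0;0,w] : Matrix (Fin 2) (Fin 2) R) ^ (n+2)
        = !![z,0;0,w] ^ (n+1) * !![z,0;0,w] := by rw [pow_succ]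
      _ = !![z^(n+1), 0; 0, w^(n+1)] * !![z,0;0,w] := by rw [ih]
      _ = !![z^(n+2), 0; 0, w^(n+2)] := by
          rw [Matrix.mul_fin_two, pow_succ z (n+1), pow_succ w (n+1)]; simp

lemma dz_diag2 {z w : R} (hz : IsDrazinInvertible z) (hw : IsDrazinInvertible w) :
    IsDrazinInvertible (!![z,0;0,w] : Matrix (Fin 2) (Fin 2) R) := by
  obtain ⟨b, hb1, hb2, k, hk0, hb3⟩ := hz
  obtain ⟨c, hc1, hc2, l, hl0, hc3⟩ := hw
  refine ⟨!![b,0;0,c], ?_, ?_, k+l, by omega, ?_⟩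
  · rw [Matrix.mul_fin_two, Matrix.mul_fin_two, hb1, hc1]; simp
  · rw [Matrix.mul_fin_two, Matrix.mul_fin_two]
    simp only [mul_zero, zero_mul, add_zero, zero_add]
    rw [hb2, hc2]
  · obtain ⟨k', rfl⟩ : ∃ k', k = k' + 1 := ⟨k - 1, by omega⟩
    rw [show k'+1+l = k'+l+1 from by omega]
    rw [dz_fin2_pow z w (k'+l), dz_fin2_pow z w (k'+l+1), Matrix.mul_fin_two]
    simp only [mul_zero, zero_mul, add_zero, zero_add]
    rw [← dz_shift' hb3 (show k'+1 ≤ k'+l+1 from by omega),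
        ← dz_shift' hc3 (show l ≤ k'+l+1 from by omega)]

lemma dz_extract {z : R}
    (h : IsDrazinInvertible (!![z,0;0,(1:R)] : Matrix (Fin 2) (Fin 2) R)) :
    IsDrazinInvertible z := by
  have hf : (!![1,0;0,(0:R)] : Matrix (Fin 2) (Fin 2) R) * !![1,0;0,(0:R)] = !![1,0;0,(0:R)] := by
    rw [Matrix.mul_fin_two]; simp
  have hfx : (!![1,0;0,(0:R)] : Matrix (Fin 2) (Fin 2) R) * !![z,0;0,(1:R)]
      = !![z,0;0,(1:R)] * !![1,0;0,(0:R)] := by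
    rw [Matrix.mul_fin_two, Matrix.mul_fin_two]; simp
  have h0 : IsDrazinInvertible (!![z,0;0,(0:R)] : Matrix (Fin 2) (Fin 2) R) := by
    have := dz_corner hf hfx h
    rw [Matrix.mul_fin_two] at this
    simpa using this
  obtain ⟨M, h1, h2, k, hk0, h3⟩ := h0
  refine ⟨M 0 0, ?_, ?_, k, hk0, ?_⟩
  · have e := congrFun (congrFun h1 0) 0
    simp [Matrix.mul_apply, Fin.sum_univ_two] at e
    exact e
  · have e := congrFun (congrFun h2 0) 0
    simp [Matrix.mul_apply, Fin.sum_univ_two] at e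
    exact e
  · obtain ⟨k', rfl⟩ : ∃ k', k = k' + 1 := ⟨k - 1, by omega⟩
    rw [dz_fin2_pow z 0 k', dz_fin2_pow z 0 (k'+1)] at h3
    have e := congrFun (congrFun h3 0) 0
    simp [Matrix.mul_apply, Fin.sum_univ_two] at e
    exact e

end MatrixPart

theorem stmt16 (p q : R) (hp : p ^ 2 = p) (hq : q ^ 2 = q) :
    IsDrazinInvertible (p * q) ↔ IsDrazinInvertible (1 - p - q) := by
  have hp' : p * p = p := by rw [← pow_two, hp]
  have hq' : q * q = q := by rw [← pow_two, hq]
  have hpp : ∀ x : R, p * (p * x) = p * x := fun x => by rw [← mul_assoc, hp']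
  have hqq : ∀ x : R, q * (q * x) = q * x := fun x => by rw [← mul_assoc, hq']
  have I1 : p * ((1-p-q) * (1-p-q)) = p*q*p := by
    simp only [mul_sub, sub_mul, mul_add, add_mul, mul_one, one_mul, mul_assoc, hp', hq', hpp, hqq]
    abel
  have I2 : ((1-p-q) * (1-p-q)) * p = p*q*p := by
    simp only [mul_sub, sub_mul, mul_add, add_mul, mul_one, one_mul, mul_assoc, hp', hq', hpp, hqq]
    abel
  constructor
  · -- pq Drazin invertible → 1 - p - q Drazin invertible
    intro h
    have h1 : IsDrazinInvertible (q*p) := dz_cline h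
    have h1' : IsDrazinInvertible (q*(q*p)) := by rw [← mul_assoc, hq']; exact h1
    have hqpq : IsDrazinInvertible (q*p*q) := dz_cline h1'
    have h2' : IsDrazinInvertible (p*(p*q)) := by rw [← mul_assoc, hp']; exact h
    have hpqp : IsDrazinInvertible (p*q*p) := dz_cline h2'
    have idem1q : (1-q) * (1-q) = 1-q := by
      simp only [mul_sub, sub_mul, mul_one, one_mul, hq']; abel
    have idem1p : (1-p) * (1-p) = 1-p := by
      simp only [mul_sub, sub_mul, mul_one, one_mul, hp']; abel
    have I7a : (q*p*q) * (1-q) = 0 := by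
      simp only [mul_sub, mul_one, mul_assoc, hq', hqq]; abel
    have I7b : (1-q) * (q*p*q) = 0 := by
      simp only [sub_mul, one_mul, mul_assoc, hq', hqq]; abel
    have hG : IsDrazinInvertible (q*p*q + (1-q)) := dz_orth I7a I7b hqpq (dz_idem idem1q)
    have hD1 : IsDrazinInvertible (!![1-p, 0; 0, q*p*q + (1-q)] : Matrix (Fin 2) (Fin 2) R) :=
      dz_diag2 (dz_idem idem1p) hG
    -- Jacobson in M₂
    have hVU : (1 : Matrix (Fin 2) (Fin 2) R) - !![p, 0; q*(1-p), 0] * !![p, (1-p)*q; 0, 0]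
        = !![1-p, 0; 0, q*p*q + (1-q)] := by
      rw [Matrix.mul_fin_two, Matrix.one_fin_two]
      ext i j
      fin_cases i <;> fin_cases j <;>
        simp [mul_sub, sub_mul, mul_add, add_mul, mul_assoc, hp', hq', hpp, hqq] <;>
        abel
    have hJ : IsDrazinInvertible ((1 : Matrix (Fin 2) (Fin 2) R)
        - !![p, (1-p)*q; 0, 0] * !![p, 0; q*(1-p), 0]) := by
      apply dz_jacobson
      rw [hVU]
      exact hD1
    have hUV : (1 : Matrix (Fin 2) (Fin 2) R) - !![p, (1-p)*q; 0, 0] * !![p, 0; q*(1-p), 0]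
        = !![1 - p - (1-p)*q*(1-p), 0; 0, 1] := by
      rw [Matrix.mul_fin_two, Matrix.one_fin_two]
      ext i j
      fin_cases i <;> fin_cases j <;>
        simp [mul_sub, sub_mul, mul_add, add_mul, mul_assoc, hp', hq', hpp, hqq] <;>
        abel
    rw [hUV] at hJ
    have hY : IsDrazinInvertible (1 - p - (1-p)*q*(1-p)) := dz_extract hJ
    have I9a : (p*q*p) * (1 - p - (1-p)*q*(1-p)) = 0 := by
      simp only [mul_sub, sub_mul, mul_add, add_mul, mul_one, one_mul, mul_assoc, hp', hq', hpp, hqq]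
      abel
    have I9b : (1 - p - (1-p)*q*(1-p)) * (p*q*p) = 0 := by
      simp only [mul_sub, sub_mul, mul_add, add_mul, mul_one, one_mul, mul_assoc, hp', hq', hpp, hqq]
      abel
    have horth : IsDrazinInvertible (p*q*p + (1 - p - (1-p)*q*(1-p))) :=
      dz_orth I9a I9b hpqp hY
    have I9c : p*q*p + (1 - p - (1-p)*q*(1-p)) = (1-p-q) * (1-p-q) := by
      simp only [mul_sub, sub_mul, mul_add, add_mul, mul_one, one_mul, mul_assoc, hp', hq', hpp, hqq]
      abel
    rw [I9c] at horth
    exact dz_unsq horth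
  · -- 1 - p - q Drazin invertible → pq Drazin invertible
    intro h
    have hsq : IsDrazinInvertible ((1-p-q) * (1-p-q)) := dz_sq h
    have hcomm : p * ((1-p-q) * (1-p-q)) = ((1-p-q) * (1-p-q)) * p := by rw [I1, I2]
    have hc := dz_corner hp' hcomm hsq
    rw [I1] at hc
    have hc' : IsDrazinInvertible ((p*q)*p) := hc
    have := dz_cline hc'
    rw [← mul_assoc, hp'] at this
    exact this
end
end

section
/- Let p, q be idempotents in a ring R. Then pq is Drazin invertible if and only if (1-p)(1-q) is Drazin invertible. -/
variable {R : Type*} [Ring R]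

lemma pow_right_chain (a x : R) (m : ℕ) (hx : a ^ m = a ^ (m + 1) * x) :
    ∀ j, a ^ m = a ^ (m + j) * x ^ j := by
  intro j
  induction j with
  | zero => simp
  | succ j ih =>
    have e1 : a ^ (m + (j + 1)) = a ^ j * a ^ (m + 1) := by
      rw [← pow_add]; congr 1; omega
    have e2 : x ^ (j + 1) = x * x ^ j := by
      rw [pow_succ']
    rw [e1, e2]
    symm
    calc a ^ j * a ^ (m + 1) * (x * x ^ j)
        = a ^ j * (a ^ (m + 1) * x) * x ^ j := by noncomm_ring
      _ = a ^ j * a ^ m * x ^ j := by rw [← hx]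
      _ = a ^ (m + j) * x ^ j := by rw [← pow_add, Nat.add_comm j m]
      _ = a ^ m := ih.symm

lemma pow_left_chain (a y : R) (m : ℕ) (hy : a ^ m = y * a ^ (m + 1)) :
    ∀ j, a ^ m = y ^ j * a ^ (m + j) := by
  intro j
  induction j with
  | zero => simp
  | succ j ih =>
    have e1 : a ^ (m + (j + 1)) = a ^ (m + 1) * a ^ j := by
      rw [← pow_add]; congr 1; omega
    have e2 : y ^ (j + 1) = y ^ j * y := by rw [pow_succ]
    rw [e1, e2]
    symm
    calc y ^ j * y * (a ^ (m + 1) * a ^ j)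
        = y ^ j * (y * a ^ (m + 1)) * a ^ j := by noncomm_ring
      _ = y ^ j * a ^ m * a ^ j := by rw [← hy]
      _ = y ^ j * a ^ (m + j) := by rw [mul_assoc, ← pow_add]
      _ = a ^ m := ih.symm

/-- Drazin's theorem: two one-sided (non-commuting) conditions give Drazin invertibility. -/
lemma drazin_of_two_sided (a x y : R) (m : ℕ) (hm : 0 < m)
    (hx : a ^ m = a ^ (m + 1) * x) (hy : a ^ m = y * a ^ (m + 1)) :
    IsDrazinInvertible a := by
  have hR := pow_right_chain a x m hx
  have hL := pow_left_chain a y m hy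
  have key1 : a ^ (m + m) * x ^ m = a ^ m := (hR m).symm
  have key2 : y ^ m * a ^ (m + m) = a ^ m := (hL m).symm
  obtain ⟨e, he⟩ : ∃ e : R, e = a ^ m * x ^ m := ⟨_, rfl⟩
  have hE1 : e = y ^ m * a ^ m := by
    calc e = (y ^ m * a ^ (m + m)) * x ^ m := by rw [he, key2]
      _ = y ^ m * (a ^ (m + m) * x ^ m) := by rw [mul_assoc]
      _ = y ^ m * a ^ m := by rw [key1]
  have hEA : a ^ m * e = a ^ m := by
    calc a ^ m * e = a ^ m * a ^ m * x ^ m := by rw [he, mul_assoc]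
      _ = a ^ (m + m) * x ^ m := by rw [← pow_add]
      _ = a ^ m := key1
  have hAE : e * a ^ m = a ^ m := by
    calc e * a ^ m = y ^ m * (a ^ m * a ^ m) := by rw [hE1, mul_assoc]
      _ = y ^ m * a ^ (m + m) := by rw [← pow_add]
      _ = a ^ m := key2
  have hEE : e * e = e := by
    calc e * e = y ^ m * a ^ m * e := by rw [← hE1]
      _ = y ^ m * (a ^ m * e) := by rw [mul_assoc]
      _ = y ^ m * a ^ m := by rw [hEA]
      _ = e := hE1.symm
  have hae : a * e = a ^ (m + 1) * x ^ m := by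
    rw [he, ← mul_assoc, ← pow_succ']
  have hea : e * a = y ^ m * a ^ (m + 1) := by
    rw [hE1, mul_assoc, ← pow_succ]
  -- e commutes with a
  have hcomm : a * e = e * a := by
    have s1 : e * (a * e) = a * e := by
      calc e * (a * e) = e * a ^ m * (a * x ^ m) := by
            rw [hae, pow_succ, mul_assoc, mul_assoc]
        _ = a ^ m * (a * x ^ m) := by rw [hAE]
        _ = a ^ (m + 1) * x ^ m := by rw [← mul_assoc, ← pow_succ]
        _ = a * e := hae.symm
    have s2 : (e * a) * e = e * a := by
      calc (e * a) * e = y ^ m * a * (a ^ m * e) := by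
            rw [hea, pow_succ', ← mul_assoc, mul_assoc (y ^ m * a)]
        _ = y ^ m * a * a ^ m := by rw [hEA]
        _ = y ^ m * a ^ (m + 1) := by rw [mul_assoc, ← pow_succ']
        _ = e * a := hea.symm
    calc a * e = e * (a * e) := s1.symm
      _ = (e * a) * e := by rw [mul_assoc]
      _ = e * a := s2
  obtain ⟨d, hd⟩ : ∃ d : R, d = e * x * e := ⟨_, rfl⟩
  obtain ⟨d', hd'⟩ : ∃ d' : R, d' = e * y * e := ⟨_, rfl⟩
  have hxx : a ^ (m + 1) * x ^ (m + 1) = e := by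
    calc a ^ (m + 1) * x ^ (m + 1) = a ^ (m + 1) * (x * x ^ m) := by rw [pow_succ' x m]
      _ = (a ^ (m + 1) * x) * x ^ m := by rw [mul_assoc]
      _ = a ^ m * x ^ m := by rw [← hx]
      _ = e := he.symm
  have had : a * d = e := by
    calc a * d = (a * e) * x * e := by rw [hd, ← mul_assoc, ← mul_assoc]
      _ = a ^ (m + 1) * x ^ m * x * e := by rw [hae]
      _ = a ^ (m + 1) * x ^ (m + 1) * e := by rw [mul_assoc (a ^ (m + 1)), ← pow_succ]
      _ = e * e := by rw [hxx]
      _ = e := hEE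
  have hyy : y ^ (m + 1) * a ^ (m + 1) = e := by
    calc y ^ (m + 1) * a ^ (m + 1) = y ^ m * (y * a ^ (m + 1)) := by
          rw [pow_succ, mul_assoc]
      _ = y ^ m * a ^ m := by rw [← hy]
      _ = e := hE1.symm
  have hd'a : d' * a = e := by
    calc d' * a = e * (y * (e * a)) := by rw [hd', mul_assoc, mul_assoc]
      _ = e * (y * (y ^ m * a ^ (m + 1))) := by rw [hea]
      _ = e * (y ^ (m + 1) * a ^ (m + 1)) := by rw [← mul_assoc y, ← pow_succ']
      _ = e * e := by rw [hyy]
      _ = e := hEE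
  have hed : e * d = d := by
    calc e * d = (e * e) * x * e := by rw [hd, ← mul_assoc, ← mul_assoc]
      _ = e * x * e := by rw [hEE]
      _ = d := hd.symm
  have hdd : d' = d := by
    calc d' = d' * e := by
          rw [hd']
          calc e * y * e = e * y * (e * e) := by rw [hEE]
            _ = e * y * e * e := by rw [← mul_assoc]
      _ = d' * (a * d) := by rw [had]
      _ = (d' * a) * d := by rw [mul_assoc]
      _ = e * d := by rw [hd'a]
      _ = d := hed
  have hda : d * a = e := by rw [← hdd, hd'a]
  have hcm : a * d = d * a := by rw [had, hda]
  have hdad : d * a * d = d := by rw [hda, hed]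
  have hfin : a ^ m = a ^ (m + 1) * d := by
    calc a ^ m = a ^ m * e := hEA.symm
      _ = a ^ m * (a * d) := by rw [had]
      _ = a ^ (m + 1) * d := by rw [← mul_assoc, ← pow_succ]
  exact ⟨d, hcm, hdad, m, hm, hfin⟩

lemma main_dir (p q : R) (hp : p ^ 2 = p) (hq : q ^ 2 = q)
    (h : IsDrazinInvertible (p * q)) : IsDrazinInvertible ((1 - p) * (1 - q)) := by
  obtain ⟨d, hcm, hdad, k, hk, hkk⟩ := h
  have hp' : p * p = p := by rw [← pow_two]; exact hp
  have hq' : q * q = q := by rw [← pow_two]; exact hq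
  have hp2 : ∀ r : R, p * (p * r) = p * r := fun r => by rw [← mul_assoc, hp']
  have hq2 : ∀ r : R, q * (q * r) = q * r := fun r => by rw [← mul_assoc, hq']
  obtain ⟨a, ha⟩ : ∃ a : R, a = p * q := ⟨_, rfl⟩
  obtain ⟨b, hb⟩ : ∃ b : R, b = (1 - p) * (1 - q) := ⟨_, rfl⟩
  obtain ⟨m0, hm0⟩ : ∃ m0 : R, m0 = p * (1 - q) := ⟨_, rfl⟩
  obtain ⟨n0, hn0⟩ : ∃ n0 : R, n0 = (1 - p) * q := ⟨_, rfl⟩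
  rw [← ha] at hkk hcm hdad
  rw [← hb]
  have I1 : a * m0 = m0 * b := by
    rw [ha, hb, hm0]
    simp only [mul_sub, sub_mul, mul_one, one_mul, mul_assoc, hp2, hq2, hp', hq']
    abel
  have I2 : b * n0 = n0 * a := by
    rw [ha, hb, hn0]
    simp only [mul_sub, sub_mul, mul_one, one_mul, mul_assoc, hp2, hq2, hp', hq']
    abel
  have I3 : b * b = b + n0 * m0 := by
    rw [hb, hm0, hn0]
    simp only [mul_sub, sub_mul, mul_one, one_mul, mul_assoc, hp2, hq2, hp', hq']
    abel
  have P1 : ∀ j, a ^ j * m0 = m0 * b ^ j := by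
    intro j
    induction j with
    | zero => simp
    | succ j ih =>
      calc a ^ (j + 1) * m0 = a ^ j * (a * m0) := by rw [pow_succ, mul_assoc]
        _ = a ^ j * (m0 * b) := by rw [I1]
        _ = (a ^ j * m0) * b := by rw [mul_assoc]
        _ = m0 * b ^ j * b := by rw [ih]
        _ = m0 * b ^ (j + 1) := by rw [mul_assoc, ← pow_succ]
  have P2 : ∀ j, b ^ j * n0 = n0 * a ^ j := by
    intro j
    induction j with
    | zero => simp
    | succ j ih =>
      calc b ^ (j + 1) * n0 = b ^ j * (b * n0) := by rw [pow_succ, mul_assoc]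
        _ = b ^ j * (n0 * a) := by rw [I2]
        _ = (b ^ j * n0) * a := by rw [mul_assoc]
        _ = n0 * a ^ j * a := by rw [ih]
        _ = n0 * a ^ (j + 1) := by rw [mul_assoc, ← pow_succ]
  have hC : Commute a d := hcm
  have h1 : a ^ k = a ^ (k + (k + 2)) * d ^ (k + 2) := pow_right_chain a d k hkk (k + 2)
  have h2 : a ^ (k + (k + 2)) = a ^ (k + 2) * a ^ k := by rw [← pow_add]; congr 1; omega
  have h3 : a ^ (k + (k + 2)) = a ^ k * a ^ (k + 2) := by rw [← pow_add]
  have hcpow : a ^ (k + (k + 2)) * d ^ (k + 2) = d ^ (k + 2) * a ^ (k + (k + 2)) :=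
    (hC.pow_pow (k + (k + 2)) (k + 2)).eq
  have E : b ^ (k + 1) = b ^ (k + 2) - n0 * (a ^ k * m0) := by
    have hchain : b ^ (k + 2) = b ^ (k + 1) + n0 * (a ^ k * m0) := by
      calc b ^ (k + 2) = b ^ k * (b * b) := by
            rw [pow_add, pow_two]
        _ = b ^ k * (b + n0 * m0) := by rw [I3]
        _ = b ^ k * b + b ^ k * (n0 * m0) := by rw [mul_add]
        _ = b ^ (k + 1) + (b ^ k * n0) * m0 := by rw [← pow_succ, ← mul_assoc]
        _ = b ^ (k + 1) + n0 * a ^ k * m0 := by rw [P2]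
        _ = b ^ (k + 1) + n0 * (a ^ k * m0) := by rw [mul_assoc]
    rw [hchain]; abel
  have hr : n0 * (a ^ k * m0) = b ^ (k + 2) * (n0 * (a ^ k * (d ^ (k + 2) * m0))) := by
    calc n0 * (a ^ k * m0) = n0 * (a ^ (k + (k + 2)) * d ^ (k + 2) * m0) := by rw [← h1]
      _ = n0 * (a ^ (k + 2) * a ^ k * d ^ (k + 2) * m0) := by rw [h2]
      _ = (n0 * a ^ (k + 2)) * (a ^ k * (d ^ (k + 2) * m0)) := by
          rw [mul_assoc, mul_assoc, mul_assoc, ← mul_assoc n0]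
      _ = (b ^ (k + 2) * n0) * (a ^ k * (d ^ (k + 2) * m0)) := by rw [P2]
      _ = b ^ (k + 2) * (n0 * (a ^ k * (d ^ (k + 2) * m0))) := by rw [mul_assoc]
  have hl : n0 * (a ^ k * m0) = (n0 * (d ^ (k + 2) * (a ^ k * m0))) * b ^ (k + 2) := by
    calc n0 * (a ^ k * m0) = n0 * (a ^ (k + (k + 2)) * d ^ (k + 2) * m0) := by rw [← h1]
      _ = n0 * (d ^ (k + 2) * a ^ (k + (k + 2)) * m0) := by rw [hcpow]
      _ = n0 * (d ^ (k + 2) * (a ^ k * (a ^ (k + 2) * m0))) := by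
          rw [h3, mul_assoc (d ^ (k + 2)), mul_assoc (a ^ k)]
      _ = n0 * (d ^ (k + 2) * (a ^ k * (m0 * b ^ (k + 2)))) := by rw [P1]
      _ = (n0 * (d ^ (k + 2) * (a ^ k * m0))) * b ^ (k + 2) := by
          rw [← mul_assoc (a ^ k), ← mul_assoc (d ^ (k + 2)), ← mul_assoc n0]
  have hx' : b ^ (k + 1) = b ^ (k + 1 + 1) * (1 - n0 * (a ^ k * (d ^ (k + 2) * m0))) := by
    have : b ^ (k + 1 + 1) = b ^ (k + 2) := by norm_num
    rw [this, mul_sub, mul_one, ← hr]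
    exact E
  have hy' : b ^ (k + 1) = (1 - n0 * (d ^ (k + 2) * (a ^ k * m0))) * b ^ (k + 1 + 1) := by
    have : b ^ (k + 1 + 1) = b ^ (k + 2) := by norm_num
    rw [this, sub_mul, one_mul, ← hl]
    exact E
  exact drazin_of_two_sided b _ _ (k + 1) (Nat.succ_pos k) hx' hy'

theorem stmt17 (p q : R) (hp : p ^ 2 = p) (hq : q ^ 2 = q) :
    IsDrazinInvertible (p * q) ↔ IsDrazinInvertible ((1 - p) * (1 - q)) := by
  have hp' : p * p = p := by rw [← pow_two]; exact hp
  have hq' : q * q = q := by rw [← pow_two]; exact hq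
  have hp1 : (1 - p) ^ 2 = 1 - p := by
    have h0 : (1 - p) * (1 - p) = 1 - p - p + p * p := by noncomm_ring
    rw [pow_two, h0, hp']; abel
  have hq1 : (1 - q) ^ 2 = 1 - q := by
    have h0 : (1 - q) * (1 - q) = 1 - q - q + q * q := by noncomm_ring
    rw [pow_two, h0, hq']; abel
  constructor
  · exact main_dir p q hp hq
  · intro h
    have h2 := main_dir (1 - p) (1 - q) hp1 hq1 h
    simpa [sub_sub_cancel] using h2
end
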